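/- arXiv:2210.04712 — 6 statements merged into one kernel-verified Lean document; each statement's English description precedes it below -/
import Mathlib

section
/- Let F be a finite nonempty family of connected graphs, each having at least two edges, and let k be a fixed non-negative integer. Then exa_k(n,F) = (1+o(1))·ex(n,F) as n → ∞; that is, for every ε > 0 there exists N such that for all n ≥ N, exa_k(n,F) exists and (1−ε)·ex(n,F) ≤ exa_k(n,F) ≤ (1+ε)·ex(n,F). -/
open SimpleGraph

/-- The number of copies of `F` in `G`, i.e. the number of subgraphs of `G`
isomorphic to `F`. -/
noncomputable def copyCount {V W : Type*} (G : SimpleGraph V) (F : SimpleGraph W) : ℕ :=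
  Set.ncard {H : G.Subgraph | Nonempty (H.coe ≃g F)}

/-- The number of edges of a graph. -/
noncomputable def edgeCount {V : Type*} (G : SimpleGraph V) : ℕ := G.edgeSet.ncard

/-- The Turán number of a family of graphs: the maximum number of edges of a graph
on `n` vertices containing no copy of any member of the family. -/
noncomputable def exFam (n : ℕ) {ι : Type*} {W : ι → Type*} (F : ∀ i, SimpleGraph (W i)) : ℕ :=
  sSup {m | ∃ G : SimpleGraph (Fin n), (∀ i, _root_.copyCount G (F i) = 0) ∧ edgeCount G = m}

/-- `exa_k(n, F)`: the maximum number of edges of a graph on `n` vertices containing in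
total exactly `k` copies of members of the family `F`. -/
noncomputable def exaFam (k n : ℕ) {ι : Type*} [Fintype ι] {W : ι → Type*}
    (F : ∀ i, SimpleGraph (W i)) : ℕ :=
  sSup {m | ∃ G : SimpleGraph (Fin n), (∑ i, _root_.copyCount G (F i)) = k ∧ edgeCount G = m}

section basic
variable {V V' W W' : Type*} {G : SimpleGraph V} {G' : SimpleGraph V'} {F : SimpleGraph W}

instance finSubgraph [Finite V] : Finite G.Subgraph := by
  have : Function.Injective (fun H : G.Subgraph => (H.verts, H.Adj)) := by
    intro H₁ H₂ h
    simp only [Prod.mk.injEq] at h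
    exact SimpleGraph.Subgraph.ext h.1 h.2
  exact Finite.of_injective _ this

/-- iso between coe of a subgraph and coe of its image under a graph embedding. -/
noncomputable def mapCoeIso (f : G ↪g G') (H : G.Subgraph) :
    H.coe ≃g (H.map f.toHom).coe := by
  refine ⟨Equiv.Set.image f H.verts f.injective, ?_⟩
  rintro ⟨a, ha⟩ ⟨b, hb⟩
  simp only [Equiv.Set.image, Equiv.Set.imageOfInjOn, Equiv.coe_fn_mk,
    Subgraph.coe_adj, Subgraph.map_adj, Relation.Map]
  constructor
  · rintro ⟨u, v, huv, hu, hv⟩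
    obtain rfl : u = a := f.injective hu
    obtain rfl : v = b := f.injective hv
    exact huv
  · intro h
    exact ⟨a, b, h, rfl, rfl⟩

lemma copy_mem_map (f : G ↪g G') (H : G.Subgraph) (h : Nonempty (H.coe ≃g F)) :
    Nonempty ((H.map f.toHom).coe ≃g F) :=
  h.elim fun e => ⟨(mapCoeIso f H).symm.trans e⟩

lemma copyCount_eq_zero_of_embedding [Finite V'] (f : G ↪g G')
    (h : _root_.copyCount G' F = 0) : _root_.copyCount G F = 0 := by
  rw [_root_.copyCount, Set.ncard_eq_zero (Set.toFinite _),
    Set.eq_empty_iff_forall_notMem] at h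
  have he : {H : G.Subgraph | Nonempty (H.coe ≃g F)} = ∅ := by
    rw [Set.eq_empty_iff_forall_notMem]
    intro H hH
    exact h (H.map f.toHom) (copy_mem_map f H hH)
  rw [_root_.copyCount, he, Set.ncard_empty]

lemma comp_symm_hom (φ : G ≃g G') : φ.symm.toHom.comp φ.toHom = Hom.id := by
  ext v; simp

lemma map_map_symm (φ : G ≃g G') (H : G.Subgraph) :
    (H.map φ.toHom).map φ.symm.toHom = H := by
  rw [← Subgraph.map_comp, comp_symm_hom, Subgraph.map_id]

lemma copyCount_iso (φ : G ≃g G') (F : SimpleGraph W) :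
    _root_.copyCount G F = _root_.copyCount G' F := by
  rw [_root_.copyCount, _root_.copyCount, ← Nat.card_coe_set_eq, ← Nat.card_coe_set_eq]
  refine Nat.card_congr ⟨fun H => ⟨H.1.map φ.toHom, copy_mem_map φ.toEmbedding H.1 H.2⟩,
    fun H => ⟨H.1.map φ.symm.toHom, copy_mem_map φ.symm.toEmbedding H.1 H.2⟩, ?_, ?_⟩
  · rintro ⟨H, hH⟩; simp only [Subtype.mk.injEq]; exact map_map_symm φ H
  · rintro ⟨H, hH⟩; simp only [Subtype.mk.injEq]; exact map_map_symm φ.symm H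

lemma edgeCount_iso (φ : G ≃g G') : edgeCount G = edgeCount G' := by
  rw [edgeCount, edgeCount, ← Nat.card_coe_set_eq, ← Nat.card_coe_set_eq]
  exact Nat.card_congr φ.mapEdgeSet

lemma edgeCount_coe (H : G.Subgraph) : edgeCount H.coe = H.edgeSet.ncard := by
  rw [edgeCount, ← Subgraph.image_coe_edgeSet_coe,
    Set.ncard_image_of_injective _ (Sym2.map.injective Subtype.val_injective)]

lemma copy_edgeCount (H : G.Subgraph) (e : H.coe ≃g F) : H.edgeSet.ncard = edgeCount F := by
  rw [← edgeCount_coe, edgeCount_iso e]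

lemma copyCount_eq_zero_of_lt [Finite V] (h : edgeCount G < edgeCount F) :
    _root_.copyCount G F = 0 := by
  rw [_root_.copyCount, Set.ncard_eq_zero (Set.toFinite _), Set.eq_empty_iff_forall_notMem]
  rintro H ⟨e⟩
  have h1 : H.edgeSet.ncard = edgeCount F := copy_edgeCount H e
  have h2 : H.edgeSet.ncard ≤ edgeCount G :=
    Set.ncard_le_ncard H.edgeSet_subset (Set.toFinite _)
  omega

end basic

section sum
open SimpleGraph
variable {α β : Type*} {G : SimpleGraph α} {G' : SimpleGraph β} {W : Type*} {F : SimpleGraph W}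

lemma sum_adj_isLeft {u v : α ⊕ β} (h : (G ⊕g G').Adj u v) : u.isLeft = v.isLeft := by
  cases u <;> cases v <;> first | rfl | simp at h

/-- Restriction of a subgraph of a disjoint sum to the left part. -/
def sumLeft (H : (G ⊕g G').Subgraph) : G.Subgraph where
  verts := Sum.inl ⁻¹' H.verts
  Adj a b := H.Adj (.inl a) (.inl b)
  adj_sub h := H.adj_sub h
  edge_vert h := H.edge_vert h
  symm := ⟨fun a b h => H.adj_symm h⟩

/-- Restriction of a subgraph of a disjoint sum to the right part. -/
def sumRight (H : (G ⊕g G').Subgraph) : G'.Subgraph where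
  verts := Sum.inr ⁻¹' H.verts
  Adj a b := H.Adj (.inr a) (.inr b)
  adj_sub h := H.adj_sub h
  edge_vert h := H.edge_vert h
  symm := ⟨fun a b h => H.adj_symm h⟩

noncomputable def sumLeftIso (H : (G ⊕g G').Subgraph) (hside : ∀ v ∈ H.verts, v.isLeft) :
    (sumLeft H).coe ≃g H.coe := by
  refine ⟨Equiv.ofBijective (fun x => ⟨Sum.inl x.val, x.prop⟩) ⟨?_, ?_⟩, Iff.rfl⟩
  · intro x y h
    exact Subtype.ext (Sum.inl_injective (congrArg Subtype.val h))
  · rintro ⟨y, hy⟩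
    obtain ⟨a, rfl⟩ := Sum.isLeft_iff.mp (hside y hy)
    exact ⟨⟨a, hy⟩, rfl⟩

noncomputable def sumRightIso (H : (G ⊕g G').Subgraph) (hside : ∀ v ∈ H.verts, v.isRight) :
    (sumRight H).coe ≃g H.coe := by
  refine ⟨Equiv.ofBijective (fun x => ⟨Sum.inr x.val, x.prop⟩) ⟨?_, ?_⟩, Iff.rfl⟩
  · intro x y h
    exact Subtype.ext (Sum.inr_injective (congrArg Subtype.val h))
  · rintro ⟨y, hy⟩
    obtain ⟨a, rfl⟩ := Sum.isRight_iff.mp (hside y hy)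
    exact ⟨⟨a, hy⟩, rfl⟩

lemma subgraph_side {H : (G ⊕g G').Subgraph} (hc : H.coe.Connected) :
    (∀ v ∈ H.verts, v.isLeft) ∨ (∀ v ∈ H.verts, v.isRight) := by
  have key : ∀ x y : H.verts, (x : α ⊕ β).isLeft = (y : α ⊕ β).isLeft := by
    intro x y
    obtain ⟨w⟩ := hc x y
    induction w with
    | nil => rfl
    | cons h p ih => exact (sum_adj_isLeft (H.adj_sub h)).trans ih
  obtain ⟨x⟩ := hc.nonempty
  cases hx : (x : α ⊕ β).isLeft with
  | true =>
    left; intro v hv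
    have h2 := key ⟨v, hv⟩ x; rw [hx] at h2; exact h2
  | false =>
    right; intro v hv
    have h2 := key ⟨v, hv⟩ x; rw [hx] at h2
    exact Sum.not_isLeft.mp (by simp only [Subtype.coe_mk] at h2; simp [h2])

lemma sumLeft_map_inl (A : G.Subgraph) :
    sumLeft (A.map (Embedding.sumInl (G := G) (H := G')).toHom) = A := by
  ext v w
  · constructor
    · rintro ⟨a, ha, h⟩
      obtain rfl : a = v := Sum.inl_injective h
      exact ha
    · intro hv
      exact ⟨v, hv, rfl⟩
  · constructor
    · rintro ⟨a, b, h, ha, hb⟩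
      obtain rfl : a = v := Sum.inl_injective ha
      obtain rfl : b = w := Sum.inl_injective hb
      exact h
    · intro h
      exact ⟨v, w, h, rfl, rfl⟩

lemma sumRight_map_inr (A : G'.Subgraph) :
    sumRight (A.map (Embedding.sumInr (G := G) (H := G')).toHom) = A := by
  ext v w
  · constructor
    · rintro ⟨a, ha, h⟩
      obtain rfl : a = v := Sum.inr_injective h
      exact ha
    · intro hv
      exact ⟨v, hv, rfl⟩
  · constructor
    · rintro ⟨a, b, h, ha, hb⟩
      obtain rfl : a = v := Sum.inr_injective ha
      obtain rfl : b = w := Sum.inr_injective hb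
      exact h
    · intro h
      exact ⟨v, w, h, rfl, rfl⟩

lemma map_inl_sumLeft (H : (G ⊕g G').Subgraph) (hside : ∀ v ∈ H.verts, v.isLeft) :
    (sumLeft H).map (Embedding.sumInl (G := G) (H := G')).toHom = H := by
  ext v w
  · constructor
    · rintro ⟨a, ha, rfl⟩
      exact ha
    · intro hv
      obtain ⟨a, rfl⟩ := Sum.isLeft_iff.mp (hside v hv)
      exact ⟨a, hv, rfl⟩
  · constructor
    · rintro ⟨a, b, h, rfl, rfl⟩
      exact h
    · intro h
      obtain ⟨a, rfl⟩ := Sum.isLeft_iff.mp (hside v (H.edge_vert h))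
      obtain ⟨b, rfl⟩ := Sum.isLeft_iff.mp (hside w (H.edge_vert (H.adj_symm h)))
      exact ⟨a, b, h, rfl, rfl⟩

lemma map_inr_sumRight (H : (G ⊕g G').Subgraph) (hside : ∀ v ∈ H.verts, v.isRight) :
    (sumRight H).map (Embedding.sumInr (G := G) (H := G')).toHom = H := by
  ext v w
  · constructor
    · rintro ⟨a, ha, rfl⟩
      exact ha
    · intro hv
      obtain ⟨a, rfl⟩ := Sum.isRight_iff.mp (hside v hv)
      exact ⟨a, hv, rfl⟩
  · constructor
    · rintro ⟨a, b, h, rfl, rfl⟩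
      exact h
    · intro h
      obtain ⟨a, rfl⟩ := Sum.isRight_iff.mp (hside v (H.edge_vert h))
      obtain ⟨b, rfl⟩ := Sum.isRight_iff.mp (hside w (H.edge_vert (H.adj_symm h)))
      exact ⟨a, b, h, rfl, rfl⟩

lemma copyCount_sum [Finite α] [Finite β] (hF : F.Connected) :
    _root_.copyCount (G ⊕g G') F = _root_.copyCount G F + _root_.copyCount G' F := by
  classical
  set S := {H : (G ⊕g G').Subgraph | Nonempty (H.coe ≃g F)} with hS
  set SL := {H : (G ⊕g G').Subgraph | Nonempty (H.coe ≃g F) ∧ ∀ v ∈ H.verts, v.isLeft} with hSL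
  set SR := {H : (G ⊕g G').Subgraph | Nonempty (H.coe ≃g F) ∧ ∀ v ∈ H.verts, v.isRight} with hSR
  have hunion : S = SL ∪ SR := by
    apply Set.Subset.antisymm
    · rintro H ⟨e⟩
      have hc : H.coe.Connected := e.connected_iff.mpr hF
      rcases subgraph_side hc with h | h
      · exact Or.inl ⟨⟨e⟩, h⟩
      · exact Or.inr ⟨⟨e⟩, h⟩
    · rintro H (⟨he, _⟩ | ⟨he, _⟩) <;> exact he
  have hdisj : Disjoint SL SR := by
    rw [Set.disjoint_left]
    rintro H ⟨⟨e⟩, hl⟩ ⟨_, hr⟩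
    have : Nonempty W := hF.nonempty
    obtain ⟨w⟩ := this
    have hv := (e.symm w).prop
    have h1 := hl _ hv
    have h2 := hr _ hv
    have := Sum.not_isLeft.mpr h2
    exact this h1
  have hL : SL.ncard = _root_.copyCount G F := by
    rw [_root_.copyCount, ← Nat.card_coe_set_eq, ← Nat.card_coe_set_eq]
    refine Nat.card_congr ⟨fun H => ⟨sumLeft H.1, ?_⟩, fun A =>
      ⟨A.1.map (Embedding.sumInl (G := G) (H := G')).toHom, ?_, ?_⟩, ?_, ?_⟩
    · obtain ⟨⟨e⟩, hside⟩ := H.2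
      exact ⟨(sumLeftIso H.1 hside).trans e⟩
    · exact copy_mem_map _ _ A.2
    · rintro v ⟨a, _, rfl⟩
      rfl
    · rintro ⟨H, he, hside⟩
      exact Subtype.ext (map_inl_sumLeft H hside)
    · rintro ⟨A, hA⟩
      exact Subtype.ext (sumLeft_map_inl A)
  have hR : SR.ncard = _root_.copyCount G' F := by
    rw [_root_.copyCount, ← Nat.card_coe_set_eq, ← Nat.card_coe_set_eq]
    refine Nat.card_congr ⟨fun H => ⟨sumRight H.1, ?_⟩, fun A =>
      ⟨A.1.map (Embedding.sumInr (G := G) (H := G')).toHom, ?_, ?_⟩, ?_, ?_⟩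
    · obtain ⟨⟨e⟩, hside⟩ := H.2
      exact ⟨(sumRightIso H.1 hside).trans e⟩
    · exact copy_mem_map _ _ A.2
    · rintro v ⟨a, _, rfl⟩
      rfl
    · rintro ⟨H, he, hside⟩
      exact Subtype.ext (map_inr_sumRight H hside)
    · rintro ⟨A, hA⟩
      exact Subtype.ext (sumRight_map_inr A)
  rw [_root_.copyCount, ← hS, hunion, Set.ncard_union_eq hdisj (Set.toFinite _) (Set.toFinite _),
    hL, hR]

end sum

section chunk3
open SimpleGraph
universe uw
variable {V W W' : Type*} {G : SimpleGraph V} {F : SimpleGraph W}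

lemma sum_edgeSet {α β : Type*} (G : SimpleGraph α) (G' : SimpleGraph β) :
    (G ⊕g G').edgeSet =
      Sym2.map Sum.inl '' G.edgeSet ∪ Sym2.map Sum.inr '' G'.edgeSet := by
  ext e
  induction e using Sym2.ind with
  | _ u v =>
    constructor
    · intro h
      rw [SimpleGraph.mem_edgeSet] at h
      cases u with
      | inl a =>
        cases v with
        | inl b => exact Or.inl ⟨s(a, b), h, rfl⟩
        | inr b => simp at h
      | inr a =>
        cases v with
        | inl b => simp at h
        | inr b => exact Or.inr ⟨s(a, b), h, rfl⟩
    · rintro (⟨e', he', heq⟩ | ⟨e', he', heq⟩) <;>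
      · induction e' using Sym2.ind with
        | _ a b =>
          rw [Sym2.map_pair_eq] at heq
          rw [SimpleGraph.mem_edgeSet] at he' ⊢
          rw [Sym2.eq_iff] at heq
          rcases heq with ⟨rfl, rfl⟩ | ⟨rfl, rfl⟩
          · exact he'
          · exact he'.symm

lemma edgeCount_sum {α β : Type*} [Finite α] [Finite β] (G : SimpleGraph α)
    (G' : SimpleGraph β) : edgeCount (G ⊕g G') = edgeCount G + edgeCount G' := by
  rw [edgeCount, sum_edgeSet, Set.ncard_union_eq ?_ ?_ ?_,
    Set.ncard_image_of_injective _ (Sym2.map.injective Sum.inl_injective),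
    Set.ncard_image_of_injective _ (Sym2.map.injective Sum.inr_injective)]
  · rfl
  · rw [Set.disjoint_left]
    rintro e ⟨e₁, -, rfl⟩ ⟨e₂, -, heq⟩
    induction e₁ using Sym2.ind with
    | _ a b =>
      induction e₂ using Sym2.ind with
      | _ c d =>
        rw [Sym2.map_pair_eq, Sym2.map_pair_eq, Sym2.eq_iff] at heq
        rcases heq with ⟨h, -⟩ | ⟨h, -⟩ <;> exact absurd h (by simp)
  · exact ((Set.toFinite _).image _)
  · exact ((Set.toFinite _).image _)

lemma copyCount_of_isEmpty {α : Type*} [IsEmpty α] (G : SimpleGraph α)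
    (F : SimpleGraph W) (hW : Nonempty W) : _root_.copyCount G F = 0 := by
  have : {H : G.Subgraph | Nonempty (H.coe ≃g F)} = ∅ := by
    rw [Set.eq_empty_iff_forall_notMem]
    rintro H ⟨e⟩
    obtain ⟨w⟩ := hW
    exact (IsEmpty.false ((e.symm w : H.verts) : α))
  rw [_root_.copyCount, this, Set.ncard_empty]

lemma exists_adj_of_connected (hG : G.Connected) (he : G.edgeSet.Nonempty) (v : V) :
    ∃ u, G.Adj v u := by
  obtain ⟨a, b, hab⟩ : ∃ a b, G.Adj a b := by
    obtain ⟨e, he⟩ := he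
    induction e using Sym2.ind with
    | _ a b => exact ⟨a, b, he⟩
  obtain ⟨w⟩ := hG v a
  cases w with
  | nil => exact ⟨b, hab⟩
  | cons h _ => exact ⟨_, h⟩

lemma copy_eq_top [Finite V] (hG : G.Connected) (h2 : 1 ≤ edgeCount G)
    (H : G.Subgraph) (e : H.coe ≃g F) (hmin : edgeCount G ≤ edgeCount F) : H = ⊤ := by
  have hedge : H.edgeSet = G.edgeSet := by
    refine Set.eq_of_subset_of_ncard_le H.edgeSet_subset ?_ (Set.toFinite _)
    rw [copy_edgeCount H e]
    exact hmin
  have hverts : H.verts = Set.univ := by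
    rw [Set.eq_univ_iff_forall]
    intro v
    obtain ⟨u, hu⟩ := exists_adj_of_connected hG
      (Set.nonempty_of_ncard_ne_zero (by rw [← edgeCount]; omega)) v
    have : H.Adj v u := by
      rw [← SimpleGraph.Subgraph.mem_edgeSet, hedge, SimpleGraph.mem_edgeSet]
      exact hu
    exact H.edge_vert this
  refine SimpleGraph.Subgraph.ext hverts ?_
  ext x y
  rw [← SimpleGraph.Subgraph.mem_edgeSet, hedge, SimpleGraph.mem_edgeSet]
  rfl

lemma copyCount_min_self [Finite V] (hG : G.Connected) (h2 : 1 ≤ edgeCount G)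
    (F : SimpleGraph W) (hmin : edgeCount G ≤ edgeCount F) :
    (Nonempty (G ≃g F) → _root_.copyCount G F = 1) ∧ (¬ Nonempty (G ≃g F) → _root_.copyCount G F = 0) := by
  have hset : ∀ H ∈ {H : G.Subgraph | Nonempty (H.coe ≃g F)}, H = ⊤ := by
    rintro H ⟨e⟩
    exact copy_eq_top hG h2 H e hmin
  constructor
  · intro h
    obtain ⟨e⟩ := h
    have : {H : G.Subgraph | Nonempty (H.coe ≃g F)} = {⊤} := by
      apply Set.Subset.antisymm
      · intro H hH; exact hset H hH
      · rintro H rfl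
        exact ⟨SimpleGraph.Subgraph.topIso.trans e⟩
    rw [_root_.copyCount, this, Set.ncard_singleton]
  · intro h
    have : {H : G.Subgraph | Nonempty (H.coe ≃g F)} = ∅ := by
      rw [Set.eq_empty_iff_forall_notMem]
      rintro H hH
      obtain rfl := hset H hH
      obtain ⟨e⟩ := hH
      exact h ⟨SimpleGraph.Subgraph.topIso.symm.trans e⟩
    rw [_root_.copyCount, this, Set.ncard_empty]

universe usp in
/-- Iterated disjoint sum vertex type. -/
def sumPow (W : Type usp) : ℕ → Type usp
  | 0 => PEmpty
  | (k+1) => sumPow W k ⊕ W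

instance sumPowFintype {W : Type*} [Fintype W] : ∀ k, Fintype (sumPow W k)
  | 0 => inferInstanceAs (Fintype PEmpty)
  | (k+1) => letI := sumPowFintype (W := W) k; inferInstanceAs (Fintype (sumPow W k ⊕ W))

lemma card_sumPow {W : Type*} [Fintype W] :
    ∀ k, Fintype.card (sumPow W k) = k * Fintype.card W
  | 0 => by
    rw [show Fintype.card (sumPow W 0) = 0 from rfl]
    ring
  | (k+1) => by
    have := card_sumPow (W := W) k
    rw [show (Fintype.card (sumPow W (k+1))) = Fintype.card (sumPow W k) + Fintype.card W from
      Fintype.card_sum, this]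
    ring

/-- `k` disjoint copies of `F`. -/
def repG (F : SimpleGraph W) : ∀ k, SimpleGraph (sumPow W k)
  | 0 => ⊥
  | (k+1) => repG F k ⊕g F

lemma copyCount_repG [Fintype W] (F : SimpleGraph W) {F' : SimpleGraph W'}
    (hF' : F'.Connected) : ∀ k, _root_.copyCount (repG F k) F' = k * _root_.copyCount F F'
  | 0 => by
    haveI : IsEmpty (sumPow W 0) := inferInstanceAs (IsEmpty PEmpty)
    rw [copyCount_of_isEmpty _ _ hF'.nonempty]
    ring
  | (k+1) => by
    have ih := copyCount_repG F hF' k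
    rw [show _root_.copyCount (repG F (k+1)) F' = _root_.copyCount (repG F k ⊕g F) F' from rfl, copyCount_sum hF', ih]
    ring

lemma edgeCount_repG [Fintype W] (F : SimpleGraph W) :
    ∀ k, edgeCount (repG F k) = k * edgeCount F
  | 0 => by
    rw [show repG F 0 = (⊥ : SimpleGraph (sumPow W 0)) from rfl]
    rw [edgeCount, SimpleGraph.edgeSet_bot, Set.ncard_empty]
    ring
  | (k+1) => by
    have ih := edgeCount_repG F k
    rw [show edgeCount (repG F (k+1)) = edgeCount (repG F k ⊕g F) from rfl, edgeCount_sum, ih]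
    ring

/-- transfer a graph on an `n`-element type to `Fin n`. -/
lemma exists_graph_fin {T : Type*} [Fintype T] {n : ℕ} (h : Fintype.card T = n)
    (Gt : SimpleGraph T) :
    ∃ G : SimpleGraph (Fin n),
      (∀ {W' : Type uw} (F' : SimpleGraph W'), _root_.copyCount G F' = _root_.copyCount Gt F') ∧
      edgeCount G = edgeCount Gt := by
  have e : T ≃ Fin n := Fintype.equivFinOfCardEq h
  refine ⟨Gt.map e.toEmbedding, fun F' => ?_, ?_⟩
  · exact (copyCount_iso (SimpleGraph.Iso.map e Gt) F').symm
  · exact (edgeCount_iso (SimpleGraph.Iso.map e Gt)).symm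

lemma edgeCount_le_bound {n : ℕ} (G : SimpleGraph (Fin n)) :
    edgeCount G ≤ Nat.card (Sym2 (Fin n)) := by
  rw [edgeCount]
  have := Set.ncard_le_ncard (Set.subset_univ G.edgeSet) Set.finite_univ
  rwa [Set.ncard_univ] at this

lemma edgeSet_topFin2 : (⊤ : SimpleGraph (Fin 2)).edgeSet = {s(0, 1)} := by
  ext e
  induction e using Sym2.ind with
  | _ a b =>
    simp only [SimpleGraph.mem_edgeSet, SimpleGraph.top_adj, Set.mem_singleton_iff, Sym2.eq_iff]
    revert a b
    decide

lemma edgeCount_topFin2 : edgeCount (⊤ : SimpleGraph (Fin 2)) = 1 := by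
  rw [edgeCount, edgeSet_topFin2, Set.ncard_singleton]

end chunk3

section chunk4
open SimpleGraph
universe uw

lemma delete_vertex {n : ℕ} (hn : 0 < n) (G : SimpleGraph (Fin n)) :
    ∃ A : SimpleGraph (Fin (n - 1)),
      (∀ {W' : Type uw} (F' : SimpleGraph W'), _root_.copyCount G F' = 0 → _root_.copyCount A F' = 0) ∧
      edgeCount A ≤ edgeCount G ∧
      edgeCount G ≤ edgeCount A + (2 * edgeCount G) / n := by
  classical
  -- choose a vertex of minimum degree
  haveI : Nonempty (Fin n) := ⟨⟨0, hn⟩⟩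
  obtain ⟨v, -, hv⟩ := Finset.exists_min_image (Finset.univ : Finset (Fin n))
    (fun u => G.degree u) Finset.univ_nonempty
  have hec : edgeCount G = G.edgeFinset.card := by
    rw [edgeCount, ← SimpleGraph.coe_edgeFinset, Set.ncard_coe_finset]
  have hsum : ∑ u, G.degree u = 2 * edgeCount G := by
    rw [hec]; exact G.sum_degrees_eq_twice_card_edges
  have hdegn : G.degree v * n ≤ 2 * edgeCount G := by
    calc G.degree v * n = ∑ _u : Fin n, G.degree v := by
          simp [Finset.sum_const, Finset.card_univ, mul_comm]
      _ ≤ ∑ u, G.degree u := Finset.sum_le_sum (fun u _ => hv u (Finset.mem_univ u))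
      _ = 2 * edgeCount G := hsum
  have hdeg : G.degree v ≤ (2 * edgeCount G) / n := (Nat.le_div_iff_mul_le hn).mpr hdegn
  -- induced subgraph on the complement of v
  set s : Set (Fin n) := {v}ᶜ with hs
  have hcard : Fintype.card s = n - 1 := by
    simp only [hs]
    rw [Fintype.card_compl_set]
    simp
  obtain ⟨A, hAcopy, hAedge⟩ := exists_graph_fin hcard (G.induce s)
  refine ⟨A, ?_, ?_, ?_⟩
  · intro W' F' h0
    rw [hAcopy]
    exact copyCount_eq_zero_of_embedding (SimpleGraph.Embedding.induce s) h0
  · rw [hAedge, edgeCount, edgeCount]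
    rw [show (G.induce s).edgeSet.ncard
        = (Sym2.map (Subtype.val : s → Fin n) '' (G.induce s).edgeSet).ncard from
      (Set.ncard_image_of_injective _ (Sym2.map.injective Subtype.val_injective)).symm]
    refine Set.ncard_le_ncard ?_ (Set.toFinite _)
    rintro e ⟨e', he', rfl⟩
    induction e' using Sym2.ind with
    | _ a b =>
      rw [SimpleGraph.mem_edgeSet] at he'
      rw [Sym2.map_pair_eq, SimpleGraph.mem_edgeSet]
      exact he'
  · -- G.edgeSet ⊆ image ∪ incidenceSet v
    have hsub : G.edgeSet ⊆
        (Sym2.map (Subtype.val : s → Fin n) '' (G.induce s).edgeSet) ∪ G.incidenceSet v := by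
      intro e he
      induction e using Sym2.ind with
      | _ a b =>
        rw [SimpleGraph.mem_edgeSet] at he
        by_cases hva : v = a
        · exact Or.inr ⟨he, by subst hva; simp⟩
        by_cases hvb : v = b
        · exact Or.inr ⟨he, by subst hvb; simp⟩
        · refine Or.inl ⟨s(⟨a, by simp [hs, Ne.symm hva]⟩, ⟨b, by simp [hs, Ne.symm hvb]⟩), ?_, ?_⟩
          · rw [SimpleGraph.mem_edgeSet]
            exact he
          · rw [Sym2.map_pair_eq]
    have hinc : (G.incidenceSet v).ncard = G.degree v := by
      rw [← Nat.card_coe_set_eq, Nat.card_eq_fintype_card]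
      exact G.card_incidenceSet_eq_degree v
    calc edgeCount G
        ≤ ((Sym2.map (Subtype.val : s → Fin n) '' (G.induce s).edgeSet)
            ∪ G.incidenceSet v).ncard := Set.ncard_le_ncard hsub (Set.toFinite _)
      _ ≤ (Sym2.map (Subtype.val : s → Fin n) '' (G.induce s).edgeSet).ncard
            + (G.incidenceSet v).ncard := Set.ncard_union_le _ _
      _ = edgeCount (G.induce s) + G.degree v := by
          rw [Set.ncard_image_of_injective _ (Sym2.map.injective Subtype.val_injective), hinc]
          rfl
      _ ≤ edgeCount A + (2 * edgeCount G) / n := by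
          rw [hAedge]
          exact Nat.add_le_add_left hdeg _

end chunk4

section chunk56
open SimpleGraph
universe uw

lemma delete_many {E : ℕ} {d : ℕ} (hd : 0 < d) :
    ∀ (t : ℕ) (m : ℕ) (G : SimpleGraph (Fin m)), d ≤ m - t → edgeCount G ≤ E →
    ∃ A : SimpleGraph (Fin (m - t)),
      (∀ {W' : Type uw} (F' : SimpleGraph W'), _root_.copyCount G F' = 0 → _root_.copyCount A F' = 0) ∧
      edgeCount A ≤ edgeCount G ∧
      edgeCount G ≤ edgeCount A + t * ((2 * E) / d)
  | 0, m, G, hdm, hE => by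
    obtain ⟨A, hAcopy, hAedge⟩ := exists_graph_fin (T := Fin m) (n := m - 0) (by simp) G
    refine ⟨A, fun F' h0 => by rw [hAcopy]; exact h0, by rw [hAedge], by rw [hAedge]; omega⟩
  | (t+1), m, G, hdm, hE => by
    have hdm' : d ≤ m - t := le_trans hdm (by omega)
    obtain ⟨A, hAcopy, hAe1, hAe2⟩ := delete_many hd t m G hdm' hE
    have hpos : 0 < m - t := by omega
    obtain ⟨A', hA'copy, hA'e1, hA'e2⟩ := delete_vertex hpos A
    have hdiv : (2 * edgeCount A) / (m - t) ≤ (2 * E) / d := by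
      calc (2 * edgeCount A) / (m - t) ≤ (2 * E) / (m - t) :=
            Nat.div_le_div_right (by omega)
        _ ≤ (2 * E) / d := Nat.div_le_div_left hdm' hd
    refine ⟨A', fun F' h0 => hA'copy F' (hAcopy F' h0), le_trans hA'e1 hAe1, ?_⟩
    have h1 : edgeCount A ≤ edgeCount A' + (2 * E) / d := le_trans hA'e2 (by omega)
    calc edgeCount G ≤ edgeCount A + t * ((2 * E) / d) := hAe2
      _ ≤ (edgeCount A' + (2 * E) / d) + t * ((2 * E) / d) := by omega
      _ = edgeCount A' + (t + 1) * ((2 * E) / d) := by ring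

lemma ncard_iUnion_le_sum {α ι : Type*} [Fintype ι] (S : ι → Set α) :
    (⋃ i, S i).ncard ≤ ∑ i, (S i).ncard := by
  classical
  have key : ∀ s : Finset ι, (⋃ i ∈ s, S i).ncard ≤ ∑ i ∈ s, (S i).ncard := by
    intro s
    induction s using Finset.induction with
    | empty => simp
    | insert a s hx ih =>
      rw [Finset.set_biUnion_insert, Finset.sum_insert hx]
      exact le_trans (Set.ncard_union_le _ _) (by omega)
  have := key Finset.univ
  simpa using this

lemma edge_removal {n k : ℕ} {ι : Type*} [Fintype ι] {W : ι → Type*}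
    (F : ∀ i, SimpleGraph (W i)) (hedge : ∀ i, 1 ≤ edgeCount (F i))
    (G : SimpleGraph (Fin n)) (hk : ∑ i, _root_.copyCount G (F i) = k) :
    ∃ G' : SimpleGraph (Fin n), (∀ i, _root_.copyCount G' (F i) = 0) ∧
      edgeCount G ≤ edgeCount G' + k := by
  classical
  set S : Set G.Subgraph := ⋃ i, {H : G.Subgraph | Nonempty (H.coe ≃g F i)} with hSdef
  have hScard : S.ncard ≤ k := by
    rw [← hk]
    exact le_trans (ncard_iUnion_le_sum _) (le_of_eq rfl)
  have hchoice : ∀ H : S, ∃ e, e ∈ (H : G.Subgraph).edgeSet := by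
    rintro ⟨H, hH⟩
    rw [hSdef, Set.mem_iUnion] at hH
    obtain ⟨i, ⟨e⟩⟩ := hH
    apply Set.nonempty_of_ncard_ne_zero
    rw [copy_edgeCount H e]
    have := hedge i
    omega
  choose f hf using hchoice
  set D : Set (Sym2 (Fin n)) := Set.range f with hDdef
  have hDcard : D.ncard ≤ k := by
    calc D.ncard = Nat.card D := (Nat.card_coe_set_eq _).symm
      _ ≤ Nat.card S := Finite.card_range_le f
      _ = S.ncard := Nat.card_coe_set_eq _
      _ ≤ k := hScard
  refine ⟨G.deleteEdges D, ?_, ?_⟩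
  · intro i
    by_contra h0
    have hne : {H : (G.deleteEdges D).Subgraph | Nonempty (H.coe ≃g F i)}.Nonempty := by
      apply Set.nonempty_of_ncard_ne_zero
      exact h0
    obtain ⟨H', hH'⟩ := hne
    obtain ⟨e⟩ := hH'
    set H'' : G.Subgraph :=
      ⟨H'.verts, H'.Adj, fun h => (G.deleteEdges_le D) (H'.adj_sub h), H'.edge_vert,
        H'.symm⟩ with hH''def
    have hmem : H'' ∈ S := by
      rw [hSdef, Set.mem_iUnion]
      exact ⟨i, ⟨e⟩⟩
    have hfe := hf ⟨H'', hmem⟩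
    have hsub : H''.edgeSet ⊆ (G.deleteEdges D).edgeSet := H'.edgeSet_subset
    have := hsub hfe
    rw [SimpleGraph.edgeSet_deleteEdges] at this
    exact this.2 ⟨⟨H'', hmem⟩, rfl⟩
  · have hsub : G.edgeSet ⊆ (G.deleteEdges D).edgeSet ∪ D := by
      rw [SimpleGraph.edgeSet_deleteEdges]
      intro e he
      by_cases hD : e ∈ D
      · exact Or.inr hD
      · exact Or.inl ⟨he, hD⟩
    calc edgeCount G ≤ ((G.deleteEdges D).edgeSet ∪ D).ncard :=
          Set.ncard_le_ncard hsub (Set.toFinite _)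
      _ ≤ (G.deleteEdges D).edgeSet.ncard + D.ncard := Set.ncard_union_le _ _
      _ ≤ edgeCount (G.deleteEdges D) + k := by
          rw [edgeCount]; omega

end chunk56

/-- for a finite nonempty family `F` of pairwise non-isomorphic connected
graphs, each with at least two edges, and fixed `k`, we have
`exa_k(n, F) = (1 + o(1)) ex(n, F)`: for every `ε > 0` there is `N` such that for every
`n ≥ N` the quantity `exa_k(n, F)` exists (some graph on `n` vertices has exactly `k`
copies in total of members of `F`) and
`(1 − ε)·ex(n,F) ≤ exa_k(n,F) ≤ (1 + ε)·ex(n,F)`. -/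
theorem stmt2 {ι : Type*} [Fintype ι] [Nonempty ι] {W : ι → Type*} [∀ i, Fintype (W i)]
    (F : ∀ i, SimpleGraph (W i))
    (hconn : ∀ i, (F i).Connected)
    (hedge : ∀ i, 2 ≤ edgeCount (F i))
    (hdist : ∀ i j, Nonempty (F i ≃g F j) → i = j)
    (k : ℕ) :
    ∀ ε : ℝ, 0 < ε → ∃ N : ℕ, ∀ n : ℕ, N ≤ n →
      (∃ G : SimpleGraph (Fin n), (∑ i, _root_.copyCount G (F i)) = k) ∧
      (1 - ε) * exFam n F ≤ (exaFam k n F : ℝ) ∧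
      (exaFam k n F : ℝ) ≤ (1 + ε) * exFam n F := by
  classical
  intro ε hε
  -- choose a member of minimal edge count
  obtain ⟨i0, -, hmin⟩ := Finset.exists_min_image (Finset.univ : Finset ι)
    (fun i => edgeCount (F i)) Finset.univ_nonempty
  set w := Fintype.card (W i0) with hw
  set e0 := edgeCount (F i0) with he0
  set c := k * w with hc
  refine ⟨c + ⌈(2 * (c : ℝ)) / ε⌉₊ + 2 * ⌈(k : ℝ) / ε⌉₊ + 2, fun n hn => ?_⟩
  -- `∑ i, _root_.copyCount (F i0) (F i) = 1`
  have hcopyF : ∀ i, _root_.copyCount (F i0) (F i) = if i = i0 then 1 else 0 := by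
    intro i
    have h1 : 1 ≤ edgeCount (F i0) := le_trans (by norm_num) (hedge i0)
    have hm := copyCount_min_self (hconn i0) h1 (F i) (hmin i (Finset.mem_univ i))
    by_cases hi : i = i0
    · subst hi
      simp only [if_pos rfl]
      exact hm.1 ⟨RelIso.refl _⟩
    · rw [if_neg hi]
      refine hm.2 ?_
      rintro ⟨e⟩
      exact hi (hdist i0 i ⟨e⟩).symm
  have hsumF : ∑ i, _root_.copyCount (F i0) (F i) = 1 := by
    rw [Finset.sum_congr rfl (fun i _ => hcopyF i)]
    simp
  -- basic facts about the ex and exa sets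
  set exSet : Set ℕ :=
    {m | ∃ G : SimpleGraph (Fin n), (∀ i, _root_.copyCount G (F i) = 0) ∧ edgeCount G = m} with hexSet
  set exaSet : Set ℕ :=
    {m | ∃ G : SimpleGraph (Fin n), (∑ i, _root_.copyCount G (F i)) = k ∧ edgeCount G = m} with hexaSet
  have hbddex : BddAbove exSet := by
    refine ⟨Nat.card (Sym2 (Fin n)), ?_⟩
    rintro m ⟨G, -, rfl⟩
    exact edgeCount_le_bound G
  have hbddexa : BddAbove exaSet := by
    refine ⟨Nat.card (Sym2 (Fin n)), ?_⟩
    rintro m ⟨G, -, rfl⟩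
    exact edgeCount_le_bound G
  have hbotfree : ∀ i, _root_.copyCount (⊥ : SimpleGraph (Fin n)) (F i) = 0 := by
    intro i
    refine copyCount_eq_zero_of_lt ?_
    rw [edgeCount, SimpleGraph.edgeSet_bot, Set.ncard_empty]
    have := hedge i
    omega
  have hex0 : (0 : ℕ) ∈ exSet := by
    refine ⟨⊥, hbotfree, ?_⟩
    rw [edgeCount, SimpleGraph.edgeSet_bot, Set.ncard_empty]
  set E := exFam n F with hE
  have hEmem : E ∈ exSet := Nat.sSup_mem ⟨0, hex0⟩ hbddex
  obtain ⟨Gstar, hGfree, hGedge⟩ := hEmem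
  -- arithmetic consequences of `n` being large
  have hcn : c + ⌈(2 * (c : ℝ)) / ε⌉₊ + 2 ≤ n := by omega
  have hncpos : 0 < n - c := by omega
  -- matching lower bound for E
  have hmatch : n / 2 ≤ E := by
    have hK2free : ∀ i, _root_.copyCount (⊤ : SimpleGraph (Fin 2)) (F i) = 0 := by
      intro i
      refine copyCount_eq_zero_of_lt ?_
      rw [edgeCount_topFin2]
      have := hedge i
      omega
    set M' := repG (⊤ : SimpleGraph (Fin 2)) (n / 2) ⊕g
      (⊥ : SimpleGraph (Fin (n - 2 * (n / 2)))) with hM'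
    have hcard : Fintype.card (sumPow (Fin 2) (n / 2) ⊕ Fin (n - 2 * (n / 2))) = n := by
      rw [Fintype.card_sum, card_sumPow, Fintype.card_fin, Fintype.card_fin]
      omega
    obtain ⟨M, hMcopy, hMedge⟩ := exists_graph_fin hcard M'
    have hMmem : (n / 2 : ℕ) ∈ exSet := by
      refine ⟨M, ?_, ?_⟩
      · intro i
        rw [hMcopy, hM', copyCount_sum (hconn i), copyCount_repG _ (hconn i), hK2free i,
          show _root_.copyCount (⊥ : SimpleGraph (Fin (n - 2 * (n / 2)))) (F i) = 0 from
            copyCount_eq_zero_of_lt (by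
              rw [edgeCount, SimpleGraph.edgeSet_bot, Set.ncard_empty]
              have := hedge i
              omega)]
        ring
      · rw [hMedge, hM', edgeCount_sum, edgeCount_repG, edgeCount_topFin2]
        rw [show edgeCount (⊥ : SimpleGraph (Fin (n - 2 * (n / 2)))) = 0 from by
          rw [edgeCount, SimpleGraph.edgeSet_bot, Set.ncard_empty]]
        ring
    exact le_csSup hbddex hMmem
  -- delete c vertices from the extremal graph
  have hGE : edgeCount Gstar ≤ E := le_of_eq hGedge
  obtain ⟨A, hAcopy, hAe1, hAe2⟩ := delete_many hncpos c n Gstar (le_refl _) hGE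
  have hAfree : ∀ i, _root_.copyCount A (F i) = 0 := fun i => hAcopy (F i) (hGfree i)
  set q := (2 * E) / (n - c) with hq
  have hEA : E ≤ edgeCount A + c * q := by rw [← hGedge]; exact hAe2
  -- the construction: A plus k copies of F i0
  set bigG := A ⊕g repG (F i0) k with hbigG
  have hcardbig : Fintype.card (Fin (n - c) ⊕ sumPow (W i0) k) = n := by
    rw [Fintype.card_sum, card_sumPow, Fintype.card_fin]
    have hcw : c = k * Fintype.card (W i0) := rfl
    omega
  obtain ⟨G₀, hG₀copy, hG₀edge⟩ := exists_graph_fin hcardbig bigG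
  have hG₀sum : ∑ i, _root_.copyCount G₀ (F i) = k := by
    have : ∀ i, _root_.copyCount G₀ (F i) = _root_.copyCount A (F i) + k * _root_.copyCount (F i0) (F i) := by
      intro i
      rw [hG₀copy, hbigG, copyCount_sum (hconn i), copyCount_repG _ (hconn i)]
    rw [Finset.sum_congr rfl (fun i _ => this i)]
    rw [Finset.sum_add_distrib, ← Finset.mul_sum, hsumF]
    have : ∑ i, _root_.copyCount A (F i) = 0 := by
      rw [Finset.sum_congr rfl (fun i _ => hAfree i)]
      simp
    rw [this]
    ring
  have hG₀edges : edgeCount G₀ = edgeCount A + k * e0 := by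
    rw [hG₀edge, hbigG, edgeCount_sum, edgeCount_repG]
  refine ⟨⟨G₀, hG₀sum⟩, ?_, ?_⟩
  · -- lower bound
    have hmem : edgeCount A + k * e0 ∈ exaSet := ⟨G₀, hG₀sum, hG₀edges⟩
    have hexa_ge : edgeCount A + k * e0 ≤ exaFam k n F := le_csSup hbddexa hmem
    rcases le_or_gt 1 ε with h1 | h1
    · have : (1 - ε) * E ≤ 0 := mul_nonpos_of_nonpos_of_nonneg (by linarith) (by positivity)
      exact le_trans this (by positivity)
    · -- ε < 1
      have hqle : (q : ℝ) ≤ 2 * E / ((n : ℝ) - c) := by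
        rw [hq]
        calc ((2 * E / (n - c) : ℕ) : ℝ) ≤ ((2 * E : ℕ) : ℝ) / ((n - c : ℕ) : ℝ) :=
              Nat.cast_div_le
          _ = 2 * E / ((n : ℝ) - c) := by
              rw [Nat.cast_mul, Nat.cast_sub (by omega : c ≤ n)]
              norm_num
      have hceil : (2 * (c : ℝ)) / ε ≤ ⌈(2 * (c : ℝ)) / ε⌉₊ := Nat.le_ceil _
      have hnc2 : (2 * (c : ℝ)) ≤ ε * ((n : ℝ) - c) := by
        have h2 : (⌈(2 * (c : ℝ)) / ε⌉₊ : ℝ) ≤ (n : ℝ) - c := by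
          have : (c + ⌈(2 * (c : ℝ)) / ε⌉₊ : ℕ) ≤ n := by omega
          have := Nat.cast_le (α := ℝ).mpr this
          push_cast at this
          linarith
        have := le_trans hceil h2
        calc (2 * (c : ℝ)) = ((2 * (c : ℝ)) / ε) * ε := by field_simp
          _ ≤ ((n : ℝ) - c) * ε := by
              apply mul_le_mul_of_nonneg_right _ (le_of_lt hε)
              exact this
          _ = ε * ((n : ℝ) - c) := by ring
      have hcq : (c : ℝ) * q ≤ ε * E := by
        have hncpos' : (0 : ℝ) < (n : ℝ) - c := by
          have : ((n - c : ℕ) : ℝ) = (n : ℝ) - c := by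
            rw [Nat.cast_sub (by omega : c ≤ n)]
          rw [← this]
          exact_mod_cast hncpos
        calc (c : ℝ) * q ≤ (c : ℝ) * (2 * E / ((n : ℝ) - c)) := by
              apply mul_le_mul_of_nonneg_left hqle (by positivity)
          _ = (2 * (c : ℝ)) * E / ((n : ℝ) - c) := by ring
          _ ≤ (ε * ((n : ℝ) - c)) * E / ((n : ℝ) - c) := by
              have hnum : (2 * (c : ℝ)) * E ≤ (ε * ((n : ℝ) - c)) * E :=
                mul_le_mul_of_nonneg_right hnc2 (Nat.cast_nonneg E)
              exact (div_le_div_iff_of_pos_right hncpos').mpr hnum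
          _ = ε * E := by field_simp
      have hEr : (E : ℝ) ≤ (edgeCount A : ℝ) + c * q := by exact_mod_cast hEA
      have hexar : (edgeCount A : ℝ) ≤ (exaFam k n F : ℝ) := by
        have : (edgeCount A : ℕ) ≤ exaFam k n F := le_trans (by omega) hexa_ge
        exact_mod_cast this
      nlinarith [Nat.cast_nonneg (α := ℝ) E]
  · -- upper bound
    have hup : ∀ m ∈ exaSet, m ≤ E + k := by
      rintro m ⟨G, hG, rfl⟩
      obtain ⟨G', hG'free, hG'edge⟩ := edge_removal F
        (fun i => le_trans (by norm_num) (hedge i)) G hG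
      have : edgeCount G' ≤ E := le_csSup hbddex ⟨G', hG'free, rfl⟩
      omega
    have hexa_le : exaFam k n F ≤ E + k :=
      csSup_le ⟨edgeCount A + k * e0, ⟨G₀, hG₀sum, hG₀edges⟩⟩ hup
    have hkE : (k : ℝ) ≤ ε * E := by
      have h1 : 2 * ⌈(k : ℝ) / ε⌉₊ + 1 ≤ n := by omega
      have h2 : ⌈(k : ℝ) / ε⌉₊ ≤ n / 2 := by omega
      have h3 : ((n / 2 : ℕ) : ℝ) ≤ (E : ℝ) := by exact_mod_cast hmatch
      have h4 : ((k : ℝ) / ε) ≤ ((n / 2 : ℕ) : ℝ) :=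
        le_trans (Nat.le_ceil _) (by exact_mod_cast h2)
      have := le_trans h4 h3
      calc (k : ℝ) = ((k : ℝ) / ε) * ε := by field_simp
        _ ≤ (E : ℝ) * ε := mul_le_mul_of_nonneg_right this (le_of_lt hε)
        _ = ε * E := by ring
    have : (exaFam k n F : ℝ) ≤ (E : ℝ) + k := by exact_mod_cast hexa_le
    linarith
end

section
/- Let F be a graph without isolated vertices whose connected components are F_1, …, F_p, and let k ≥ 1. If G is a graph on n vertices containing exactly k copies of F (i.e., N(G,F) = k), then G has at most ex(n,{F_1,…,F_p}) + k·|V(F)|·n edges. -/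
open SimpleGraph

/-- The number of copies of `F` in `G`, i.e. the number of subgraphs of `G`
isomorphic to `F`. -/
noncomputable def subgraphCopyCount {V W : Type*} (G : SimpleGraph V) (F : SimpleGraph W) : ℕ :=
  Set.ncard {H : G.Subgraph | Nonempty (H.coe ≃g F)}

/-- `ex(n, {F₁, …, F_p})` where `F₁, …, F_p` are the connected components of `F`:
the maximum number of edges of a graph on `n` vertices containing no copy of any
connected component of `F`. -/
noncomputable def exComponents (n : ℕ) {U : Type*} (F : SimpleGraph U) : ℕ :=
  sSup {m | ∃ G : SimpleGraph (Fin n),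
    (∀ c : F.ConnectedComponent, subgraphCopyCount G (F.induce c.supp) = 0) ∧ edgeCount G = m}

/-- Swap lemma: given a copy `H` of `F` in `G` and a copy `H₁` of the component `F_c`
disjoint from `H`, there is a copy of `F` in `G` containing `H₁.verts`. -/
lemma exists_copy_swap {V U : Type*} (F : SimpleGraph U) (G : SimpleGraph V)
    (c : F.ConnectedComponent) (H H₁ : G.Subgraph)
    (φ : H.coe ≃g F) (ψ : H₁.coe ≃g F.induce c.supp)
    (hdisj : Disjoint H.verts H₁.verts) :
    ∃ H' : G.Subgraph, Nonempty (H'.coe ≃g F) ∧ H₁.verts ⊆ H'.verts := by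
  classical
  set f : U → V := fun u =>
    if h : u ∈ c.supp then (ψ.symm ⟨u, h⟩ : V) else (φ.symm u : V) with hf
  have hmem1 : ∀ u (h : u ∈ c.supp), f u = (ψ.symm ⟨u, h⟩ : V) := by
    intro u h; simp only [hf]; rw [dif_pos h]
  have hmem2 : ∀ u, u ∉ c.supp → f u = (φ.symm u : V) := by
    intro u h; simp only [hf]; rw [dif_neg h]
  have hin : ∀ u, u ∈ c.supp → f u ∈ H₁.verts := by
    intro u h; rw [hmem1 u h]; exact (ψ.symm ⟨u, h⟩).2
  have hout : ∀ u, u ∉ c.supp → f u ∈ H.verts := by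
    intro u h; rw [hmem2 u h]; exact (φ.symm u).2
  have finj : Function.Injective f := by
    intro u v huv
    by_cases hu : u ∈ c.supp <;> by_cases hv : v ∈ c.supp
    · rw [hmem1 u hu, hmem1 v hv] at huv
      have := ψ.symm.injective (Subtype.val_injective huv)
      exact congrArg Subtype.val this
    · exact absurd (huv.symm ▸ hout v hv) (Set.disjoint_left.mp hdisj.symm (hin u hu))
    · exact absurd (huv.symm ▸ hin v hv) (Set.disjoint_right.mp hdisj.symm (hout u hu))
    · rw [hmem2 u hu, hmem2 v hv] at huv
      exact φ.symm.injective (Subtype.val_injective huv)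
  have hsupp : ∀ {u v : U}, F.Adj u v → (u ∈ c.supp ↔ v ∈ c.supp) := by
    intro u v h
    simp only [ConnectedComponent.mem_supp_iff]
    rw [ConnectedComponent.sound h.reachable]
  have hadj : ∀ u v, F.Adj u v → G.Adj (f u) (f v) := by
    intro u v h
    by_cases hu : u ∈ c.supp
    · have hv : v ∈ c.supp := (hsupp h).mp hu
      rw [hmem1 u hu, hmem1 v hv]
      have : (F.induce c.supp).Adj ⟨u, hu⟩ ⟨v, hv⟩ := h
      have h2 : H₁.coe.Adj (ψ.symm ⟨u, hu⟩) (ψ.symm ⟨v, hv⟩) := ψ.symm.map_adj_iff.mpr this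
      exact H₁.adj_sub h2
    · have hv : v ∉ c.supp := fun hv => hu ((hsupp h).mpr hv)
      rw [hmem2 u hu, hmem2 v hv]
      have h2 : H.coe.Adj (φ.symm u) (φ.symm v) := φ.symm.map_adj_iff.mpr (by exact h)
      exact H.adj_sub h2
  refine ⟨{ verts := Set.range f
            Adj := fun x y => ∃ u v, F.Adj u v ∧ f u = x ∧ f v = y
            adj_sub := by rintro x y ⟨u, v, h, rfl, rfl⟩; exact hadj u v h
            edge_vert := by rintro x y ⟨u, v, h, rfl, rfl⟩; exact ⟨u, rfl⟩
            symm := ⟨by rintro x y ⟨u, v, h, rfl, rfl⟩; exact ⟨v, u, h.symm, rfl, rfl⟩⟩ },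
         ⟨?_⟩, ?_⟩
  · refine (SimpleGraph.Iso.symm ⟨Equiv.ofInjective f finj, ?_⟩)
    intro u v
    constructor
    · rintro ⟨u', v', h, hu, hv⟩
      have hu' : u' = u := finj hu
      have hv' : v' = v := finj hv
      exact hu' ▸ hv' ▸ h
    · intro h; exact ⟨u, v, h, rfl, rfl⟩
  · intro x hx
    refine ⟨(ψ ⟨x, hx⟩ : U), ?_⟩
    have h2 := (ψ ⟨x, hx⟩).2
    rw [hmem1 _ h2]
    have : (⟨(ψ ⟨x, hx⟩ : U), h2⟩ : c.supp) = ψ ⟨x, hx⟩ := rfl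
    rw [this]; simp

/-- if `F` is a graph without isolated vertices with connected components
`F₁, …, F_p`, `k ≥ 1`, and `G` is a graph on `n` vertices with exactly `k` copies of `F`,
then `G` has at most `ex(n, {F₁, …, F_p}) + k·|V(F)|·n` edges. -/
theorem stmt3 {U : Type*} [Fintype U] (F : SimpleGraph U)
    (hIso : ∀ u : U, ∃ w : U, F.Adj u w)
    (k : ℕ) (hk : 1 ≤ k) (n : ℕ) (G : SimpleGraph (Fin n))
    (hG : subgraphCopyCount G F = k) :
    edgeCount G ≤ exComponents n F + k * Fintype.card U * n := by
  classical
  have hG0 : {H : G.Subgraph | Nonempty (H.coe ≃g F)}.ncard = k := hG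
  set copies : Set G.Subgraph := {H : G.Subgraph | Nonempty (H.coe ≃g F)} with hcopies
  have hfin : copies.Finite := by
    by_contra h
    rw [Set.Infinite.ncard h] at hG0
    omega
  set X : Set (Fin n) := ⋃ H ∈ copies, H.verts with hX
  have hvcard : ∀ H ∈ copies, H.verts.ncard = Fintype.card U := by
    rintro H ⟨e⟩
    rw [← Nat.card_coe_set_eq, Nat.card_congr e.toEquiv, Nat.card_eq_fintype_card]
  have hXcard : X.ncard ≤ k * Fintype.card U := by
    have hXeq : X = ↑(hfin.toFinset.biUnion fun H => (Set.toFinite H.verts).toFinset) := by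
      rw [Finset.coe_biUnion]
      ext x
      simp only [hX, Set.mem_iUnion, Set.Finite.coe_toFinset, Finset.mem_coe,
        Set.Finite.mem_toFinset, exists_prop]
    rw [hXeq, Set.ncard_coe_finset]
    refine le_trans Finset.card_biUnion_le ?_
    have hc : ∀ H ∈ hfin.toFinset, ((Set.toFinite H.verts).toFinset).card = Fintype.card U := by
      intro H hH
      rw [← Set.ncard_eq_toFinset_card H.verts (Set.toFinite H.verts)]
      exact hvcard H (hfin.mem_toFinset.mp hH)
    rw [Finset.sum_congr rfl hc, Finset.sum_const, smul_eq_mul]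
    have hcard : hfin.toFinset.card = k := by
      rw [← Set.ncard_eq_toFinset_card copies hfin]; exact hG0
    rw [hcard]
  set G' : SimpleGraph (Fin n) :=
    { Adj := fun a b => G.Adj a b ∧ a ∉ X ∧ b ∉ X
      symm := ⟨fun a b ⟨h, ha, hb⟩ => ⟨h.symm, hb, ha⟩⟩
      loopless := ⟨fun a ⟨h, _⟩ => G.irrefl h⟩ } with hG'
  have hle : G' ≤ G := fun v w h => h.1
  -- G' contains no copy of any component of F
  have hno : ∀ c : F.ConnectedComponent, subgraphCopyCount G' (F.induce c.supp) = 0 := by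
    intro c
    have hempty : {K : G'.Subgraph | Nonempty (K.coe ≃g F.induce c.supp)} = ∅ := by
      rw [Set.eq_empty_iff_forall_notMem]
      rintro K ⟨ψ⟩
      have hKX : ∀ a ∈ K.verts, a ∉ X := by
        intro a ha
        obtain ⟨w, hw⟩ := hIso ((ψ ⟨a, ha⟩ : c.supp) : U)
        have h2 := (ψ ⟨a, ha⟩).2
        have hwsupp : w ∈ c.supp := by
          simp only [ConnectedComponent.mem_supp_iff] at h2 ⊢
          rw [← ConnectedComponent.sound hw.reachable]; exact h2
        have hadjI : (F.induce c.supp).Adj (ψ ⟨a, ha⟩) ⟨w, hwsupp⟩ := hw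
        have h3 : K.coe.Adj ⟨a, ha⟩ (ψ.symm ⟨w, hwsupp⟩) := by
          have := ψ.symm.map_adj_iff.mpr hadjI
          rwa [ψ.symm_apply_apply] at this
        exact (K.adj_sub h3).2.1
      have hne : copies.Nonempty := Set.nonempty_of_ncard_ne_zero (by rw [hG0]; omega)
      obtain ⟨H, hH⟩ := hne
      obtain ⟨φ⟩ := id hH
      set H₁ : G.Subgraph :=
        { verts := K.verts
          Adj := K.Adj
          adj_sub := fun h => (K.adj_sub h).1
          edge_vert := K.edge_vert
          symm := K.symm } with hH₁
      have ψ' : H₁.coe ≃g F.induce c.supp := ⟨ψ.toEquiv, ψ.map_rel_iff'⟩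
      have hdisj : Disjoint H.verts H₁.verts :=
        Set.disjoint_left.mpr fun x hx hx1 => hKX x hx1 (Set.mem_biUnion hH hx)
      obtain ⟨H', hiso, hsub⟩ := exists_copy_swap F G c H H₁ φ ψ' hdisj
      have hH' : H' ∈ copies := hiso
      obtain ⟨v0, hv0⟩ := c.exists_rep
      have hv0supp : v0 ∈ c.supp := by
        simp only [ConnectedComponent.mem_supp_iff]; exact hv0
      have ha0 : ((ψ.symm ⟨v0, hv0supp⟩ : K.verts) : Fin n) ∈ K.verts :=
        (ψ.symm ⟨v0, hv0supp⟩).2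
      exact hKX _ ha0 (Set.mem_biUnion hH' (hsub ha0))
    unfold subgraphCopyCount
    rw [hempty, Set.ncard_empty]
  -- edgeCount G' is at most exComponents
  have h1 : edgeCount G' ≤ exComponents n F := by
    refine le_csSup ⟨Nat.card (Sym2 (Fin n)), ?_⟩ ⟨G', hno, rfl⟩
    rintro m ⟨G0, -, rfl⟩
    rw [edgeCount, ← Set.ncard_univ]
    exact Set.ncard_le_ncard (Set.subset_univ _) Set.finite_univ
  -- edge counting
  have hEsub : G'.edgeSet ⊆ G.edgeSet := SimpleGraph.edgeSet_mono hle
  have hsplit : (G.edgeSet \ G'.edgeSet).ncard + G'.edgeSet.ncard = G.edgeSet.ncard :=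
    Set.ncard_diff_add_ncard_of_subset hEsub (Set.toFinite _)
  set D : Set (Sym2 (Fin n)) := G.edgeSet \ G'.edgeSet with hD
  have hexX : ∀ e ∈ D, ∃ x, x ∈ X ∧ x ∈ e := by
    intro e he
    induction e using Sym2.ind with
    | _ a b =>
      obtain ⟨heG, heG'⟩ := he
      rw [SimpleGraph.mem_edgeSet] at heG heG'
      by_cases ha : a ∈ X
      · exact ⟨a, ha, Sym2.mem_mk_left a b⟩
      · by_cases hb : b ∈ X
        · exact ⟨b, hb, Sym2.mem_mk_right a b⟩
        · exact absurd ⟨heG, ha, hb⟩ heG'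
  have hDcard : D.ncard ≤ X.ncard * n := by
    set g : D → X × Fin n := fun e =>
      ⟨⟨Classical.choose (hexX e.1 e.2), (Classical.choose_spec (hexX e.1 e.2)).1⟩,
        Sym2.Mem.other (Classical.choose_spec (hexX e.1 e.2)).2⟩ with hg
    have hginj : Function.Injective g := by
      intro e1 e2 h
      have hx : Classical.choose (hexX e1.1 e1.2) = Classical.choose (hexX e2.1 e2.2) :=
        congrArg (fun p => (p.1 : Fin n)) h
      have ho : Sym2.Mem.other (Classical.choose_spec (hexX e1.1 e1.2)).2
          = Sym2.Mem.other (Classical.choose_spec (hexX e2.1 e2.2)).2 :=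
        congrArg Prod.snd h
      apply Subtype.ext
      rw [← Sym2.other_spec (Classical.choose_spec (hexX e1.1 e1.2)).2,
        ← Sym2.other_spec (Classical.choose_spec (hexX e2.1 e2.2)).2, ho, hx]
    calc D.ncard = Nat.card D := (Nat.card_coe_set_eq D).symm
      _ ≤ Nat.card (X × Fin n) := Nat.card_le_card_of_injective g hginj
      _ = X.ncard * n := by
          rw [Nat.card_prod, Nat.card_coe_set_eq, Nat.card_eq_fintype_card, Fintype.card_fin]
  have h2 : edgeCount G ≤ edgeCount G' + X.ncard * n := by
    unfold edgeCount
    omega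
  calc edgeCount G ≤ edgeCount G' + X.ncard * n := h2
    _ ≤ exComponents n F + (k * Fintype.card U) * n :=
        Nat.add_le_add h1 (Nat.mul_le_mul_right n hXcard)
    _ = exComponents n F + k * Fintype.card U * n := by ring
end

section
/- Let F be a graph on v vertices with at least one edge and let n ≥ v. If G is a graph on n vertices containing exactly one copy of F (N(G,F) = 1), then G has at most C(v,2) + ζ(F)·(n−v) + ex(n−v,F) edges, where C(v,2) = v(v−1)/2. In particular, exa_1(n,F) ≤ C(v,2) + ζ(F)·(n−v) + ex(n−v,F). -/
open SimpleGraph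

/-- The number of copies of `F` in `G`, i.e. the number of subgraphs of `G`
isomorphic to `F`. -/
noncomputable def numCopies {V W : Type*} (G : SimpleGraph V) (F : SimpleGraph W) : ℕ :=
  Set.ncard {H : G.Subgraph | Nonempty (H.coe ≃g F)}

/-- The graph obtained from `F` by adding one new vertex joined exactly to the
vertices in `S`. -/
def extendGraph {W : Type*} (F : SimpleGraph W) (S : Set W) : SimpleGraph (Option W) where
  Adj x y := (∃ a b, x = some a ∧ y = some b ∧ F.Adj a b) ∨
             (∃ a, x = some a ∧ y = none ∧ a ∈ S) ∨
             (∃ b, x = none ∧ y = some b ∧ b ∈ S)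
  symm := by
    refine ⟨?_⟩
    rintro x y (⟨a, b, rfl, rfl, h⟩ | ⟨a, rfl, rfl, h⟩ | ⟨b, rfl, rfl, h⟩)
    · exact Or.inl ⟨b, a, rfl, rfl, h.symm⟩
    · exact Or.inr (Or.inr ⟨a, rfl, rfl, h⟩)
    · exact Or.inr (Or.inl ⟨b, rfl, rfl, h⟩)
  loopless := by
    refine ⟨?_⟩
    rintro x (⟨a, b, rfl, h, hadj⟩ | ⟨a, rfl, h, _⟩ | ⟨b, rfl, h, _⟩)
    · obtain rfl := Option.some.inj h
      exact F.loopless.irrefl a hadj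
    · cases h
    · cases h

/-- `ζ(F)`: the largest `z` such that one can add a new vertex joined to exactly `z`
vertices of `F` so that the resulting graph contains exactly one copy of `F`. -/
noncomputable def zeta {W : Type*} (F : SimpleGraph W) : ℕ :=
  sSup {z | ∃ S : Set W, S.ncard = z ∧ numCopies (extendGraph F S) F = 1}

/-- The Turán number `ex(n, F)`: the maximum number of edges of a graph on `n`
vertices containing no copy of `F`. -/
noncomputable def exNum (n : ℕ) {W : Type*} (F : SimpleGraph W) : ℕ :=
  sSup {m | ∃ G : SimpleGraph (Fin n), numCopies G F = 0 ∧ edgeCount G = m}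

/-! ### Auxiliary lemmas -/

section Aux
variable {V V' W : Type*}

instance auxFiniteSubgraph [Finite V] (G : SimpleGraph V) : Finite G.Subgraph :=
  Finite.of_injective (fun H => (H.verts, H.Adj)) (by
    rintro ⟨v₁, a₁, _, _, _⟩ ⟨v₂, a₂, _, _, _⟩ h
    simp only [Prod.mk.injEq] at h
    obtain ⟨h1, h2⟩ := h
    subst h1; subst h2; rfl)

/-- Mapping a subgraph along an injective hom gives an isomorphic coercion graph. -/
noncomputable def coeMapIso {G : SimpleGraph V} {G' : SimpleGraph V'} (f : G →g G')
    (hf : Function.Injective f) (H : G.Subgraph) : H.coe ≃g (H.map f).coe where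
  toEquiv := Equiv.Set.image f H.verts hf
  map_rel_iff' := by
    intro a b
    constructor
    · rintro ⟨p, q, h, hp, hq⟩
      obtain rfl : p = ↑a := hf hp
      obtain rfl : q = ↑b := hf hq
      exact h
    · exact fun h => ⟨a, b, h, rfl, rfl⟩

lemma subgraphMap_injective {G : SimpleGraph V} {G' : SimpleGraph V'} (f : G →g G')
    (hf : Function.Injective f) : Function.Injective (SimpleGraph.Subgraph.map f) := by
  have key : ∀ (H : G.Subgraph) (a b : V), H.Adj a b ↔ (H.map f).Adj (f a) (f b) := by
    intro H a b
    constructor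
    · exact fun h => ⟨a, b, h, rfl, rfl⟩
    · rintro ⟨p, q, h, hp, hq⟩
      obtain rfl : p = a := hf hp
      obtain rfl : q = b := hf hq
      exact h
  intro H₁ H₂ h
  ext x y
  · constructor
    · intro hx
      have : f x ∈ (H₂.map f).verts := h ▸ Set.mem_image_of_mem f hx
      obtain ⟨p, hp, hpx⟩ := this
      exact hf hpx ▸ hp
    · intro hx
      have : f x ∈ (H₁.map f).verts := h ▸ Set.mem_image_of_mem f hx
      obtain ⟨p, hp, hpx⟩ := this
      exact hf hpx ▸ hp
  · rw [key H₁ x y, key H₂ x y, h]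

lemma copyCount_le_of_hom {G : SimpleGraph V} {G' : SimpleGraph V'} [Finite V']
    (F : SimpleGraph W) (f : G →g G') (hf : Function.Injective f) :
    numCopies G F ≤ numCopies G' F := by
  refine Set.ncard_le_ncard_of_injOn (fun H => H.map f) ?_ ?_ (Set.toFinite _)
  · rintro H ⟨ι⟩
    exact ⟨ι.comp (coeMapIso f hf H).symm⟩
  · exact fun H₁ _ H₂ _ h => subgraphMap_injective f hf h

lemma one_le_copyCount_extend [Fintype W] (F : SimpleGraph W) (S : Set W) :
    1 ≤ numCopies (extendGraph F S) F := by
  set K₀ : (extendGraph F S).Subgraph :=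
    { verts := Set.range some
      Adj := fun x y => ∃ a b, x = some a ∧ y = some b ∧ F.Adj a b
      adj_sub := fun h => Or.inl h
      edge_vert := by rintro x y ⟨a, b, rfl, rfl, h⟩; exact ⟨a, rfl⟩
      symm := by refine ⟨?_⟩; rintro x y ⟨a, b, rfl, rfl, h⟩; exact ⟨b, a, rfl, rfl, h.symm⟩ } with hK₀
  have iso2 : F ≃g K₀.coe := by
    refine ⟨Equiv.ofInjective some (Option.some_injective W), ?_⟩
    intro a b
    simp only [Equiv.ofInjective_apply, Subgraph.coe_adj, hK₀]
    constructor
    · rintro ⟨a', b', h1, h2, h⟩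
      obtain rfl := Option.some.inj h1
      obtain rfl := Option.some.inj h2
      exact h
    · exact fun h => ⟨a, b, rfl, rfl, h⟩
  have hmem : K₀ ∈ {H : (extendGraph F S).Subgraph | Nonempty (H.coe ≃g F)} := ⟨iso2.symm⟩
  rw [numCopies]
  exact (Set.ncard_pos (Set.toFinite _)).mpr ⟨K₀, hmem⟩

lemma copyCount_extend_eq_one [Fintype W] {n : ℕ} (F : SimpleGraph W)
    (G : SimpleGraph (Fin n)) (hG : numCopies G F = 1) (H₀ : G.Subgraph)
    (e : H₀.coe ≃g F) (u : Fin n) (hu : u ∉ H₀.verts) :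
    numCopies (extendGraph F {w : W | G.Adj u ↑(e.symm w)}) F = 1 := by
  set S := {w : W | G.Adj u ↑(e.symm w)} with hS
  refine le_antisymm ?_ (one_le_copyCount_extend F S)
  rw [← hG]
  have hf : Function.Injective
      (fun x : Option W => x.elim u (fun w => ↑(e.symm w)) : Option W → Fin n) := by
    intro x y hxy
    match x, y with
    | some a, some b =>
        have h2 : ((e.symm a : H₀.verts) : Fin n) = ↑(e.symm b) := hxy
        exact congrArg some (e.toEquiv.symm.injective (Subtype.coe_injective h2))
    | some a, none =>
        have h2 : ((e.symm a : H₀.verts) : Fin n) = u := hxy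
        exact absurd (h2 ▸ (e.symm a).2) hu
    | none, some b =>
        have h2 : ((e.symm b : H₀.verts) : Fin n) = u := hxy.symm
        exact absurd (h2 ▸ (e.symm b).2) hu
    | none, none => rfl
  refine copyCount_le_of_hom F ⟨fun x => x.elim u (fun w => ↑(e.symm w)), ?_⟩ hf
  rintro x y (⟨a, b, rfl, rfl, h⟩ | ⟨a, rfl, rfl, h⟩ | ⟨b, rfl, rfl, h⟩)
  · exact H₀.adj_sub (e.symm.map_rel_iff.mpr h)
  · exact (h : G.Adj u _).symm
  · exact h

end Aux

/-- if `F` is a graph on `v` vertices with at least one edge, `n ≥ v`, and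
`G` is a graph on `n` vertices containing exactly one copy of `F`, then `G` has at most
`C(v,2) + ζ(F)·(n−v) + ex(n−v, F)` edges. -/
theorem stmt5 {W : Type*} [Fintype W] (F : SimpleGraph W) (v : ℕ)
    (hv : Fintype.card W = v) (hedge : 1 ≤ edgeCount F)
    (n : ℕ) (hn : v ≤ n) (G : SimpleGraph (Fin n)) (hG : numCopies G F = 1) :
    edgeCount G ≤ v.choose 2 + zeta F * (n - v) + exNum (n - v) F := by
  classical
  -- extract the unique copy H₀ with isomorphism e
  obtain ⟨H₀, hset⟩ := Set.ncard_eq_one.mp hG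
  have hH₀mem : H₀ ∈ {H : G.Subgraph | Nonempty (H.coe ≃g F)} := by
    rw [hset]; exact rfl
  obtain ⟨e⟩ := hH₀mem
  have huniq : ∀ K : G.Subgraph, Nonempty (K.coe ≃g F) → K = H₀ := by
    intro K hK
    have : K ∈ {H : G.Subgraph | Nonempty (H.coe ≃g F)} := hK
    rwa [hset, Set.mem_singleton_iff] at this
  -- W is nonempty and hence H₀.verts is nonempty
  have hWne : Nonempty W := by
    obtain ⟨ew, -⟩ := Set.nonempty_of_ncard_ne_zero (by omega : edgeCount F ≠ 0)
    induction ew using Sym2.ind with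
    | _ x y => exact ⟨x⟩
  have hA_ne : H₀.verts.Nonempty :=
    ⟨↑(e.symm (Classical.arbitrary W)), (e.symm (Classical.arbitrary W)).2⟩
  -- cardinality of the vertex set of the copy
  have hcardA : Fintype.card H₀.verts = v := by
    rw [← hv]; exact Fintype.card_congr e.toEquiv
  set A : Finset (Fin n) := H₀.verts.toFinset with hAdef
  have hAcard : A.card = v := by rw [hAdef, Set.toFinset_card]; exact hcardA
  -- edge count via edgeFinset
  have hE : edgeCount G = G.edgeFinset.card := by
    rw [edgeCount, ← coe_edgeFinset, Set.ncard_coe_finset]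
  -- partition of the edges
  set P1 := G.edgeFinset.filter (fun ed => ∀ x ∈ ed, x ∈ H₀.verts) with hP1def
  set P2 := G.edgeFinset.filter
    (fun ed => (∃ x ∈ ed, x ∈ H₀.verts) ∧ (∃ x ∈ ed, x ∉ H₀.verts)) with hP2def
  set P3 := G.edgeFinset.filter (fun ed => ∀ x ∈ ed, x ∉ H₀.verts) with hP3def
  have hcover : G.edgeFinset ⊆ P1 ∪ P2 ∪ P3 := by
    intro ed hed
    by_cases h1 : ∀ x ∈ ed, x ∈ H₀.verts
    · exact Finset.mem_union_left _ (Finset.mem_union_left _ (Finset.mem_filter.mpr ⟨hed, h1⟩))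
    by_cases h3 : ∀ x ∈ ed, x ∉ H₀.verts
    · exact Finset.mem_union_right _ (Finset.mem_filter.mpr ⟨hed, h3⟩)
    · push_neg at h1 h3
      exact Finset.mem_union_left _ (Finset.mem_union_right _
        (Finset.mem_filter.mpr ⟨hed, h3, h1⟩))
  -- Bound 1: edges inside the copy
  have hb1 : P1.card ≤ v.choose 2 := by
    have hsub : P1 ⊆ (G.induce H₀.verts).edgeFinset.image (Sym2.map Subtype.val) := by
      intro ed hed
      rw [hP1def, Finset.mem_filter] at hed
      obtain ⟨heE, hin⟩ := hed
      revert heE hin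
      induction ed using Sym2.ind with
      | _ x y =>
        intro heE hin
        have hx : x ∈ H₀.verts := hin x (Sym2.mem_mk_left x y)
        have hy : y ∈ H₀.verts := hin y (Sym2.mem_mk_right x y)
        have hadj : G.Adj x y := by rwa [mem_edgeFinset, mem_edgeSet] at heE
        refine Finset.mem_image.mpr ⟨s(⟨x, hx⟩, ⟨y, hy⟩), ?_, rfl⟩
        rw [mem_edgeFinset, mem_edgeSet]
        exact hadj
    calc P1.card ≤ ((G.induce H₀.verts).edgeFinset.image (Sym2.map Subtype.val)).card :=
            Finset.card_le_card hsub
      _ ≤ (G.induce H₀.verts).edgeFinset.card := Finset.card_image_le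
      _ ≤ (Fintype.card H₀.verts).choose 2 := SimpleGraph.card_edgeFinset_le_card_choose_two
      _ = v.choose 2 := by rw [hcardA]
  -- Bound 3: edges outside the copy
  have hcardB : Fintype.card ↥(H₀.vertsᶜ) = n - v := by
    rw [Fintype.card_compl_set, hcardA, Fintype.card_fin]
  set GB := G.induce (H₀.vertsᶜ) with hGBdef
  set G3 := GB.overFin hcardB with hG3def
  let ι : GB ≃g G3 := GB.overFinIso hcardB
  have h0 : numCopies G3 F = 0 := by
    rw [numCopies, Set.ncard_eq_zero (Set.toFinite _)]
    refine Set.eq_empty_iff_forall_notMem.mpr ?_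
    rintro K ⟨iK⟩
    have hmap : ∀ {a b}, G3.Adj a b → G.Adj ↑(ι.symm a) ↑(ι.symm b) :=
      fun h => (ι.symm.map_rel_iff.mpr h : GB.Adj _ _)
    let φ : G3 →g G := ⟨fun x => ↑(ι.symm x), hmap⟩
    have hφ : Function.Injective φ := by
      intro a b hab
      have h2 : ((ι.symm a : ↥(H₀.vertsᶜ)) : Fin n) = ↑(ι.symm b) := hab
      exact ι.symm.toEquiv.injective (Subtype.coe_injective h2)
    have hKmem : K.map φ ∈ {H : G.Subgraph | Nonempty (H.coe ≃g F)} :=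
      ⟨iK.comp (coeMapIso φ hφ K).symm⟩
    have hKH : K.map φ = H₀ := huniq _ hKmem
    obtain ⟨x₀, hx₀⟩ := hA_ne
    have hx₀' : x₀ ∈ (K.map φ).verts := by rw [hKH]; exact hx₀
    obtain ⟨y, _, hyx⟩ := hx₀'
    have : φ y ∈ H₀.vertsᶜ := (ι.symm y).2
    rw [hyx] at this
    exact this hx₀
  have hEq3 : edgeCount G3 = GB.edgeFinset.card := by
    rw [edgeCount]
    have : G3.edgeSet.ncard = GB.edgeSet.ncard := by
      rw [← Nat.card_coe_set_eq, ← Nat.card_coe_set_eq]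
      exact Nat.card_congr ι.mapEdgeSet.symm
    rw [this, ← coe_edgeFinset, Set.ncard_coe_finset]
  have hbddEx : BddAbove
      {m | ∃ G₀ : SimpleGraph (Fin (n - v)), numCopies G₀ F = 0 ∧ edgeCount G₀ = m} := by
    refine ⟨(n - v).choose 2, ?_⟩
    rintro m ⟨G₀, -, rfl⟩
    have h1 : edgeCount G₀ = G₀.edgeFinset.card := by
      rw [edgeCount, ← coe_edgeFinset, Set.ncard_coe_finset]
    rw [h1]
    have := SimpleGraph.card_edgeFinset_le_card_choose_two (G := G₀)
    rwa [Fintype.card_fin] at this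
  have hb3 : P3.card ≤ exNum (n - v) F := by
    have hsub : P3 ⊆ GB.edgeFinset.image (Sym2.map Subtype.val) := by
      intro ed hed
      rw [hP3def, Finset.mem_filter] at hed
      obtain ⟨heE, hin⟩ := hed
      revert heE hin
      induction ed using Sym2.ind with
      | _ x y =>
        intro heE hin
        have hx : x ∈ H₀.vertsᶜ := hin x (Sym2.mem_mk_left x y)
        have hy : y ∈ H₀.vertsᶜ := hin y (Sym2.mem_mk_right x y)
        have hadj : G.Adj x y := by rwa [mem_edgeFinset, mem_edgeSet] at heE
        refine Finset.mem_image.mpr ⟨s(⟨x, hx⟩, ⟨y, hy⟩), ?_, rfl⟩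
        rw [mem_edgeFinset, mem_edgeSet]
        exact hadj
    calc P3.card ≤ (GB.edgeFinset.image (Sym2.map Subtype.val)).card :=
            Finset.card_le_card hsub
      _ ≤ GB.edgeFinset.card := Finset.card_image_le
      _ = edgeCount G3 := hEq3.symm
      _ ≤ exNum (n - v) F := le_csSup hbddEx ⟨G3, h0, rfl⟩
  -- Bound 2: edges between the copy and the outside
  have hzbdd : BddAbove {z | ∃ S : Set W, S.ncard = z ∧ numCopies (extendGraph F S) F = 1} := by
    refine ⟨Fintype.card W, ?_⟩
    rintro z ⟨S, rfl, -⟩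
    have := Set.ncard_le_ncard (Set.subset_univ S) (Set.toFinite _)
    rwa [Set.ncard_univ, Nat.card_eq_fintype_card] at this
  have hdeg : ∀ u : Fin n, u ∉ H₀.verts →
      (A.filter (fun a => G.Adj u a)).card ≤ zeta F := by
    intro u hu
    have h1 := copyCount_extend_eq_one F G hG H₀ e u hu
    set S := {w : W | G.Adj u ↑(e.symm w)} with hSdef
    have hcard : S.ncard = (A.filter (fun a => G.Adj u a)).card := by
      rw [Set.ncard_eq_toFinset_card']
      apply Finset.card_bij (fun w _ => (↑(e.symm w) : Fin n))
      · intro w hw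
        rw [Set.mem_toFinset] at hw
        exact Finset.mem_filter.mpr ⟨Set.mem_toFinset.mpr (e.symm w).2, hw⟩
      · intro w1 _ w2 _ hww
        exact e.toEquiv.symm.injective (Subtype.coe_injective hww)
      · intro a ha
        rw [Finset.mem_filter] at ha
        obtain ⟨haA, hadj⟩ := ha
        have haA' : a ∈ H₀.verts := Set.mem_toFinset.mp haA
        refine ⟨e ⟨a, haA'⟩, Set.mem_toFinset.mpr ?_, ?_⟩
        · show G.Adj u ↑(e.symm (e ⟨a, haA'⟩))
          rw [e.symm_apply_apply]
          exact hadj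
        · rw [e.symm_apply_apply]
    rw [← hcard]
    exact le_csSup hzbdd ⟨S, rfl, h1⟩
  have hb2 : P2.card ≤ zeta F * (n - v) := by
    have hsub : P2 ⊆ Aᶜ.biUnion
        (fun u => (A.filter (fun a => G.Adj u a)).image (fun a => s(u, a))) := by
      intro ed hed
      rw [hP2def, Finset.mem_filter] at hed
      obtain ⟨heE, hex⟩ := hed
      revert heE hex
      induction ed using Sym2.ind with
      | _ p q =>
        intro heE hex
        obtain ⟨⟨x, hxe, hxA⟩, ⟨y, hye, hyA⟩⟩ := hex
        have hadj : G.Adj p q := by rwa [mem_edgeFinset, mem_edgeSet] at heE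
        by_cases hp : p ∈ H₀.verts <;> by_cases hq : q ∈ H₀.verts
        · exfalso
          rcases Sym2.mem_iff.mp hye with rfl | rfl
          · exact hyA hp
          · exact hyA hq
        · refine Finset.mem_biUnion.mpr ⟨q,
            Finset.mem_compl.mpr (fun h => hq (Set.mem_toFinset.mp h)),
            Finset.mem_image.mpr ⟨p,
              Finset.mem_filter.mpr ⟨Set.mem_toFinset.mpr hp, hadj.symm⟩, Sym2.eq_swap⟩⟩
        · refine Finset.mem_biUnion.mpr ⟨p,
            Finset.mem_compl.mpr (fun h => hp (Set.mem_toFinset.mp h)),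
            Finset.mem_image.mpr ⟨q,
              Finset.mem_filter.mpr ⟨Set.mem_toFinset.mpr hq, hadj⟩, rfl⟩⟩
        · exfalso
          rcases Sym2.mem_iff.mp hxe with rfl | rfl
          · exact hp hxA
          · exact hq hxA
    calc P2.card ≤ (Aᶜ.biUnion
            (fun u => (A.filter (fun a => G.Adj u a)).image (fun a => s(u, a)))).card :=
            Finset.card_le_card hsub
      _ ≤ ∑ u ∈ Aᶜ, ((A.filter (fun a => G.Adj u a)).image (fun a => s(u, a))).card :=
            Finset.card_biUnion_le
      _ ≤ ∑ _u ∈ Aᶜ, zeta F := by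
            refine Finset.sum_le_sum (fun u hu => ?_)
            refine le_trans Finset.card_image_le (hdeg u ?_)
            exact fun h => (Finset.mem_compl.mp hu) (Set.mem_toFinset.mpr h)
      _ = Aᶜ.card * zeta F := by rw [Finset.sum_const, smul_eq_mul]
      _ = zeta F * (n - v) := by
            rw [Finset.card_compl, hAcard, Fintype.card_fin, Nat.mul_comm]
  -- combine
  rw [hE]
  calc G.edgeFinset.card ≤ (P1 ∪ P2 ∪ P3).card := Finset.card_le_card hcover
    _ ≤ (P1 ∪ P2).card + P3.card := Finset.card_union_le _ _
    _ ≤ P1.card + P2.card + P3.card :=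
        Nat.add_le_add_right (Finset.card_union_le _ _) _
    _ ≤ v.choose 2 + zeta F * (n - v) + exNum (n - v) F := by
        omega
end

section
/- Let r ≥ 3 and n ≥ r. Let G be the graph on n vertices constructed as follows: take vertices v_1,…,v_r forming a complete graph K_r; partition the remaining n−r vertices into classes V_1,…,V_{r−1}; join every pair of vertices lying in different classes V_i, V_j; and join each vertex of V_i (for 1 ≤ i ≤ r−1) to every vertex v_j with j ∉ {i, i+1}. Then G contains exactly one subgraph isomorphic to K_r, namely the one on {v_1,…,v_r}. -/
open SimpleGraph

/-- The construction of Theorem `klikk`: the vertices `v_1, …, v_r` (modelled by `Fin r`,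
zero-indexed) form a complete graph `K_r`; the remaining `n − r` vertices (modelled by
`Fin (n−r)`) are partitioned into classes `V_1, …, V_{r−1}` by the classifying map
`cl : Fin (n−r) → Fin (r−1)` (zero-indexed); every two vertices in different classes are
joined; and each vertex of class `V_i` is joined to every `v_j` with `j ∉ {i, i+1}`. -/
def klikkGraph (r n : ℕ) (cl : Fin (n - r) → Fin (r - 1)) :
    SimpleGraph (Fin r ⊕ Fin (n - r)) :=
  SimpleGraph.fromRel (fun x y =>
    match x, y with
    | Sum.inl _, Sum.inl _ => True
    | Sum.inr u, Sum.inr w => (cl u : ℕ) ≠ (cl w : ℕ)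
    | Sum.inl j, Sum.inr u => (j : ℕ) ≠ (cl u : ℕ) ∧ (j : ℕ) ≠ (cl u : ℕ) + 1
    | Sum.inr u, Sum.inl j => (j : ℕ) ≠ (cl u : ℕ) ∧ (j : ℕ) ≠ (cl u : ℕ) + 1)

/-- for `r ≥ 3` and `n ≥ r`, the above graph contains exactly one subgraph
isomorphic to `K_r`, namely the one on the vertices `v_1, …, v_r`. -/
theorem stmt7 (r n : ℕ) (hr : 3 ≤ r) (hn : r ≤ n) (cl : Fin (n - r) → Fin (r - 1)) :
    _root_.copyCount (klikkGraph r n cl) (⊤ : SimpleGraph (Fin r)) = 1 ∧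
    (∀ H : (klikkGraph r n cl).Subgraph,
      Nonempty (H.coe ≃g (⊤ : SimpleGraph (Fin r))) → H.verts = Set.range Sum.inl) := by
  classical
  -- adjacency characterizations
  have adj_ll : ∀ j k : Fin r, j ≠ k → (klikkGraph r n cl).Adj (Sum.inl j) (Sum.inl k) := by
    intro j k h
    simp [klikkGraph, SimpleGraph.fromRel_adj, h]
  have adj_lr : ∀ (j : Fin r) (u : Fin (n - r)),
      (klikkGraph r n cl).Adj (Sum.inl j) (Sum.inr u) ↔
        ((j : ℕ) ≠ (cl u : ℕ) ∧ (j : ℕ) ≠ (cl u : ℕ) + 1) := by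
    intro j u
    simp [klikkGraph, SimpleGraph.fromRel_adj]
  have adj_rr : ∀ u w : Fin (n - r),
      (klikkGraph r n cl).Adj (Sum.inr u) (Sum.inr w) → (cl u : ℕ) ≠ (cl w : ℕ) := by
    intro u w h
    rw [klikkGraph, SimpleGraph.fromRel_adj] at h
    rcases h with ⟨-, h | h⟩
    · exact h
    · exact h.symm
  -- Key combinatorial lemma: any r-clique is exactly the inl part
  have clique_lem : ∀ S : Finset (Fin r ⊕ Fin (n - r)), S.card = r →
      (∀ x ∈ S, ∀ y ∈ S, x ≠ y → (klikkGraph r n cl).Adj x y) →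
      (S : Set (Fin r ⊕ Fin (n - r))) = Set.range Sum.inl := by
    intro S hcard hadj
    set A := S.toLeft with hA
    set B := S.toRight with hBdef
    have hAB : A.card + B.card = r := by
      rw [hA, hBdef, Finset.card_toLeft_add_card_toRight, hcard]
    have hBempty : B = ∅ := by
      by_contra hB
      have hBne : B.Nonempty := Finset.nonempty_of_ne_empty hB
      set C : Finset ℕ := B.image (fun u => (cl u : ℕ)) with hC
      have hCcard : C.card = B.card := by
        rw [hC]
        apply Finset.card_image_of_injOn
        intro u hu w hw huw
        by_contra hne
        exact adj_rr u w (hadj _ (Finset.mem_toRight.mp hu) _ (Finset.mem_toRight.mp hw)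
          (by simpa using hne)) huw
      have hCne : C.Nonempty := hBne.image _
      set m := C.max' hCne with hm
      have hmC : m ∈ C := C.max'_mem hCne
      obtain ⟨u₀, hu₀B, hu₀m⟩ := Finset.mem_image.mp hmC
      have hCsub : insert (m + 1) C ⊆ Finset.range r := by
        intro x hx
        rcases Finset.mem_insert.mp hx with rfl | hx
        · rw [← hu₀m]
          have := (cl u₀).isLt
          simp only [Finset.mem_range]
          omega
        · obtain ⟨u, -, rfl⟩ := Finset.mem_image.mp hx
          have := (cl u).isLt
          simp only [Finset.mem_range]
          omega
      have hmnot : m + 1 ∉ C := by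
        intro h
        have := C.le_max' _ h
        omega
      have hAsub : A.image (fun j : Fin r => (j : ℕ)) ⊆
          Finset.range r \ insert (m + 1) C := by
        intro x hx
        obtain ⟨j, hjA, rfl⟩ := Finset.mem_image.mp hx
        have hjS : Sum.inl j ∈ S := Finset.mem_toLeft.mp hjA
        have hadj' : ∀ u ∈ B, (j : ℕ) ≠ (cl u : ℕ) ∧ (j : ℕ) ≠ (cl u : ℕ) + 1 := by
          intro u huB
          exact (adj_lr j u).mp (hadj _ hjS _ (Finset.mem_toRight.mp huB) (by simp))
        rw [Finset.mem_sdiff]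
        constructor
        · simpa using j.isLt
        · intro hcon
          rcases Finset.mem_insert.mp hcon with h | h
          · exact (hadj' u₀ hu₀B).2 (by rw [h, hu₀m])
          · obtain ⟨u, huB, hcu⟩ := Finset.mem_image.mp h
            exact (hadj' u huB).1 hcu.symm
      have hAcard : A.card ≤ r - (B.card + 1) := by
        have h1 : (A.image (fun j : Fin r => (j : ℕ))).card = A.card :=
          Finset.card_image_of_injective _ Fin.val_injective
        have h2 := Finset.card_le_card hAsub
        rw [Finset.card_sdiff_of_subset hCsub, Finset.card_insert_of_notMem hmnot,
          Finset.card_range, hCcard] at h2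
        omega
      have hBle : B.card ≤ r - 1 := by
        have : C ⊆ Finset.range (r - 1) := by
          intro x hx
          obtain ⟨u, -, rfl⟩ := Finset.mem_image.mp hx
          simpa using (cl u).isLt
        have := Finset.card_le_card this
        rw [Finset.card_range, hCcard] at this
        exact this
      omega
    -- B empty: S is the inl part
    have hAcard : A.card = r := by
      rw [hBempty] at hAB
      simpa using hAB
    have hAuniv : A = Finset.univ := Finset.eq_univ_of_card A (by simp [hAcard])
    ext x
    constructor
    · intro hx
      cases x with
      | inl j => exact ⟨j, rfl⟩
      | inr u =>
        exfalso
        have : u ∈ B := Finset.mem_toRight.mpr hx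
        rw [hBempty] at this
        simp at this
    · rintro ⟨j, rfl⟩
      have hjA : j ∈ A := by rw [hAuniv]; exact Finset.mem_univ j
      exact Finset.mem_toLeft.mp hjA
  -- Second part: any subgraph isomorphic to K_r has verts = range inl
  have part2 : ∀ H : (klikkGraph r n cl).Subgraph,
      Nonempty (H.coe ≃g (⊤ : SimpleGraph (Fin r))) → H.verts = Set.range Sum.inl := by
    intro H ⟨e⟩
    have hfin : H.verts.Finite := Set.finite_coe_iff.mp (Finite.of_equiv _ e.toEquiv.symm)
    set S := hfin.toFinset with hS
    have hScard : S.card = r := by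
      have h2 : Nat.card H.verts = r := Nat.card_eq_of_equiv_fin e.toEquiv
      rw [hS, ← Set.ncard_eq_toFinset_card _ hfin, ← Nat.card_coe_set_eq, h2]
    have hSadj : ∀ x ∈ S, ∀ y ∈ S, x ≠ y → (klikkGraph r n cl).Adj x y := by
      intro x hx y hy hxy
      rw [hS, Set.Finite.mem_toFinset] at hx hy
      have hne : e ⟨x, hx⟩ ≠ e ⟨y, hy⟩ := by
        intro h
        exact hxy (congrArg Subtype.val (e.toEquiv.injective h))
      have : H.coe.Adj ⟨x, hx⟩ ⟨y, hy⟩ := e.map_rel_iff.mp (by simpa using hne)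
      exact H.adj_sub this
    have := clique_lem S hScard hSadj
    rw [hS, Set.Finite.coe_toFinset] at this
    exact this
  refine ⟨?_, part2⟩
  -- First part: exactly one copy
  set H₀ : (klikkGraph r n cl).Subgraph :=
    { verts := Set.range Sum.inl
      Adj := fun x y => x ∈ Set.range (Sum.inl : Fin r → Fin r ⊕ Fin (n - r)) ∧
        y ∈ Set.range (Sum.inl : Fin r → Fin r ⊕ Fin (n - r)) ∧ x ≠ y
      adj_sub := by
        rintro x y ⟨⟨j, rfl⟩, ⟨k, rfl⟩, hne⟩
        exact adj_ll j k (fun h => hne (by rw [h]))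
      edge_vert := fun h => h.1
      symm := ⟨fun x y ⟨h1, h2, h3⟩ => ⟨h2, h1, h3.symm⟩⟩ } with hH₀
  have hH₀mem : Nonempty (H₀.coe ≃g (⊤ : SimpleGraph (Fin r))) := by
    let eqv : ↥H₀.verts ≃ Fin r := (Equiv.ofInjective Sum.inl Sum.inl_injective).symm
    refine ⟨⟨eqv, ?_⟩⟩
    intro a b
    show eqv a ≠ eqv b ↔ H₀.Adj ↑a ↑b
    constructor
    · intro h
      exact ⟨a.2, b.2, fun hab => h (congrArg eqv (Subtype.ext hab))⟩
    · rintro ⟨-, -, hab⟩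
      intro h
      exact hab (congrArg Subtype.val (eqv.injective h))
  have hset : {H : (klikkGraph r n cl).Subgraph | Nonempty (H.coe ≃g (⊤ : SimpleGraph (Fin r)))}
      = {H₀} := by
    ext H
    simp only [Set.mem_setOf_eq, Set.mem_singleton_iff]
    constructor
    · intro hH
      obtain ⟨e⟩ := hH
      have hverts : H.verts = Set.range Sum.inl := part2 H ⟨e⟩
      apply SimpleGraph.Subgraph.ext
      · rw [hverts]
      · ext x y
        constructor
        · intro h
          exact ⟨hverts ▸ H.edge_vert h, hverts ▸ H.edge_vert h.symm, h.ne⟩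
        · rintro ⟨hx, hy, hxy⟩
          rw [← hverts] at hx hy
          have hne : e ⟨x, hx⟩ ≠ e ⟨y, hy⟩ := by
            intro h
            exact hxy (congrArg Subtype.val (e.toEquiv.injective h))
          have : H.coe.Adj ⟨x, hx⟩ ⟨y, hy⟩ := e.map_rel_iff.mp (by simpa using hne)
          exact this
    · rintro rfl
      exact hH₀mem
  rw [_root_.copyCount, hset, Set.ncard_singleton]
end

section
/- For every integer k ≥ 1 there exists N such that for all n ≥ N, exa_k(n,K_3) = ⌊(n−1)²/4⌋ + k + 1; that is, every graph on n vertices containing exactly k triangles has at most ⌊(n−1)²/4⌋ + k + 1 edges, and some graph on n vertices with exactly k triangles attains this number of edges. -/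
open SimpleGraph

open Finset


/-- `a*b ≤ (a+b)^2/4`. -/
lemma prod_le_q (a b : ℕ) : a * b ≤ (a + b) ^ 2 / 4 := by
  rw [Nat.le_div_iff_mul_le (by norm_num)]
  nlinarith [sq_nonneg (a - b : ℤ), sq_nonneg ((a:ℤ) - b)]

/-- `(m+1)^2/4 = m^2/4 + (m+1)/2`. -/
lemma q_step (m : ℕ) : (m + 1) ^ 2 / 4 = m ^ 2 / 4 + (m + 1) / 2 := by
  rcases Nat.even_or_odd m with ⟨t, ht⟩ | ⟨t, ht⟩
  · subst ht
    have h1 : (t + t + 1) ^ 2 = (t ^ 2 + t) * 4 + 1 := by ring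
    have h2 : (t + t) ^ 2 = t ^ 2 * 4 := by ring
    have h3 : t + t + 1 = t * 2 + 1 := by ring
    rw [h1, h2, h3]
    omega
  · subst ht
    have h1 : (2 * t + 1 + 1) ^ 2 = (t ^ 2 + 2 * t + 1) * 4 := by ring
    have h2 : (2 * t + 1) ^ 2 = (t ^ 2 + t) * 4 + 1 := by ring
    have h3 : 2 * t + 1 + 1 = (t + 1) * 2 := by ring
    rw [h1, h2, h3]
    omega

/-- `(m/2) * (m - m/2) = m^2/4`. -/
lemma half_prod (m : ℕ) : (m / 2) * (m - m / 2) = m ^ 2 / 4 := by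
  rcases Nat.even_or_odd m with ⟨t, ht⟩ | ⟨t, ht⟩
  · subst ht
    have h2 : (t + t) ^ 2 = t ^ 2 * 4 := by ring
    have h3 : (t + t) / 2 = t := by omega
    rw [h2, h3]
    have : t + t - t = t := by omega
    rw [this]
    have h4 : t ^ 2 * 4 / 4 = t ^ 2 := by omega
    rw [h4]
    ring
  · subst ht
    have h2 : (2 * t + 1) ^ 2 = (t ^ 2 + t) * 4 + 1 := by ring
    have h3 : (2 * t + 1) / 2 = t := by omega
    rw [h2, h3]
    have : 2 * t + 1 - t = t + 1 := by omega
    rw [this]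
    have : (t ^ 2 + t) * 4 + 1 = ((t^2 + t)) * 4 + 1 := rfl
    calc t * (t+1) = t^2 + t := by ring
    _ = ((t ^ 2 + t) * 4 + 1) / 4 := by omega


/-- the subgraph induced by a finset, with all G-edges inside. -/
def triSub {V : Type*} (G : SimpleGraph V) (s : Finset V) : G.Subgraph where
  verts := ↑s
  Adj a b := G.Adj a b ∧ a ∈ s ∧ b ∈ s
  adj_sub h := h.1
  edge_vert h := h.2.1
  symm := ⟨fun a b h => ⟨h.1.symm, h.2.2, h.2.1⟩⟩

@[simp] lemma triSub_adj {V : Type*} (G : SimpleGraph V) (s : Finset V) (a b : V) :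
    (triSub G s).Adj a b ↔ G.Adj a b ∧ a ∈ s ∧ b ∈ s := Iff.rfl

lemma copyCount_eq_card_cliqueFinset {V : Type*} [Fintype V] [DecidableEq V]
    (G : SimpleGraph V) [DecidableRel G.Adj] :
    _root_.copyCount G (⊤ : SimpleGraph (Fin 3)) = (G.cliqueFinset 3).card := by
  classical
  have himg : {H : G.Subgraph | Nonempty (H.coe ≃g (⊤ : SimpleGraph (Fin 3)))}
      = (fun s => triSub G s) '' ↑(G.cliqueFinset 3) := by
    ext H
    simp only [Set.mem_setOf_eq, Set.mem_image, Finset.mem_coe, mem_cliqueFinset_iff]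
    constructor
    · rintro ⟨e⟩
      -- H.verts is finite with 3 elements
      set x0 : V := ((e.symm 0 : H.verts) : V) with hx0
      set x1 : V := ((e.symm 1 : H.verts) : V) with hx1
      set x2 : V := ((e.symm 2 : H.verts) : V) with hx2
      have hv0 : x0 ∈ H.verts := (e.symm 0).2
      have hv1 : x1 ∈ H.verts := (e.symm 1).2
      have hv2 : x2 ∈ H.verts := (e.symm 2).2
      have hinj : ∀ i j : Fin 3, i ≠ j → (e.symm i : V) ≠ (e.symm j : V) := by
        intro i j hij hc
        exact hij (by simpa using e.symm.injective (Subtype.ext hc))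
      have hne01 : x0 ≠ x1 := hinj 0 1 (by decide)
      have hne02 : x0 ≠ x2 := hinj 0 2 (by decide)
      have hne12 : x1 ≠ x2 := hinj 1 2 (by decide)
      have hverts : H.verts = ↑({x0, x1, x2} : Finset V) := by
        ext v
        simp only [Finset.coe_insert, Set.mem_insert_iff, Finset.coe_singleton,
          Set.mem_singleton_iff]
        constructor
        · intro hv
          have : e ⟨v, hv⟩ = 0 ∨ e ⟨v, hv⟩ = 1 ∨ e ⟨v, hv⟩ = 2 := by
            have := (e ⟨v, hv⟩).2; omega
          rcases this with h | h | h
          · left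
            have : e.symm (e ⟨v, hv⟩) = e.symm 0 := by rw [h]
            rw [e.symm_apply_apply] at this
            exact congrArg Subtype.val this
          · right; left
            have : e.symm (e ⟨v, hv⟩) = e.symm 1 := by rw [h]
            rw [e.symm_apply_apply] at this
            exact congrArg Subtype.val this
          · right; right
            have : e.symm (e ⟨v, hv⟩) = e.symm 2 := by rw [h]
            rw [e.symm_apply_apply] at this
            exact congrArg Subtype.val this
        · rintro (rfl | rfl | rfl) <;> assumption
      -- adjacency of distinct vertices
      have hadj : ∀ (a b : V) (ha : a ∈ H.verts) (hb : b ∈ H.verts), a ≠ b → H.Adj a b := by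
        intro a b ha hb hab
        have h1 : (⟨a, ha⟩ : H.verts) ≠ ⟨b, hb⟩ := fun hc => hab (congrArg Subtype.val hc)
        have h2 : e ⟨a, ha⟩ ≠ e ⟨b, hb⟩ := fun hc => h1 (e.injective hc)
        have h3 : (⊤ : SimpleGraph (Fin 3)).Adj (e ⟨a, ha⟩) (e ⟨b, hb⟩) := h2
        have h4 : H.coe.Adj ⟨a, ha⟩ ⟨b, hb⟩ := e.map_rel_iff.mp h3
        exact h4
      refine ⟨{x0, x1, x2}, ⟨?_, ?_⟩, ?_⟩
      · intro a ha b hb hab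
        have ha' : a ∈ H.verts := by rw [hverts]; exact ha
        have hb' : b ∈ H.verts := by rw [hverts]; exact hb
        exact H.adj_sub (hadj a b ha' hb' hab)
      · rw [Finset.card_insert_of_notMem (by simp [hne01, hne02]),
          Finset.card_insert_of_notMem (by simp [hne12]), Finset.card_singleton]
      · -- H = triSub G {x0,x1,x2}
        apply SimpleGraph.Subgraph.ext
        · rw [hverts]; rfl

        · ext a b
          simp only [eq_iff_iff, triSub_adj]
          constructor
          · rintro ⟨hG, ha, hb⟩
            have ha' : a ∈ H.verts := by rw [hverts]; exact ha
            have hb' : b ∈ H.verts := by rw [hverts]; exact hb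
            exact hadj a b ha' hb' hG.ne
          · intro h
            refine ⟨H.adj_sub h, ?_, ?_⟩
            · have := H.edge_vert h
              rw [hverts] at this; exact this
            · have := H.edge_vert h.symm
              rw [hverts] at this; exact this
    · rintro ⟨s, hs, rfl⟩
      have hcard : s.card = 3 := hs.2
      have hcl : G.IsClique ↑s := hs.1
      refine ⟨?_⟩
      have equiv1 : {x // x ∈ s} ≃ Fin 3 := Finset.equivFinOfCardEq hcard
      refine ⟨equiv1, ?_⟩
      intro a b
      simp only [SimpleGraph.top_adj, SimpleGraph.Subgraph.coe_adj, triSub_adj]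
      constructor
      · intro h
        have hab : a ≠ b := fun hc => h (congrArg equiv1 hc)
        have hvab : (a : V) ≠ (b : V) := fun hc => hab (Subtype.ext hc)
        exact ⟨hcl a.2 b.2 hvab, a.2, b.2⟩
      · rintro ⟨hG, -, -⟩
        intro hc
        exact hG.ne (congrArg Subtype.val (equiv1.injective hc))
  rw [_root_.copyCount, himg, Set.ncard_image_of_injOn, Set.ncard_coe_finset]
  intro s hs t ht hst
  have : (↑s : Set V) = ↑t := congrArg SimpleGraph.Subgraph.verts hst
  exact_mod_cast this
section DelVert
variable {V : Type*} [DecidableEq V]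

/-- Graph with all edges at `w` removed. -/
def delVert (G : SimpleGraph V) (w : V) : SimpleGraph V where
  Adj a b := G.Adj a b ∧ a ≠ w ∧ b ≠ w
  symm := ⟨fun a b h => ⟨h.1.symm, h.2.2, h.2.1⟩⟩
  loopless := ⟨fun a h => G.loopless.irrefl a h.1⟩

instance (G : SimpleGraph V) [DecidableRel G.Adj] (w : V) :
    DecidableRel (delVert G w).Adj :=
  fun a b => inferInstanceAs (Decidable (G.Adj a b ∧ a ≠ w ∧ b ≠ w))

lemma delVert_le (G : SimpleGraph V) (w : V) : delVert G w ≤ G := fun _ _ h => h.1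

variable [Fintype V]

lemma delVert_card (G : SimpleGraph V) [DecidableRel G.Adj] (w : V) :
    G.edgeFinset.card = (delVert G w).edgeFinset.card + G.degree w := by
  have hsub : G.incidenceFinset w ⊆ G.edgeFinset := by
    intro e he
    rw [mem_incidenceFinset] at he
    exact mem_edgeFinset.mpr he.1
  have heq : (delVert G w).edgeFinset = G.edgeFinset \ G.incidenceFinset w := by
    ext e
    induction e with
    | _ a b =>
      rw [mem_edgeFinset]
      simp only [mem_edgeFinset, mem_edgeSet, Finset.mem_sdiff, mem_incidenceFinset,
        incidenceSet, Set.mem_setOf_eq, delVert, Sym2.mem_iff, mem_edgeSet]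
      constructor
      · rintro ⟨h, ha, hb⟩
        exact ⟨h, fun hc => by
          rcases hc.2 with rfl | rfl
          · exact ha rfl
          · exact hb rfl⟩
      · rintro ⟨h, hn⟩
        refine ⟨h, fun hc => hn ⟨h, by subst hc; left; rfl⟩,
          fun hc => hn ⟨h, by subst hc; right; rfl⟩⟩
  have hle : G.degree w ≤ G.edgeFinset.card := by
    rw [← G.card_incidenceFinset_eq_degree]
    exact Finset.card_le_card hsub
  rw [heq, Finset.card_sdiff_of_subset hsub, G.card_incidenceFinset_eq_degree]
  omega

end DelVert

section Cross
variable {V : Type*} [Fintype V] [DecidableEq V]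

lemma cross_count (G : SimpleGraph V) [DecidableRel G.Adj] (X Y : Finset V)
    (bad : Finset (V × V))
    (hXY : ∀ u v, G.Adj u v → (u ∈ X ∧ v ∈ Y) ∨ (v ∈ X ∧ u ∈ Y))
    (hbad : bad ⊆ X ×ˢ Y) (hnadj : ∀ p ∈ bad, ¬G.Adj p.1 p.2) :
    G.edgeFinset.card + bad.card ≤ X.card * Y.card := by
  have hsub : G.edgeFinset ⊆ ((X ×ˢ Y) \ bad).image (fun p => s(p.1, p.2)) := by
    intro e he
    induction e with
    | _ u v =>
      rw [mem_edgeFinset, mem_edgeSet] at he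
      rcases hXY u v he with ⟨hu, hv⟩ | ⟨hv, hu⟩
      · exact Finset.mem_image.mpr ⟨(u, v), Finset.mem_sdiff.mpr
          ⟨Finset.mem_product.mpr ⟨hu, hv⟩, fun hc => hnadj _ hc he⟩, rfl⟩
      · exact Finset.mem_image.mpr ⟨(v, u), Finset.mem_sdiff.mpr
          ⟨Finset.mem_product.mpr ⟨hv, hu⟩, fun hc => hnadj _ hc he.symm⟩, Sym2.eq_swap⟩
  calc G.edgeFinset.card + bad.card
      ≤ (((X ×ˢ Y) \ bad).image (fun p => s(p.1, p.2))).card + bad.card :=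
        Nat.add_le_add_right (Finset.card_le_card hsub) _
    _ ≤ ((X ×ˢ Y) \ bad).card + bad.card :=
        Nat.add_le_add_right Finset.card_image_le _
    _ = (X ×ˢ Y).card := by rw [Finset.card_sdiff_add_card_eq_card hbad]
    _ = X.card * Y.card := Finset.card_product X Y

lemma triangle_of_common (G : SimpleGraph V) (hfree : G.CliqueFree 3) {u v x : V}
    (huv : G.Adj u v) (hux : G.Adj u x) (hvx : G.Adj v x) : False := by
  classical
  exact hfree {u, v, x} (SimpleGraph.is3Clique_iff.mpr ⟨u, v, x, huv, hux, hvx, rfl⟩)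

/-- triangle-free: neighborhoods of adjacent vertices are disjoint -/
lemma nbr_disjoint (G : SimpleGraph V) [DecidableRel G.Adj] (hfree : G.CliqueFree 3)
    {u v : V} (huv : G.Adj u v) :
    Disjoint (G.neighborFinset u) (G.neighborFinset v) := by
  rw [Finset.disjoint_left]
  intro x hxu hxv
  rw [mem_neighborFinset] at hxu hxv
  exact triangle_of_common G hfree huv hxu hxv

end Cross

/-- A triangle-free graph supported in `U` has at most `(|U|-1)²/4 + 1` edges or is bipartite. -/
lemma bigLemma : ∀ (n : ℕ) {V : Type*} [Fintype V] [DecidableEq V]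
    (U : Finset V) (G : SimpleGraph V) [DecidableRel G.Adj], U.card = n →
    G.CliqueFree 3 → (∀ u v, G.Adj u v → u ∈ U ∧ v ∈ U) →
    G.edgeFinset.card ≤ (n - 1) ^ 2 / 4 + 1 ∨
      ∃ S : Finset V, ∀ u v, G.Adj u v → (u ∈ S ↔ v ∉ S) := by
  intro n
  induction n using Nat.strong_induction_on with
  | _ n IH =>
    intro V _ _ U G _ hcard hfree hsupp
    by_cases hle : G.edgeFinset.card ≤ (n - 1) ^ 2 / 4 + 1
    · exact Or.inl hle
    push_neg at hle
    -- there is an edge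
    have hne : G.edgeFinset.Nonempty := by
      rw [← Finset.card_pos]; omega
    obtain ⟨e, he⟩ := hne
    obtain ⟨u₀, v₀, rfl⟩ : ∃ a b, e = s(a, b) := ⟨e.out.1, e.out.2, e.out_eq.symm⟩
    rw [mem_edgeFinset, mem_edgeSet] at he
    have hu₀U := (hsupp _ _ he).1
    have hv₀U := (hsupp _ _ he).2
    have hn2 : 2 ≤ n := by
      rw [← hcard]
      have : ({u₀, v₀} : Finset V) ⊆ U := by
        intro x hx; rcases Finset.mem_insert.mp hx with rfl | hx
        · exact hu₀U
        · rw [Finset.mem_singleton] at hx; subst hx; exact hv₀U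
      calc 2 = ({u₀, v₀} : Finset V).card := by
              rw [Finset.card_insert_of_notMem (by simp [he.ne]), Finset.card_singleton]
        _ ≤ U.card := Finset.card_le_card this
    by_cases hlow : ∃ w ∈ U, G.degree w ≤ (n - 1) / 2
    · obtain ⟨w, hwU, hdeg⟩ := hlow
      have hsupp' : ∀ u v, (delVert G w).Adj u v → u ∈ U.erase w ∧ v ∈ U.erase w := by
        intro u v h
        exact ⟨Finset.mem_erase.mpr ⟨h.2.1, (hsupp u v h.1).1⟩,
          Finset.mem_erase.mpr ⟨h.2.2, (hsupp u v h.1).2⟩⟩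
      have hcard' : (U.erase w).card = n - 1 := by rw [Finset.card_erase_of_mem hwU, hcard]
      have hfree' : (delVert G w).CliqueFree 3 := hfree.anti (delVert_le G w)
      rcases IH (n - 1) (by omega) (U.erase w) (delVert G w) hcard' hfree' hsupp' with h1 | ⟨S, hS⟩
      · -- low edge count: e(G) ≤ bound, contradiction-free: just return left
        left
        have := delVert_card G w
        have hq : (n - 1) ^ 2 / 4 = (n - 1 - 1) ^ 2 / 4 + (n - 1) / 2 := by
          have := q_step (n - 2)
          have h2 : n - 2 + 1 = n - 1 := by omega
          have h3 : n - 1 - 1 = n - 2 := by omega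
          rw [h2] at this; rw [h3]; omega
        omega
      · -- delVert bipartite via S
        by_cases hwS : ∀ x, G.Adj w x → x ∉ S
        · right
          refine ⟨insert w S, fun u v huv => ?_⟩
          rcases eq_or_ne u w with rfl | hu
          · have hv : v ∉ S := hwS v huv
            simp [huv.ne', hv]
          · rcases eq_or_ne v w with rfl | hv
            · have hu' : u ∉ S := hwS u huv.symm
              simp [hu', huv.ne]
            · have := hS u v ⟨huv, hu, hv⟩
              simp [hu, hv, this]
        · by_cases hwS2 : ∀ x, G.Adj w x → x ∈ S
          · right
            refine ⟨S.erase w, fun u v huv => ?_⟩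
            rcases eq_or_ne u w with rfl | hu
            · have hv : v ∈ S := hwS2 v huv
              simp [huv.ne', hv]
            · rcases eq_or_ne v w with rfl | hv
              · have hu' : u ∈ S := hwS2 u huv.symm
                simp [hu', huv.ne]
              · have := hS u v ⟨huv, hu, hv⟩
                simp [hu, hv, this]
          · -- w has neighbors on both sides: count
            left
            push_neg at hwS hwS2
            obtain ⟨a, haw, haS⟩ := hwS
            obtain ⟨b, hbw, hbS⟩ := hwS2
            set X := (U.erase w) ∩ S with hX
            set Y := (U.erase w) \ S with hY
            set bad := (G.neighborFinset w ∩ S) ×ˢ (G.neighborFinset w \ S) with hbad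
            have hcc := cross_count (delVert G w) X Y bad ?_ ?_ ?_
            · have hXY : X.card + Y.card = n - 1 := by
                rw [hX, hY, Finset.card_inter_add_card_sdiff, hcard']
              have hprod : X.card * Y.card ≤ (n - 1) ^ 2 / 4 := by
                have := prod_le_q X.card Y.card
                rw [hXY] at this; exact this
              have hbadcard : bad.card =
                  (G.neighborFinset w ∩ S).card * (G.neighborFinset w \ S).card := by
                rw [hbad, Finset.card_product]
              have hp1 : 1 ≤ (G.neighborFinset w ∩ S).card := by
                rw [Nat.one_le_iff_ne_zero, ← Nat.pos_iff_ne_zero, Finset.card_pos]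
                exact ⟨a, Finset.mem_inter.mpr ⟨(mem_neighborFinset G w a).mpr haw, haS⟩⟩
              have hp2 : 1 ≤ (G.neighborFinset w \ S).card := by
                rw [Nat.one_le_iff_ne_zero, ← Nat.pos_iff_ne_zero, Finset.card_pos]
                exact ⟨b, Finset.mem_sdiff.mpr ⟨(mem_neighborFinset G w b).mpr hbw, hbS⟩⟩
              have hsum : (G.neighborFinset w ∩ S).card + (G.neighborFinset w \ S).card
                  = G.degree w := by
                rw [Finset.card_inter_add_card_sdiff, ← SimpleGraph.card_neighborFinset_eq_degree]
              have hineq : G.degree w ≤ bad.card + 1 := by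
                rw [hbadcard, ← hsum]
                obtain ⟨x, hx⟩ := Nat.exists_eq_add_of_le hp1
                obtain ⟨y, hy⟩ := Nat.exists_eq_add_of_le hp2
                rw [hx, hy]
                ring_nf
                omega
              have := delVert_card G w
              omega
            · -- hXY for delVert
              intro u v huv
              have hu := (hsupp' u v huv).1
              have hv := (hsupp' u v huv).2
              have := hS u v huv
              by_cases huS : u ∈ S
              · exact Or.inl ⟨Finset.mem_inter.mpr ⟨hu, huS⟩,
                  Finset.mem_sdiff.mpr ⟨hv, (this.mp huS)⟩⟩
              · have hvS : v ∈ S := by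
                  by_contra hvS
                  exact huS (this.mpr hvS)
                exact Or.inr ⟨Finset.mem_inter.mpr ⟨hv, hvS⟩,
                  Finset.mem_sdiff.mpr ⟨hu, huS⟩⟩
            · -- bad ⊆ X ×ˢ Y
              intro p hp
              rw [hbad, Finset.mem_product] at hp
              obtain ⟨h1, h2⟩ := hp
              rw [Finset.mem_inter, mem_neighborFinset] at h1
              rw [Finset.mem_sdiff, mem_neighborFinset] at h2
              rw [Finset.mem_product]
              constructor
              · exact Finset.mem_inter.mpr ⟨Finset.mem_erase.mpr
                  ⟨h1.1.ne', (hsupp _ _ h1.1).2⟩, h1.2⟩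
              · exact Finset.mem_sdiff.mpr ⟨Finset.mem_erase.mpr
                  ⟨h2.1.ne', (hsupp _ _ h2.1).2⟩, h2.2⟩
            · -- bad pairs non-adjacent
              intro p hp hadj
              rw [hbad, Finset.mem_product] at hp
              obtain ⟨h1, h2⟩ := hp
              rw [Finset.mem_inter, mem_neighborFinset] at h1
              rw [Finset.mem_sdiff, mem_neighborFinset] at h2
              exact triangle_of_common G hfree h1.1 h2.1 hadj.1
    · -- all degrees in U large
      push_neg at hlow
      have hdu := hlow u₀ hu₀U
      have hdv := hlow v₀ hv₀U
      have hdisj := nbr_disjoint G hfree he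
      have hsub : G.neighborFinset u₀ ∪ G.neighborFinset v₀ ⊆ U := by
        intro x hx
        rcases Finset.mem_union.mp hx with hx | hx
        · exact (hsupp _ _ ((mem_neighborFinset G u₀ x).mp hx)).2
        · exact (hsupp _ _ ((mem_neighborFinset G v₀ x).mp hx)).2
      have hcsum : G.degree u₀ + G.degree v₀ ≤ n := by
        calc G.degree u₀ + G.degree v₀
            = (G.neighborFinset u₀ ∪ G.neighborFinset v₀).card := by
              rw [Finset.card_union_of_disjoint hdisj,
                SimpleGraph.card_neighborFinset_eq_degree,
                SimpleGraph.card_neighborFinset_eq_degree]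
          _ ≤ U.card := Finset.card_le_card hsub
          _ = n := hcard
      have hUeq : G.neighborFinset u₀ ∪ G.neighborFinset v₀ = U := by
        apply Finset.eq_of_subset_of_card_le hsub
        rw [hcard, Finset.card_union_of_disjoint hdisj,
          SimpleGraph.card_neighborFinset_eq_degree, SimpleGraph.card_neighborFinset_eq_degree]
        omega
      right
      refine ⟨G.neighborFinset u₀, fun x y hxy => ?_⟩
      constructor
      · intro hxS hyS
        rw [mem_neighborFinset] at hxS hyS
        exact triangle_of_common G hfree hxS hyS hxy
      · intro hyS
        by_contra hxS
        have hxU : x ∈ U := (hsupp _ _ hxy).1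
        have hyU : y ∈ U := (hsupp _ _ hxy).2
        rw [← hUeq, Finset.mem_union] at hxU hyU
        have hx' : x ∈ G.neighborFinset v₀ := hxU.resolve_left hxS
        have hy' : y ∈ G.neighborFinset v₀ := hyU.resolve_left hyS
        rw [mem_neighborFinset] at hx' hy'
        exact triangle_of_common G hfree hx' hy' hxy

section UPair
variable {V : Type*} [DecidableEq V]

lemma pair_eq {a b c d : V} (hab : a ≠ b) (h : ({a, b} : Finset V) = {c, d}) :
    s(a, b) = s(c, d) := by
  have hc : c ∈ ({a, b} : Finset V) := by rw [h]; simp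
  have hd : d ∈ ({a, b} : Finset V) := by rw [h]; simp
  have ha : a ∈ ({c, d} : Finset V) := by rw [← h]; simp
  have hb : b ∈ ({c, d} : Finset V) := by rw [← h]; simp
  simp only [Finset.mem_insert, Finset.mem_singleton] at hc hd ha hb
  rcases hc with rfl | rfl
  · rcases hd with rfl | rfl
    · exact absurd (hb.elim id id) hab.symm
    · rfl
  · rcases hd with rfl | rfl
    · exact Sym2.eq_swap
    · exact absurd (ha.elim id id) hab

/-- In a 3-set `t` that is not monochromatic w.r.t. `S`, any two same-side pairs
with distinct endpoints inside `t` coincide. -/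
lemma unique_pair (S : Finset V) (t : Finset V) (ht3 : t.card = 3)
    (hmono : ¬((∀ x ∈ t, x ∈ S) ∨ (∀ x ∈ t, x ∉ S)))
    {a b c d : V} (hab : a ≠ b) (hcd : c ≠ d)
    (hat : a ∈ t) (hbt : b ∈ t) (hct : c ∈ t) (hdt : d ∈ t)
    (hs1 : a ∈ S ↔ b ∈ S) (hs2 : c ∈ S ↔ d ∈ S) :
    s(a, b) = s(c, d) := by
  obtain ⟨hm1, hm2⟩ := not_or.mp hmono
  have h1 : 1 ≤ (t ∩ S).card := by
    push_neg at hm2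
    obtain ⟨x, hx, hxS⟩ := hm2
    exact Finset.card_pos.mpr ⟨x, Finset.mem_inter.mpr ⟨hx, hxS⟩⟩
  have h2 : 1 ≤ (t \ S).card := by
    push_neg at hm1
    obtain ⟨x, hx, hxS⟩ := hm1
    exact Finset.card_pos.mpr ⟨x, Finset.mem_sdiff.mpr ⟨hx, hxS⟩⟩
  have hsum : (t ∩ S).card + (t \ S).card = 3 := by
    rw [Finset.card_inter_add_card_sdiff, ht3]
  -- helper: a same-side pair lies in the doubleton side
  have key : ∀ x y : V, x ≠ y → x ∈ t → y ∈ t → (x ∈ S ↔ y ∈ S) →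
      ((t ∩ S).card = 2 ∧ ({x, y} : Finset V) = t ∩ S) ∨
      ((t \ S).card = 2 ∧ ({x, y} : Finset V) = t \ S) := by
    intro x y hxy hxt hyt hxyS
    by_cases hxS : x ∈ S
    · have hyS : y ∈ S := hxyS.mp hxS
      have hsub : ({x, y} : Finset V) ⊆ t ∩ S := by
        intro z hz
        rcases Finset.mem_insert.mp hz with rfl | hz
        · exact Finset.mem_inter.mpr ⟨hxt, hxS⟩
        · rw [Finset.mem_singleton] at hz; subst hz
          exact Finset.mem_inter.mpr ⟨hyt, hyS⟩
      have hc2 : ({x, y} : Finset V).card = 2 := by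
        rw [Finset.card_insert_of_notMem (by simp [hxy]), Finset.card_singleton]
      have hle : 2 ≤ (t ∩ S).card := hc2 ▸ Finset.card_le_card hsub
      have heq : (t ∩ S).card = 2 := by omega
      exact Or.inl ⟨heq, Finset.eq_of_subset_of_card_le hsub (by omega)⟩
    · have hyS : y ∉ S := fun hy => hxS (hxyS.mpr hy)
      have hsub : ({x, y} : Finset V) ⊆ t \ S := by
        intro z hz
        rcases Finset.mem_insert.mp hz with rfl | hz
        · exact Finset.mem_sdiff.mpr ⟨hxt, hxS⟩
        · rw [Finset.mem_singleton] at hz; subst hz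
          exact Finset.mem_sdiff.mpr ⟨hyt, hyS⟩
      have hc2 : ({x, y} : Finset V).card = 2 := by
        rw [Finset.card_insert_of_notMem (by simp [hxy]), Finset.card_singleton]
      have hle : 2 ≤ (t \ S).card := hc2 ▸ Finset.card_le_card hsub
      have heq : (t \ S).card = 2 := by omega
      exact Or.inr ⟨heq, Finset.eq_of_subset_of_card_le hsub (by omega)⟩
  rcases key a b hab hat hbt hs1 with ⟨hq, he⟩ | ⟨hq, he⟩ <;>
    rcases key c d hcd hct hdt hs2 with ⟨hq', he'⟩ | ⟨hq', he'⟩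
  · exact pair_eq hab (he.trans he'.symm)
  · omega
  · omega
  · exact pair_eq hab (he.trans he'.symm)

end UPair

section Helpers
variable {V : Type*} [Fintype V] [DecidableEq V]

/-- counting bound using two vertices `u v ∈ A` of an in-part edge -/
lemma nonmono_bound (C G : SimpleGraph V) [DecidableRel C.Adj] [DecidableRel G.Adj]
    (A B : Finset V) (hCG : C ≤ G)
    (hCadj : ∀ x y, C.Adj x y → (x ∈ A ∧ y ∈ B) ∨ (y ∈ A ∧ x ∈ B))
    (u v : V) (huv : u ≠ v) (hu : u ∈ A) (hv : v ∈ A) (s₀ : ℕ)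
    (hcc : (G.neighborFinset u ∩ G.neighborFinset v ∩ B).card ≤ s₀) :
    C.edgeFinset.card + B.card ≤ A.card * B.card + s₀ := by
  set bad : Finset (V × V) :=
    ({u} ×ˢ (B \ G.neighborFinset u)) ∪ ({v} ×ˢ (B \ G.neighborFinset v)) with hbad
  have hdisj : Disjoint ({u} ×ˢ (B \ G.neighborFinset u)) ({v} ×ˢ (B \ G.neighborFinset v)) := by
    rw [Finset.disjoint_left]
    rintro ⟨p1, p2⟩ hp1 hp2
    rw [Finset.mem_product, Finset.mem_singleton] at hp1 hp2
    exact huv (hp1.1.symm.trans hp2.1)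
  have hbadcard : bad.card = (B.card - (G.neighborFinset u ∩ B).card)
      + (B.card - (G.neighborFinset v ∩ B).card) := by
    rw [hbad, Finset.card_union_of_disjoint hdisj, Finset.card_product, Finset.card_product]
    simp only [Finset.card_singleton, one_mul]
    have h1 : (B \ G.neighborFinset u).card = B.card - (G.neighborFinset u ∩ B).card := by
      rw [Finset.inter_comm, ← Finset.card_sdiff_add_card_inter B (G.neighborFinset u)]
      omega
    have h2 : (B \ G.neighborFinset v).card = B.card - (G.neighborFinset v ∩ B).card := by
      rw [Finset.inter_comm, ← Finset.card_sdiff_add_card_inter B (G.neighborFinset v)]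
      omega
    omega
  have hcc2 : (G.neighborFinset u ∩ B).card + (G.neighborFinset v ∩ B).card
      ≤ B.card + s₀ := by
    have hun : (G.neighborFinset u ∩ B) ∪ (G.neighborFinset v ∩ B) ⊆ B := by
      intro x hx
      rcases Finset.mem_union.mp hx with hx | hx
      · exact (Finset.mem_inter.mp hx).2
      · exact (Finset.mem_inter.mp hx).2
    have hint : (G.neighborFinset u ∩ B) ∩ (G.neighborFinset v ∩ B)
        = G.neighborFinset u ∩ G.neighborFinset v ∩ B := by
      ext x; simp only [Finset.mem_inter]; tauto
    have := Finset.card_union_add_card_inter (G.neighborFinset u ∩ B) (G.neighborFinset v ∩ B)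
    have hle := Finset.card_le_card hun
    rw [hint] at this
    omega
  have hXY := cross_count C A B bad hCadj ?_ ?_
  · have hb1 : (G.neighborFinset u ∩ B).card ≤ B.card :=
      Finset.card_le_card (Finset.inter_subset_right)
    have hb2 : (G.neighborFinset v ∩ B).card ≤ B.card :=
      Finset.card_le_card (Finset.inter_subset_right)
    omega
  · intro p hp
    rw [hbad, Finset.mem_union] at hp
    rcases hp with hp | hp <;> rw [Finset.mem_product, Finset.mem_singleton] at hp
    · rw [Finset.mem_product, hp.1]
      exact ⟨hu, (Finset.mem_sdiff.mp hp.2).1⟩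
    · rw [Finset.mem_product, hp.1]
      exact ⟨hv, (Finset.mem_sdiff.mp hp.2).1⟩
  · intro p hp hadj
    rw [hbad, Finset.mem_union] at hp
    rcases hp with hp | hp <;> rw [Finset.mem_product, Finset.mem_singleton] at hp <;>
      obtain ⟨h1, h2⟩ := hp
    · exact (Finset.mem_sdiff.mp h2).2 ((mem_neighborFinset G u p.2).mpr (h1 ▸ hCG hadj))
    · exact (Finset.mem_sdiff.mp h2).2 ((mem_neighborFinset G v p.2).mpr (h1 ▸ hCG hadj))

/-- counting bound using three vertices of a monochromatic triangle in `A` -/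
lemma mono_bound (C G : SimpleGraph V) [DecidableRel C.Adj] [DecidableRel G.Adj]
    (A B : Finset V) (hCG : C ≤ G)
    (hCadj : ∀ x y, C.Adj x y → (x ∈ A ∧ y ∈ B) ∨ (y ∈ A ∧ x ∈ B))
    (a b c : V) (hab : a ≠ b) (hac : a ≠ c) (hbc : b ≠ c)
    (ha : a ∈ A) (hb : b ∈ A) (hc : c ∈ A) (kk : ℕ)
    (hcc1 : (G.neighborFinset a ∩ G.neighborFinset b ∩ B).card ≤ kk)
    (hcc2 : (G.neighborFinset a ∩ G.neighborFinset c ∩ B).card ≤ kk)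
    (hcc3 : (G.neighborFinset b ∩ G.neighborFinset c ∩ B).card ≤ kk) :
    2 * C.edgeFinset.card + 3 * B.card ≤ 2 * (A.card * B.card) + 3 * kk := by
  have key : ∀ x y : V, x ≠ y → x ∈ A → y ∈ A →
      (G.neighborFinset x ∩ G.neighborFinset y ∩ B).card ≤ kk →
      (G.neighborFinset x ∩ B).card + (G.neighborFinset y ∩ B).card ≤ B.card + kk := by
    intro x y hxy hx hy hcc
    have hun : (G.neighborFinset x ∩ B) ∪ (G.neighborFinset y ∩ B) ⊆ B := by
      intro z hz
      rcases Finset.mem_union.mp hz with hz | hz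
      · exact (Finset.mem_inter.mp hz).2
      · exact (Finset.mem_inter.mp hz).2
    have hint : (G.neighborFinset x ∩ B) ∩ (G.neighborFinset y ∩ B)
        = G.neighborFinset x ∩ G.neighborFinset y ∩ B := by
      ext z; simp only [Finset.mem_inter]; tauto
    have := Finset.card_union_add_card_inter (G.neighborFinset x ∩ B) (G.neighborFinset y ∩ B)
    have hle := Finset.card_le_card hun
    rw [hint] at this
    omega
  set bad : Finset (V × V) :=
    ({a} ×ˢ (B \ G.neighborFinset a)) ∪ ({b} ×ˢ (B \ G.neighborFinset b))
      ∪ ({c} ×ˢ (B \ G.neighborFinset c)) with hbad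
  have hd1 : Disjoint ({a} ×ˢ (B \ G.neighborFinset a)) ({b} ×ˢ (B \ G.neighborFinset b)) := by
    rw [Finset.disjoint_left]
    rintro ⟨p1, p2⟩ hp1 hp2
    rw [Finset.mem_product, Finset.mem_singleton] at hp1 hp2
    exact hab (hp1.1.symm.trans hp2.1)
  have hd2 : Disjoint (({a} ×ˢ (B \ G.neighborFinset a)) ∪ ({b} ×ˢ (B \ G.neighborFinset b)))
      ({c} ×ˢ (B \ G.neighborFinset c)) := by
    rw [Finset.disjoint_left]
    rintro ⟨p1, p2⟩ hp1 hp2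
    rw [Finset.mem_product, Finset.mem_singleton] at hp2
    rcases Finset.mem_union.mp hp1 with hp | hp <;>
      rw [Finset.mem_product, Finset.mem_singleton] at hp
    · exact hac (hp.1.symm.trans hp2.1)
    · exact hbc (hp.1.symm.trans hp2.1)
  have hsdcard : ∀ x : V, (B \ G.neighborFinset x).card = B.card
      - (G.neighborFinset x ∩ B).card := by
    intro x
    rw [Finset.inter_comm, ← Finset.card_sdiff_add_card_inter B (G.neighborFinset x)]
    omega
  have hbadcard : bad.card = (B.card - (G.neighborFinset a ∩ B).card)
      + (B.card - (G.neighborFinset b ∩ B).card) + (B.card - (G.neighborFinset c ∩ B).card) := by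
    rw [hbad, Finset.card_union_of_disjoint hd2, Finset.card_union_of_disjoint hd1,
      Finset.card_product, Finset.card_product, Finset.card_product]
    simp only [Finset.card_singleton, one_mul]
    rw [hsdcard a, hsdcard b, hsdcard c]
  have hXY := cross_count C A B bad hCadj ?_ ?_
  · have hb1 : (G.neighborFinset a ∩ B).card ≤ B.card :=
      Finset.card_le_card (Finset.inter_subset_right)
    have hb2 : (G.neighborFinset b ∩ B).card ≤ B.card :=
      Finset.card_le_card (Finset.inter_subset_right)
    have hb3 : (G.neighborFinset c ∩ B).card ≤ B.card :=
      Finset.card_le_card (Finset.inter_subset_right)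
    have k1 := key a b hab ha hb hcc1
    have k2 := key a c hac ha hc hcc2
    have k3 := key b c hbc hb hc hcc3
    omega
  · intro p hp
    rw [hbad, Finset.mem_union] at hp
    rcases hp with hp | hp
    · rcases Finset.mem_union.mp hp with hp | hp <;>
        rw [Finset.mem_product, Finset.mem_singleton] at hp <;> rw [Finset.mem_product, hp.1]
      · exact ⟨ha, (Finset.mem_sdiff.mp hp.2).1⟩
      · exact ⟨hb, (Finset.mem_sdiff.mp hp.2).1⟩
    · rw [Finset.mem_product, Finset.mem_singleton] at hp
      rw [Finset.mem_product, hp.1]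
      exact ⟨hc, (Finset.mem_sdiff.mp hp.2).1⟩
  · intro p hp hadj
    rw [hbad, Finset.mem_union] at hp
    rcases hp with hp | hp
    · rcases Finset.mem_union.mp hp with hp | hp <;>
        rw [Finset.mem_product, Finset.mem_singleton] at hp <;> obtain ⟨h1, h2⟩ := hp
      · exact (Finset.mem_sdiff.mp h2).2 ((mem_neighborFinset G a p.2).mpr (h1 ▸ hCG hadj))
      · exact (Finset.mem_sdiff.mp h2).2 ((mem_neighborFinset G b p.2).mpr (h1 ▸ hCG hadj))
    · rw [Finset.mem_product, Finset.mem_singleton] at hp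
      obtain ⟨h1, h2⟩ := hp
      exact (Finset.mem_sdiff.mp h2).2 ((mem_neighborFinset G c p.2).mpr (h1 ▸ hCG hadj))

end Helpers
section Main
variable {V : Type*} [Fintype V] [DecidableEq V]

def minusEdges (G : SimpleGraph V) (D : Finset (Sym2 V)) : SimpleGraph V where
  Adj a b := G.Adj a b ∧ s(a, b) ∉ D
  symm := ⟨fun a b h => ⟨h.1.symm, by rw [Sym2.eq_swap]; exact h.2⟩⟩
  loopless := ⟨fun a h => G.loopless.irrefl a h.1⟩

instance (G : SimpleGraph V) [DecidableRel G.Adj] (D : Finset (Sym2 V)) :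
    DecidableRel (minusEdges G D).Adj :=
  fun a b => inferInstanceAs (Decidable (G.Adj a b ∧ s(a, b) ∉ D))

def crossGraph (G : SimpleGraph V) (S : Finset V) : SimpleGraph V where
  Adj a b := G.Adj a b ∧ ¬(a ∈ S ↔ b ∈ S)
  symm := ⟨fun a b h => ⟨h.1.symm, fun hc => h.2 hc.symm⟩⟩
  loopless := ⟨fun a h => h.2 Iff.rfl⟩

instance (G : SimpleGraph V) [DecidableRel G.Adj] (S : Finset V) :
    DecidableRel (crossGraph G S).Adj :=
  fun a b => inferInstanceAs (Decidable (G.Adj a b ∧ ¬(a ∈ S ↔ b ∈ S)))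

lemma minusEdges_le (G : SimpleGraph V) (D : Finset (Sym2 V)) : minusEdges G D ≤ G :=
  fun _ _ h => h.1

lemma crossGraph_le (G : SimpleGraph V) (S : Finset V) : crossGraph G S ≤ G :=
  fun _ _ h => h.1

lemma balance_arith (n k : ℕ) (h : 12 * k + 20 ≤ n) : 4 * (n * (3 * k + 1)) ≤ (n - 1) ^ 2 := by
  obtain ⟨m, rfl⟩ := Nat.exists_eq_add_of_le h
  have hh : 12 * k + 20 + m - 1 = 12 * k + 19 + m := by omega
  rw [hh]
  nlinarith [sq_nonneg m, sq_nonneg k]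

lemma prod_bound (A B : Finset V) (n : ℕ) (hAB : A.card + B.card = n) (hA : 1 ≤ A.card) :
    A.card * B.card ≤ (n - 1) ^ 2 / 4 + B.card := by
  have h0 : A.card - 1 + B.card = n - 1 := by omega
  have h1 : (A.card - 1) * B.card ≤ (n - 1) ^ 2 / 4 := by
    have := prod_le_q (A.card - 1) B.card
    rwa [h0] at this
  have h2 : (A.card - 1) * B.card + B.card = A.card * B.card := by
    rw [Nat.sub_one_mul]
    have : B.card ≤ A.card * B.card := Nat.le_mul_of_pos_left _ (by omega)
    omega
  omega

lemma cc_le_cliques (G : SimpleGraph V) [DecidableRel G.Adj] (B : Finset V)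
    (a b : V) (hadj : G.Adj a b) (hB : ∀ w ∈ B, w ≠ a ∧ w ≠ b) :
    (G.neighborFinset a ∩ G.neighborFinset b ∩ B).card ≤ (G.cliqueFinset 3).card := by
  apply Finset.card_le_card_of_injOn (fun w => insert a (insert b {w}))
  · intro w hw
    rw [Finset.mem_coe, Finset.mem_inter, Finset.mem_inter, mem_neighborFinset, mem_neighborFinset] at hw
    obtain ⟨⟨hwa, hwb⟩, _⟩ := hw
    exact mem_cliqueFinset_iff.mpr (is3Clique_iff.mpr ⟨a, b, w, hadj, hwa, hwb, rfl⟩)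
  · intro w hw w' hw' heq
    rw [Finset.mem_coe, Finset.mem_inter] at hw hw'
    have heq' : insert a (insert b ({w} : Finset V)) = insert a (insert b ({w'} : Finset V)) :=
      heq
    have hmem : w' ∈ insert a (insert b ({w} : Finset V)) := by
      rw [heq']; simp
    rcases Finset.mem_insert.mp hmem with rfl | hmem
    · exact absurd rfl (hB _ hw'.2).1
    rcases Finset.mem_insert.mp hmem with rfl | hmem
    · exact absurd rfl (hB _ hw'.2).2
    · exact (Finset.mem_singleton.mp hmem).symm

lemma cc_le_fiber (G : SimpleGraph V) [DecidableRel G.Adj] (S : Finset V)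
    (g : Finset V → Sym2 V)
    (hgsub : ∀ t ∈ G.cliqueFinset 3, ∀ x ∈ g t, x ∈ t)
    (hgsame : ∀ t ∈ G.cliqueFinset 3, ∃ x y : V, g t = s(x, y) ∧ x ≠ y ∧ (x ∈ S ↔ y ∈ S))
    (u v : V) (huv : G.Adj u v) (hsame : u ∈ S ↔ v ∈ S) (B : Finset V)
    (hBu : ∀ w ∈ B, ¬(w ∈ S ↔ u ∈ S)) :
    (G.neighborFinset u ∩ G.neighborFinset v ∩ B).card
      ≤ ((G.cliqueFinset 3).filter (fun t => g t = s(u, v))).card := by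
  have hBne : ∀ w ∈ B, w ≠ u ∧ w ≠ v := by
    intro w hw
    constructor
    · rintro rfl; exact hBu w hw Iff.rfl
    · rintro rfl; exact hBu w hw hsame.symm
  apply Finset.card_le_card_of_injOn (fun w => insert u (insert v {w}))
  · intro w hw
    rw [Finset.mem_coe, Finset.mem_inter, Finset.mem_inter, mem_neighborFinset, mem_neighborFinset] at hw
    obtain ⟨⟨hwu, hwv⟩, hwB⟩ := hw
    have ht : insert u (insert v ({w} : Finset V)) ∈ G.cliqueFinset 3 :=
      mem_cliqueFinset_iff.mpr (is3Clique_iff.mpr ⟨u, v, w, huv, hwu, hwv, rfl⟩)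
    rw [Finset.mem_coe, Finset.mem_filter]
    refine ⟨ht, ?_⟩
    obtain ⟨x, y, hgxy, hxy, hxyS⟩ := hgsame _ ht
    have hxt : x ∈ insert u (insert v ({w} : Finset V)) :=
      hgsub _ ht x (by rw [hgxy]; exact Sym2.mem_iff.mpr (Or.inl rfl))
    have hyt : y ∈ insert u (insert v ({w} : Finset V)) :=
      hgsub _ ht y (by rw [hgxy]; exact Sym2.mem_iff.mpr (Or.inr rfl))
    have hcard3 : (insert u (insert v ({w} : Finset V))).card = 3 :=
      (mem_cliqueFinset_iff.mp ht).2
    have hnm : ¬((∀ z ∈ insert u (insert v ({w} : Finset V)), z ∈ S) ∨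
        (∀ z ∈ insert u (insert v ({w} : Finset V)), z ∉ S)) := by
      rintro (hall | hall)
      · exact hBu w hwB (iff_of_true (hall w (by simp)) (hall u (by simp)))
      · exact hBu w hwB (iff_of_false (hall w (by simp)) (hall u (by simp)))
    rw [hgxy]
    exact unique_pair S _ hcard3 hnm hxy huv.ne hxt hyt (by simp) (by simp) hxyS hsame
  · intro w hw w' hw' heq
    rw [Finset.mem_coe, Finset.mem_inter] at hw hw'
    have heq' : insert u (insert v ({w} : Finset V)) = insert u (insert v ({w'} : Finset V)) :=
      heq
    have hmem : w' ∈ insert u (insert v ({w} : Finset V)) := by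
      rw [heq']; simp
    rcases Finset.mem_insert.mp hmem with rfl | hmem
    · exact absurd rfl (hBne _ hw'.2).1
    rcases Finset.mem_insert.mp hmem with rfl | hmem
    · exact absurd rfl (hBne _ hw'.2).2
    · exact (Finset.mem_singleton.mp hmem).symm

end Main
section Final
variable {V : Type*} [Fintype V] [DecidableEq V]

/-- final contradiction in the monochromatic-triangle case -/
lemma mono_final (C G : SimpleGraph V) [DecidableRel C.Adj] [DecidableRel G.Adj]
    (k n : ℕ) (hN : 12 * k + 20 ≤ n)
    (A B : Finset V) (hABcard : A.card + B.card = n)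
    (hCG : C ≤ G)
    (hCadj : ∀ x y, C.Adj x y → (x ∈ A ∧ y ∈ B) ∨ (y ∈ A ∧ x ∈ B))
    (htri : (G.cliqueFinset 3).card = k)
    (hCe : (n - 1) ^ 2 / 4 + 2 ≤ C.edgeFinset.card)
    (a b c : V) (hab : G.Adj a b) (hac : G.Adj a c) (hbc : G.Adj b c)
    (ha : a ∈ A) (hb : b ∈ A) (hc : c ∈ A)
    (hpartB : ∀ w ∈ B, w ∉ A) : False := by
  have hBne : ∀ x : V, x ∈ A → ∀ w ∈ B, w ≠ x := by
    intro x hx w hw hc'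
    exact hpartB w hw (hc' ▸ hx)
  have hcc1 : (G.neighborFinset a ∩ G.neighborFinset b ∩ B).card ≤ k :=
    htri ▸ cc_le_cliques G B a b hab (fun w hw => ⟨hBne a ha w hw, hBne b hb w hw⟩)
  have hcc2 : (G.neighborFinset a ∩ G.neighborFinset c ∩ B).card ≤ k :=
    htri ▸ cc_le_cliques G B a c hac (fun w hw => ⟨hBne a ha w hw, hBne c hc w hw⟩)
  have hcc3 : (G.neighborFinset b ∩ G.neighborFinset c ∩ B).card ≤ k :=
    htri ▸ cc_le_cliques G B b c hbc (fun w hw => ⟨hBne b hb w hw, hBne c hc w hw⟩)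
  have hCA : C.edgeFinset.card ≤ A.card * B.card := by
    have := cross_count C A B ∅ hCadj (Finset.empty_subset _) (by simp)
    simpa using this
  have hbal : 3 * k + 2 ≤ B.card := by
    by_contra hBs
    push_neg at hBs
    have h1 : A.card * B.card ≤ n * (3 * k + 1) :=
      Nat.mul_le_mul (by omega) (by omega)
    have h2 : n * (3 * k + 1) ≤ (n - 1) ^ 2 / 4 := by
      rw [Nat.le_div_iff_mul_le (by norm_num)]
      have := balance_arith n k hN
      omega
    omega
  have hmb := mono_bound C G A B hCG hCadj a b c hab.ne hac.ne hbc.ne ha hb hc k hcc1 hcc2 hcc3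
  have hq : A.card * B.card ≤ (n - 1) ^ 2 / 4 + B.card :=
    prod_bound A B n hABcard (Finset.card_pos.mpr ⟨a, ha⟩)
  omega

/-- final bound in the no-monochromatic-triangle case -/
lemma nonmono_final (C G : SimpleGraph V) [DecidableRel C.Adj] [DecidableRel G.Adj]
    (k n : ℕ) (A B : Finset V) (hABcard : A.card + B.card = n)
    (hCG : C ≤ G)
    (hCadj : ∀ x y, C.Adj x y → (x ∈ A ∧ y ∈ B) ∨ (y ∈ A ∧ x ∈ B))
    (u v : V) (huv : u ≠ v) (hu : u ∈ A) (hv : v ∈ A) (s₀ fcard : ℕ)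
    (hcc : (G.neighborFinset u ∩ G.neighborFinset v ∩ B).card ≤ s₀)
    (hEC : G.edgeFinset.card ≤ C.edgeFinset.card + fcard)
    (hfs : s₀ + fcard ≤ k + 1) :
    G.edgeFinset.card ≤ (n - 1) ^ 2 / 4 + k + 1 := by
  have hnb := nonmono_bound C G A B hCG hCadj u v huv hu hv s₀ hcc
  have hq : A.card * B.card ≤ (n - 1) ^ 2 / 4 + B.card :=
    prod_bound A B n hABcard (Finset.card_pos.mpr ⟨u, hu⟩)
  omega

end Final
section Upper
variable {V : Type*} [Fintype V] [DecidableEq V]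

theorem upper_bound (G : SimpleGraph V) [DecidableRel G.Adj] (k : ℕ) (hk : 1 ≤ k)
    (hN : 12 * k + 20 ≤ Fintype.card V) (htri : (G.cliqueFinset 3).card = k) :
    G.edgeFinset.card ≤ (Fintype.card V - 1) ^ 2 / 4 + k + 1 := by
  classical
  by_contra hcon
  push_neg at hcon
  set n := Fintype.card V with hn
  haveI hnev : Nonempty V := Fintype.card_pos_iff.mp (by omega)
  -- choose an edge in each triangle
  have hD0 : ∀ t ∈ G.cliqueFinset 3, ∃ p : V × V, G.Adj p.1 p.2 ∧ p.1 ∈ t ∧ p.2 ∈ t := by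
    intro t ht
    rw [mem_cliqueFinset_iff, is3Clique_iff] at ht
    obtain ⟨a, b, c, hab, hac, hbc, rfl⟩ := ht
    exact ⟨(a, b), hab, by simp, by simp⟩
  choose fD hfD1 hfD2 hfD3 using hD0
  obtain ⟨D, hD⟩ : ∃ D : Finset (Sym2 V), D = (G.cliqueFinset 3).attach.image
      (fun t => s((fD t.1 t.2).1, (fD t.1 t.2).2)) := ⟨_, rfl⟩
  have hDcard : D.card ≤ k := by
    rw [hD]
    exact le_trans Finset.card_image_le (by rw [Finset.card_attach, htri])
  have hDtri : ∀ e ∈ D, ∃ t ∈ G.cliqueFinset 3, ∀ x ∈ e, x ∈ t := by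
    intro e he
    rw [hD, Finset.mem_image] at he
    obtain ⟨t, -, rfl⟩ := he
    refine ⟨t.1, t.2, ?_⟩
    intro x hx
    rcases Sym2.mem_iff.mp hx with rfl | rfl
    · exact hfD2 t.1 t.2
    · exact hfD3 t.1 t.2
  have hfree : (minusEdges G D).CliqueFree 3 := by
    intro t ht
    have htG : t ∈ G.cliqueFinset 3 :=
      mem_cliqueFinset_iff.mpr (ht.mono (minusEdges_le G D))
    have hpD : s((fD t htG).1, (fD t htG).2) ∈ D := by
      rw [hD]
      exact Finset.mem_image.mpr ⟨⟨t, htG⟩, Finset.mem_attach _ _, rfl⟩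
    have hadj : (minusEdges G D).Adj (fD t htG).1 (fD t htG).2 :=
      ht.1 (Finset.mem_coe.mpr (hfD2 t htG)) (Finset.mem_coe.mpr (hfD3 t htG))
        (hfD1 t htG).ne
    exact hadj.2 hpD
  have hEsplit : G.edgeFinset.card ≤ (minusEdges G D).edgeFinset.card + k := by
    have hsub : G.edgeFinset ⊆ (minusEdges G D).edgeFinset ∪ D := by
      intro e he
      induction e with
      | _ a b =>
        rw [mem_edgeFinset, mem_edgeSet] at he
        by_cases hD' : s(a, b) ∈ D
        · exact Finset.mem_union_right _ hD'
        · exact Finset.mem_union_left _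
            (by rw [mem_edgeFinset, mem_edgeSet]; exact ⟨he, hD'⟩)
    calc G.edgeFinset.card ≤ ((minusEdges G D).edgeFinset ∪ D).card :=
          Finset.card_le_card hsub
      _ ≤ (minusEdges G D).edgeFinset.card + D.card := Finset.card_union_le _ _
      _ ≤ _ := by omega
  rcases bigLemma n Finset.univ (minusEdges G D) (by simp [hn]) hfree
      (fun u v _ => ⟨Finset.mem_univ u, Finset.mem_univ v⟩) with h1 | ⟨S, hS⟩
  · omega
  -- the cross graph
  set C := crossGraph G S with hC
  have hCle : C ≤ G := crossGraph_le G S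
  have hCsub : C.edgeFinset ⊆ G.edgeFinset := by
    intro e he
    rw [mem_edgeFinset] at he ⊢
    exact SimpleGraph.edgeSet_mono hCle he
  set F := G.edgeFinset \ C.edgeFinset with hF
  have hEF : G.edgeFinset.card = C.edgeFinset.card + F.card := by
    rw [hF, Finset.card_sdiff_of_subset hCsub]
    have := Finset.card_le_card hCsub
    omega
  have hFprop : ∀ a b : V, s(a, b) ∈ F → G.Adj a b ∧ (a ∈ S ↔ b ∈ S) := by
    intro a b habF
    rw [hF, Finset.mem_sdiff, mem_edgeFinset, mem_edgeSet, mem_edgeFinset, mem_edgeSet] at habF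
    obtain ⟨hG', hnC⟩ := habF
    refine ⟨hG', ?_⟩
    by_contra hc'
    exact hnC ⟨hG', hc'⟩
  have hFD : F ⊆ D := by
    intro e he
    induction e with
    | _ a b =>
      obtain ⟨hG', hsame⟩ := hFprop a b he
      by_contra hc'
      have hma : (minusEdges G D).Adj a b := ⟨hG', hc'⟩
      have := hS a b hma
      tauto
  have hFcard : F.card ≤ k := le_trans (Finset.card_le_card hFD) hDcard
  -- choice of in-part pair in each triangle
  have hg0 : ∀ t ∈ G.cliqueFinset 3, ∃ p : V × V,
      p.1 ∈ t ∧ p.2 ∈ t ∧ G.Adj p.1 p.2 ∧ (p.1 ∈ S ↔ p.2 ∈ S) := by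
    intro t ht
    rw [mem_cliqueFinset_iff, is3Clique_iff] at ht
    obtain ⟨a, b, c, hab, hac, hbc, rfl⟩ := ht
    by_cases h1 : (a ∈ S ↔ b ∈ S)
    · exact ⟨(a, b), by simp, by simp, hab, h1⟩
    · by_cases h2 : (a ∈ S ↔ c ∈ S)
      · exact ⟨(a, c), by simp, by simp, hac, h2⟩
      · exact ⟨(b, c), by simp, by simp, hbc, by tauto⟩
  choose gP hg1 hg2 hg3 hg4 using hg0
  obtain ⟨g, hgval⟩ : ∃ g : Finset V → Sym2 V,
      ∀ t (h : t ∈ G.cliqueFinset 3), g t = s((gP t h).1, (gP t h).2) :=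
    ⟨fun t => if h : t ∈ G.cliqueFinset 3 then s((gP t h).1, (gP t h).2)
      else s(Classical.arbitrary V, Classical.arbitrary V), fun t h => dif_pos h⟩
  have hgF : ∀ t ∈ G.cliqueFinset 3, g t ∈ F := by
    intro t ht
    rw [hgval t ht, hF, Finset.mem_sdiff, mem_edgeFinset, mem_edgeSet, mem_edgeFinset,
      mem_edgeSet]
    exact ⟨hg3 t ht, fun hc' => hc'.2 (hg4 t ht)⟩
  have hgsub : ∀ t ∈ G.cliqueFinset 3, ∀ x ∈ g t, x ∈ t := by
    intro t ht x hx
    rw [hgval t ht] at hx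
    rcases Sym2.mem_iff.mp hx with rfl | rfl
    · exact hg1 t ht
    · exact hg2 t ht
  have hgsame : ∀ t ∈ G.cliqueFinset 3, ∃ x y : V, g t = s(x, y) ∧ x ≠ y ∧ (x ∈ S ↔ y ∈ S) :=
    fun t ht => ⟨(gP t ht).1, (gP t ht).2, hgval t ht, (hg3 t ht).ne, hg4 t ht⟩
  have hsum : k = ∑ f ∈ F, ((G.cliqueFinset 3).filter (fun t => g t = f)).card := by
    rw [← htri]
    exact Finset.card_eq_sum_card_fiberwise hgF
  by_cases hmono : ∃ t ∈ G.cliqueFinset 3, (∀ x ∈ t, x ∈ S) ∨ (∀ x ∈ t, x ∉ S)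
  · -- monochromatic triangle exists
    obtain ⟨t, ht, hside⟩ := hmono
    obtain ⟨a, b, c, hab, hac, hbc, rfl⟩ := is3Clique_iff.mp (mem_cliqueFinset_iff.mp ht)
    have hCe : (n - 1) ^ 2 / 4 + 2 ≤ C.edgeFinset.card := by omega
    rcases hside with hall | hall
    · -- all in S : A := S, B := Sᶜ
      refine mono_final C G k n hN S Sᶜ (Finset.card_add_card_compl S) hCle ?_ htri hCe
        a b c hab hac hbc (hall a (by simp)) (hall b (by simp)) (hall c (by simp)) ?_
      · intro x y hxy
        obtain ⟨-, hns⟩ := hxy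
        by_cases hx : x ∈ S
        · exact Or.inl ⟨hx, Finset.mem_compl.mpr (fun hy => hns (iff_of_true hx hy))⟩
        · have hy : y ∈ S := by tauto
          exact Or.inr ⟨hy, Finset.mem_compl.mpr hx⟩
      · intro w hw
        exact Finset.mem_compl.mp hw
    · -- all not in S : A := Sᶜ, B := S
      refine mono_final C G k n hN Sᶜ S ?_ hCle ?_ htri hCe
        a b c hab hac hbc (Finset.mem_compl.mpr (hall a (by simp)))
        (Finset.mem_compl.mpr (hall b (by simp))) (Finset.mem_compl.mpr (hall c (by simp))) ?_
      · rw [add_comm]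
        exact Finset.card_add_card_compl S
      · intro x y hxy
        obtain ⟨-, hns⟩ := hxy
        by_cases hx : x ∈ S
        · exact Or.inr ⟨Finset.mem_compl.mpr (fun hy => hns (iff_of_true hx hy)), hx⟩
        · have hy : y ∈ S := by tauto
          exact Or.inl ⟨Finset.mem_compl.mpr hx, hy⟩
      · intro w hw hw2
        exact Finset.mem_compl.mp hw2 hw
  · -- no monochromatic triangle
    have hfib : ∀ f ∈ F, 1 ≤ ((G.cliqueFinset 3).filter (fun t => g t = f)).card := by
      intro f hf
      obtain ⟨t, ht, hsubt⟩ := hDtri f (hFD hf)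
      obtain ⟨x, y, rfl⟩ : ∃ x y, f = s(x, y) := ⟨f.out.1, f.out.2, f.out_eq.symm⟩
      obtain ⟨hxyadj, hxysame⟩ := hFprop x y hf
      obtain ⟨x', y', hgt, hxy', hsame'⟩ := hgsame t ht
      have hcard3 : (t : Finset V).card = 3 := (mem_cliqueFinset_iff.mp ht).2
      have hgeq : g t = s(x, y) := by
        rw [hgt]
        exact unique_pair S t hcard3 (fun hcase => hmono ⟨t, ht, hcase⟩) hxy' hxyadj.ne
          (hgsub t ht x' (by rw [hgt]; exact Sym2.mem_iff.mpr (Or.inl rfl)))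
          (hgsub t ht y' (by rw [hgt]; exact Sym2.mem_iff.mpr (Or.inr rfl)))
          (hsubt x (Sym2.mem_iff.mpr (Or.inl rfl)))
          (hsubt y (Sym2.mem_iff.mpr (Or.inr rfl))) hsame' hxysame
      rw [Nat.one_le_iff_ne_zero, ← Nat.pos_iff_ne_zero, Finset.card_pos]
      exact ⟨t, Finset.mem_filter.mpr ⟨ht, hgeq⟩⟩
    -- F is nonempty
    have hFne : F.Nonempty := by
      have : (G.cliqueFinset 3).Nonempty := by
        rw [← Finset.card_pos, htri]; omega
      obtain ⟨t, ht⟩ := this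
      exact ⟨g t, hgF t ht⟩
    obtain ⟨f₀, hf₀⟩ := hFne
    obtain ⟨u, v, rfl⟩ : ∃ x y, f₀ = s(x, y) := ⟨f₀.out.1, f₀.out.2, f₀.out_eq.symm⟩
    obtain ⟨huv, husame⟩ := hFprop u v hf₀
    obtain ⟨s₀, hs₀⟩ : ∃ s₀, s₀ = ((G.cliqueFinset 3).filter (fun t => g t = s(u, v))).card :=
      ⟨_, rfl⟩
    have hfs : s₀ + F.card ≤ k + 1 := by
      have h1 : ∑ f ∈ F, ((G.cliqueFinset 3).filter (fun t => g t = f)).card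
          = s₀ + ∑ f ∈ F.erase s(u, v),
            ((G.cliqueFinset 3).filter (fun t => g t = f)).card := by
        rw [hs₀, ← Finset.add_sum_erase _ _ hf₀]
      have h2 : (F.erase s(u, v)).card ≤ ∑ f ∈ F.erase s(u, v),
          ((G.cliqueFinset 3).filter (fun t => g t = f)).card := by
        calc (F.erase s(u, v)).card = ∑ _f ∈ F.erase s(u, v), 1 := by
              rw [Finset.sum_const, smul_eq_mul, mul_one]
          _ ≤ _ := Finset.sum_le_sum (fun f hf => hfib f (Finset.mem_of_mem_erase hf))
      have h3 : (F.erase s(u, v)).card = F.card - 1 := Finset.card_erase_of_mem hf₀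
      have h4 : 1 ≤ F.card := Finset.card_pos.mpr ⟨_, hf₀⟩
      omega
    have hfinal : G.edgeFinset.card ≤ (n - 1) ^ 2 / 4 + k + 1 := by
      by_cases huS : u ∈ S
      · -- A := S, B := Sᶜ
        refine nonmono_final C G k n S Sᶜ (Finset.card_add_card_compl S) hCle ?_
          u v huv.ne huS (husame.mp huS) s₀ F.card ?_ (by omega) hfs
        · intro x y hxy
          obtain ⟨-, hns⟩ := hxy
          by_cases hx : x ∈ S
          · exact Or.inl ⟨hx, Finset.mem_compl.mpr (fun hy => hns (iff_of_true hx hy))⟩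
          · have hy : y ∈ S := by tauto
            exact Or.inr ⟨hy, Finset.mem_compl.mpr hx⟩
        · rw [hs₀]
          apply cc_le_fiber G S g hgsub hgsame u v huv husame Sᶜ
          intro w hw
          have := Finset.mem_compl.mp hw
          tauto
      · -- A := Sᶜ, B := S
        have hvS : v ∉ S := fun hv => huS (husame.mpr hv)
        refine nonmono_final C G k n Sᶜ S ?_ hCle ?_
          u v huv.ne (Finset.mem_compl.mpr huS) (Finset.mem_compl.mpr hvS) s₀ F.card ?_
          (by omega) hfs
        · rw [add_comm]
          exact Finset.card_add_card_compl S
        · intro x y hxy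
          obtain ⟨-, hns⟩ := hxy
          by_cases hx : x ∈ S
          · exact Or.inr ⟨Finset.mem_compl.mpr (fun hy => hns (iff_of_true hx hy)), hx⟩
          · have hy : y ∈ S := by tauto
            exact Or.inl ⟨Finset.mem_compl.mpr hx, hy⟩
        · rw [hs₀]
          apply cc_le_fiber G S g hgsub hgsame u v huv husame S
          intro w hw
          tauto
    omega

end Upper
section Construction

def inA (a i : ℕ) : Prop := 1 ≤ i ∧ i ≤ a
def inB (a i : ℕ) : Prop := a < i
def inW (a k i : ℕ) : Prop := i = 1 ∨ (a < i ∧ i ≤ a + k)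
def exP (a k i j : ℕ) : Prop :=
  (inA a i ∧ inB a j) ∨ (inA a j ∧ inB a i) ∨ (i = 0 ∧ inW a k j) ∨ (j = 0 ∧ inW a k i)

instance (a k i j : ℕ) : Decidable (exP a k i j) := by
  unfold exP inA inB inW; exact inferInstance

lemma exP_symm {a k i j : ℕ} (h : exP a k i j) : exP a k j i := by
  unfold exP at *; tauto

lemma exP_zero (a k i j l : ℕ) (hij : exP a k i j) (hil : exP a k i l)
    (hjl : exP a k j l) : i = 0 ∨ j = 0 ∨ l = 0 := by
  simp only [exP, inA, inB, inW] at hij hil hjl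
  omega

lemma exP_triple (a k i j l : ℕ) (ha1 : 1 ≤ a) (hij : exP a k i j) (hil : exP a k i l)
    (hjl : exP a k j l) (hi : i = 0) :
    (j = 1 ∧ a < l ∧ l ≤ a + k) ∨ (l = 1 ∧ a < j ∧ j ≤ a + k) := by
  subst hi
  simp only [exP, inA, inB, inW] at hij hil hjl
  omega

def exGraph (n a k : ℕ) : SimpleGraph (Fin n) where
  Adj x y := exP a k x.val y.val
  symm := ⟨by intro x y h; unfold exP inA inB inW at *; tauto⟩
  loopless := ⟨by intro x h; unfold exP inA inB inW at h; omega⟩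

instance (n a k : ℕ) : DecidableRel (exGraph n a k).Adj :=
  fun x y => inferInstanceAs (Decidable (exP a k x.val y.val))

lemma card_filter_fin (n : ℕ) (p : ℕ → Prop) [DecidablePred p] :
    ((Finset.univ : Finset (Fin n)).filter (fun x => p x.val)).card
      = ((Finset.range n).filter p).card := by
  apply Finset.card_bij (fun x _ => x.val)
  · intro x hx
    rw [Finset.mem_filter] at hx
    exact Finset.mem_filter.mpr ⟨Finset.mem_range.mpr x.isLt, hx.2⟩
  · intro x _ y _ h
    exact Fin.ext h
  · intro j hj
    rw [Finset.mem_filter, Finset.mem_range] at hj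
    exact ⟨⟨j, hj.1⟩, Finset.mem_filter.mpr ⟨Finset.mem_univ _, hj.2⟩, rfl⟩

lemma construction (n k : ℕ) (hk : 1 ≤ k) (hn : 12 * k + 20 ≤ n) :
    ∃ (G : SimpleGraph (Fin n)) (_ : DecidableRel G.Adj),
      (G.cliqueFinset 3).card = k ∧ G.edgeFinset.card = (n - 1) ^ 2 / 4 + k + 1 := by
  classical
  set a := (n - 1) / 2 with ha
  have ha1 : 1 ≤ a := by omega
  have han : a < n := by omega
  have hakn : a + k + 1 ≤ n := by omega
  set G := exGraph n a k with hG
  obtain ⟨z, hzval⟩ : ∃ z : Fin n, z.val = 0 := ⟨⟨0, by omega⟩, rfl⟩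
  obtain ⟨one, honeval⟩ : ∃ o : Fin n, o.val = 1 := ⟨⟨1, by omega⟩, rfl⟩
  have hadj : ∀ x y : Fin n, G.Adj x y ↔ exP a k x.val y.val := fun _ _ => Iff.rfl
  refine ⟨G, inferInstance, ?_, ?_⟩
  · -- triangle count
    set Wb : Finset (Fin n) :=
      Finset.univ.filter (fun x : Fin n => a < x.val ∧ x.val ≤ a + k) with hWb
    have hcl : G.cliqueFinset 3 = Wb.image (fun b => ({z, one, b} : Finset (Fin n))) := by
      ext t
      rw [mem_cliqueFinset_iff, is3Clique_iff]
      constructor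
      · rintro ⟨x, y, w, hxy, hxw, hyw, rfl⟩
        rw [hadj] at hxy hxw hyw
        have h0 : x.val = 0 ∨ y.val = 0 ∨ w.val = 0 := exP_zero a k _ _ _ hxy hxw hyw
        have hmem : ∀ b : Fin n, a < b.val → b.val ≤ a + k → b ∈ Wb := by
          intro b h1 h2
          rw [hWb, Finset.mem_filter]
          exact ⟨Finset.mem_univ _, h1, h2⟩
        have hset : ∀ u v b : Fin n, u.val = 0 → v.val = 1 →
            ({u, v, b} : Finset (Fin n)) = {z, one, b} := by
          intro u v b hu hv
          have h1 : u = z := Fin.ext (by omega)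
          have h2 : v = one := Fin.ext (by omega)
          rw [h1, h2]
        rcases h0 with h0 | h0 | h0
        · rcases exP_triple a k _ _ _ ha1 hxy hxw hyw h0 with ⟨h2, h3, h4⟩ | ⟨h2, h3, h4⟩
          · exact Finset.mem_image.mpr ⟨w, hmem w h3 h4, (hset x y w h0 h2).symm⟩
          · refine Finset.mem_image.mpr ⟨y, hmem y h3 h4, ?_⟩
            rw [← hset x w y h0 h2]
            ext q
            simp only [Finset.mem_insert, Finset.mem_singleton]
            tauto
        · rcases exP_triple a k _ _ _ ha1 (exP_symm hxy) hyw hxw h0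
            with ⟨h2, h3, h4⟩ | ⟨h2, h3, h4⟩
          · refine Finset.mem_image.mpr ⟨w, hmem w h3 h4, ?_⟩
            rw [← hset y x w h0 h2]
            ext q
            simp only [Finset.mem_insert, Finset.mem_singleton]
            tauto
          · refine Finset.mem_image.mpr ⟨x, hmem x h3 h4, ?_⟩
            rw [← hset y w x h0 h2]
            ext q
            simp only [Finset.mem_insert, Finset.mem_singleton]
            tauto
        · rcases exP_triple a k _ _ _ ha1 (exP_symm hxw) (exP_symm hyw) hxy h0
            with ⟨h2, h3, h4⟩ | ⟨h2, h3, h4⟩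
          · refine Finset.mem_image.mpr ⟨y, hmem y h3 h4, ?_⟩
            rw [← hset w x y h0 h2]
            ext q
            simp only [Finset.mem_insert, Finset.mem_singleton]
            tauto
          · refine Finset.mem_image.mpr ⟨x, hmem x h3 h4, ?_⟩
            rw [← hset w y x h0 h2]
            ext q
            simp only [Finset.mem_insert, Finset.mem_singleton]
            tauto
      · intro ht
        obtain ⟨b, hb, rfl⟩ := Finset.mem_image.mp ht
        rw [hWb, Finset.mem_filter] at hb
        obtain ⟨-, hb1, hb2⟩ := hb
        have hzone : G.Adj z one := by
          rw [hadj]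
          unfold exP inA inB inW
          omega
        have hzb : G.Adj z b := by
          rw [hadj]
          unfold exP inA inB inW
          omega
        have honeb : G.Adj one b := by
          rw [hadj]
          unfold exP inA inB inW
          omega
        exact ⟨z, one, b, hzone, hzb, honeb, rfl⟩
    rw [hcl, Finset.card_image_of_injOn]
    · rw [hWb, card_filter_fin n (fun i => a < i ∧ i ≤ a + k)]
      have hico : (Finset.range n).filter (fun i => a < i ∧ i ≤ a + k)
          = Finset.Ico (a + 1) (a + k + 1) := by
        ext i
        simp only [Finset.mem_filter, Finset.mem_range, Finset.mem_Ico]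
        omega
      rw [hico, Nat.card_Ico]
      omega
    · intro b hb b' hb' heq
      rw [Finset.mem_coe, hWb, Finset.mem_filter] at hb hb'
      have hbz : b' ≠ z := by
        intro hc
        have := congrArg Fin.val hc
        omega
      have hbone : b' ≠ one := by
        intro hc
        have := congrArg Fin.val hc
        omega
      have heq' : ({z, one, b} : Finset (Fin n)) = {z, one, b'} := heq
      have hmem : b' ∈ ({z, one, b} : Finset (Fin n)) := by
        rw [heq']; simp
      simp only [Finset.mem_insert, Finset.mem_singleton] at hmem
      rcases hmem with hc | hc | hc
      · exact absurd hc hbz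
      · exact absurd hc hbone
      · exact hc.symm
  · -- edge count
    set A : Finset (Fin n) :=
      Finset.univ.filter (fun x : Fin n => 1 ≤ x.val ∧ x.val ≤ a) with hA
    set B : Finset (Fin n) :=
      Finset.univ.filter (fun x : Fin n => a < x.val) with hB
    set W : Finset (Fin n) :=
      Finset.univ.filter (fun x : Fin n => x.val = 1 ∨ (a < x.val ∧ x.val ≤ a + k)) with hW
    set E₀ : Finset (Fin n × Fin n) := (A ×ˢ B) ∪ ({z} ×ˢ W) with hE₀
    have hmemE : ∀ p : Fin n × Fin n, p ∈ E₀ ↔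
        ((1 ≤ p.1.val ∧ p.1.val ≤ a ∧ a < p.2.val) ∨
          (p.1.val = 0 ∧ (p.2.val = 1 ∨ (a < p.2.val ∧ p.2.val ≤ a + k)))) := by
      intro p
      rw [hE₀, Finset.mem_union, Finset.mem_product, Finset.mem_product, hA, hB, hW,
        Finset.mem_filter, Finset.mem_filter, Finset.mem_filter, Finset.mem_singleton]
      constructor
      · rintro (⟨⟨-, h1⟩, ⟨-, h2⟩⟩ | ⟨h1, ⟨-, h2⟩⟩)
        · exact Or.inl ⟨h1.1, h1.2, h2⟩
        · refine Or.inr ⟨?_, h2⟩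
          rw [h1, hzval]
      · rintro (⟨h1, h2, h3⟩ | ⟨h1, h2⟩)
        · exact Or.inl ⟨⟨Finset.mem_univ _, h1, h2⟩, Finset.mem_univ _, h3⟩
        · exact Or.inr ⟨Fin.ext (by omega), Finset.mem_univ _, h2⟩
    have hedge : G.edgeFinset = E₀.image (fun p => s(p.1, p.2)) := by
      ext e
      induction e with
      | _ x y =>
        rw [mem_edgeFinset, mem_edgeSet, hadj]
        constructor
        · intro hxy
          rcases hxy with ⟨h1, h2⟩ | ⟨h1, h2⟩ | ⟨h1, h2⟩ | ⟨h1, h2⟩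
          · exact Finset.mem_image.mpr ⟨(x, y), (hmemE (x, y)).mpr
              (Or.inl ⟨h1.1, h1.2, h2⟩), rfl⟩
          · exact Finset.mem_image.mpr ⟨(y, x), (hmemE (y, x)).mpr
              (Or.inl ⟨h1.1, h1.2, h2⟩), Sym2.eq_swap⟩
          · exact Finset.mem_image.mpr ⟨(x, y), (hmemE (x, y)).mpr
              (Or.inr ⟨h1, h2⟩), rfl⟩
          · exact Finset.mem_image.mpr ⟨(y, x), (hmemE (y, x)).mpr
              (Or.inr ⟨h1, h2⟩), Sym2.eq_swap⟩
        · intro hmem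
          obtain ⟨p, hp, hps⟩ := Finset.mem_image.mp hmem
          have hpadj : exP a k p.1.val p.2.val := by
            rcases (hmemE p).mp hp with ⟨h1, h2, h3⟩ | ⟨h1, h2⟩
            · exact Or.inl ⟨⟨h1, h2⟩, h3⟩
            · exact Or.inr (Or.inr (Or.inl ⟨h1, h2⟩))
          rcases Sym2.eq_iff.mp hps with ⟨hx, hy⟩ | ⟨hx, hy⟩
          · rw [← hx, ← hy]; exact hpadj
          · rw [← hx, ← hy]; exact exP_symm hpadj
    rw [hedge, Finset.card_image_of_injOn]
    · have hdisj : Disjoint (A ×ˢ B) ({z} ×ˢ W) := by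
        rw [Finset.disjoint_left]
        rintro ⟨p1, p2⟩ hp1 hp2
        rw [Finset.mem_product, hA, Finset.mem_filter] at hp1
        rw [Finset.mem_product, Finset.mem_singleton] at hp2
        have := congrArg Fin.val hp2.1
        omega
      rw [hE₀, Finset.card_union_of_disjoint hdisj, Finset.card_product, Finset.card_product,
        Finset.card_singleton, one_mul]
      have hAcard : A.card = a := by
        rw [hA, card_filter_fin n (fun i => 1 ≤ i ∧ i ≤ a)]
        have : (Finset.range n).filter (fun i => 1 ≤ i ∧ i ≤ a) = Finset.Ico 1 (a + 1) := by
          ext i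
          simp only [Finset.mem_filter, Finset.mem_range, Finset.mem_Ico]
          omega
        rw [this, Nat.card_Ico]
        omega
      have hBcard : B.card = n - 1 - a := by
        rw [hB, card_filter_fin n (fun i => a < i)]
        have : (Finset.range n).filter (fun i => a < i) = Finset.Ico (a + 1) n := by
          ext i
          simp only [Finset.mem_filter, Finset.mem_range, Finset.mem_Ico]
          omega
        rw [this, Nat.card_Ico]
        omega
      have hWcard : W.card = k + 1 := by
        rw [hW, card_filter_fin n (fun i => i = 1 ∨ (a < i ∧ i ≤ a + k))]
        have : (Finset.range n).filter (fun i => i = 1 ∨ (a < i ∧ i ≤ a + k))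
            = insert 1 (Finset.Ico (a + 1) (a + k + 1)) := by
          ext i
          simp only [Finset.mem_filter, Finset.mem_range, Finset.mem_insert, Finset.mem_Ico]
          omega
        rw [this, Finset.card_insert_of_notMem (by simp; omega), Nat.card_Ico]
        omega
      have hprod : a * (n - 1 - a) = (n - 1) ^ 2 / 4 := by
        have := half_prod (n - 1)
        rw [ha]
        have heq : n - 1 - (n - 1) / 2 = n - 1 - a := by rw [ha]
        omega
      rw [hAcard, hBcard, hWcard, hprod]
      omega
    · rintro ⟨p1, p2⟩ hp ⟨q1, q2⟩ hq heq
      rw [Finset.mem_coe] at hp hq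
      have hp' := (hmemE _).mp hp
      have hq' := (hmemE _).mp hq
      simp only at hp' hq'
      rcases Sym2.eq_iff.mp heq with ⟨h1, h2⟩ | ⟨h1, h2⟩
      · exact Prod.ext h1 h2
      · exfalso
        have e1 := congrArg Fin.val h1
        have e2 := congrArg Fin.val h2
        simp only at e1 e2
        omega

end Construction
lemma edgeCount_eq {V : Type*} [Fintype V] (G : SimpleGraph V) [Fintype G.edgeSet] :
    edgeCount G = G.edgeFinset.card := by
  rw [edgeCount, ← SimpleGraph.coe_edgeFinset, Set.ncard_coe_finset]

/-- for every `k ≥ 1` there is `N` such that for all `n ≥ N`, every graph on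
`n` vertices containing exactly `k` triangles has at most `⌊(n−1)²/4⌋ + k + 1` edges, and
some graph on `n` vertices with exactly `k` triangles attains this number of edges; i.e.
`exa_k(n, K₃) = ⌊(n−1)²/4⌋ + k + 1`. -/
theorem stmt9 (k : ℕ) (hk : 1 ≤ k) :
    ∃ N : ℕ, ∀ n : ℕ, N ≤ n →
      (∀ G : SimpleGraph (Fin n), _root_.copyCount G (⊤ : SimpleGraph (Fin 3)) = k →
        edgeCount G ≤ (n - 1) ^ 2 / 4 + k + 1) ∧
      (∃ G : SimpleGraph (Fin n), _root_.copyCount G (⊤ : SimpleGraph (Fin 3)) = k ∧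
        edgeCount G = (n - 1) ^ 2 / 4 + k + 1) := by
  classical
  refine ⟨12 * k + 20, fun n hn => ⟨?_, ?_⟩⟩
  · intro G hcopy
    haveI : DecidableRel G.Adj := Classical.decRel _
    have htri : (G.cliqueFinset 3).card = k := by
      rw [← copyCount_eq_card_cliqueFinset G]
      exact hcopy
    have hedge : edgeCount G = G.edgeFinset.card := edgeCount_eq G
    rw [hedge]
    have hup := upper_bound G k hk (by rw [Fintype.card_fin]; omega) htri
    rwa [Fintype.card_fin] at hup
  · obtain ⟨G, inst, htri, hedge⟩ := construction n k hk hn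
    refine ⟨G, ?_, ?_⟩
    · rw [copyCount_eq_card_cliqueFinset G, htri]
    · rw [edgeCount_eq G, hedge]
end

section
/- Let G be a triangle-free graph on N vertices and let M be a maximal matching in G (i.e., a matching such that every edge of G shares an endpoint with some edge of M) consisting of m edges. Then G has at most m·(N−m) edges. -/
open SimpleGraph

open SimpleGraph

private lemma sym2_mk_inf_sup {α : Type*} [LinearOrder α] (z : Sym2 α) :
    s(z.inf, z.sup) = z := by
  induction z using Sym2.ind with
  | _ a b =>
    rcases le_total a b with h | h
    · rw [Sym2.inf_mk, Sym2.sup_mk, inf_eq_left.2 h, sup_eq_right.2 h]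
    · rw [Sym2.inf_mk, Sym2.sup_mk, inf_eq_right.2 h, sup_eq_left.2 h]
      exact Sym2.eq_swap

private lemma sym2_inf_mem {α : Type*} [LinearOrder α] (z : Sym2 α) : z.inf ∈ z := by
  induction z using Sym2.ind with
  | _ a b =>
    rcases le_total a b with h | h
    · simp [Sym2.mem_iff, inf_eq_left.2 h]
    · simp [Sym2.mem_iff, inf_eq_right.2 h]

private lemma sym2_sup_mem {α : Type*} [LinearOrder α] (z : Sym2 α) : z.sup ∈ z := by
  induction z using Sym2.ind with
  | _ a b =>
    rcases le_total a b with h | h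
    · simp [Sym2.mem_iff, sup_eq_right.2 h]
    · simp [Sym2.mem_iff, sup_eq_left.2 h]

private lemma mem_inf_or_sup {α : Type*} [LinearOrder α] {z : Sym2 α} {x : α}
    (h : x ∈ z) : x = z.inf ∨ x = z.sup := by
  have h2 := h
  nth_rewrite 1 [← sym2_mk_inf_sup z] at h2
  rwa [Sym2.mem_iff] at h2

section Matching

variable {V : Type*} {G : SimpleGraph V} {M : G.Subgraph}

private lemma mem_verts_of_mem_edge {v : V} {e : Sym2 V} (he : e ∈ M.edgeSet) (hve : v ∈ e) :
    v ∈ M.verts := by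
  obtain ⟨w, rfl⟩ := Sym2.mem_iff_exists.1 hve
  exact M.edge_vert (Subgraph.mem_edgeSet.1 he)

open Classical in
/-- The matching edge through a vertex, as a plain `Sym2 V` (junk value off `M.verts`). -/
private noncomputable def mEdge (hM : M.IsMatching) (v : V) : Sym2 V :=
  if h : v ∈ M.verts then (hM.toEdge ⟨v, h⟩ : Sym2 V) else s(v, v)

private lemma mEdge_mem_edgeSet (hM : M.IsMatching) {v : V} (hv : v ∈ M.verts) :
    mEdge hM v ∈ M.edgeSet := by
  unfold mEdge
  rw [dif_pos hv]
  exact (hM.toEdge ⟨v, hv⟩).2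

private lemma mem_mEdge (hM : M.IsMatching) {v : V} (hv : v ∈ M.verts) :
    v ∈ mEdge hM v := by
  unfold mEdge
  rw [dif_pos hv]
  obtain ⟨w, hw, -⟩ := hM hv
  rw [hM.toEdge_eq_of_adj hw]
  exact Sym2.mem_mk_left _ _

private lemma mEdge_eq_of_mem (hM : M.IsMatching) {v : V} {e : Sym2 V}
    (he : e ∈ M.edgeSet) (hve : v ∈ e) : mEdge hM v = e := by
  have hv : v ∈ M.verts := mem_verts_of_mem_edge he hve
  unfold mEdge
  rw [dif_pos hv]
  obtain ⟨w, rfl⟩ := Sym2.mem_iff_exists.1 hve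
  rw [hM.toEdge_eq_of_adj (Subgraph.mem_edgeSet.1 he)]

private lemma edge_unique (hM : M.IsMatching) {e₁ e₂ : Sym2 V} {x : V}
    (h₁ : e₁ ∈ M.edgeSet) (h₂ : e₂ ∈ M.edgeSet) (hx₁ : x ∈ e₁) (hx₂ : x ∈ e₂) : e₁ = e₂ :=
  (mEdge_eq_of_mem hM h₁ hx₁).symm.trans (mEdge_eq_of_mem hM h₂ hx₂)

private lemma mEdge_eq_cases (hM : M.IsMatching) {v w : V} (hv : v ∈ M.verts)
    (hw : w ∈ M.verts) (h : mEdge hM v = mEdge hM w) : v = w ∨ M.Adj v w := by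
  by_cases hvw : v = w
  · exact Or.inl hvw
  · right
    have h1 : v ∈ mEdge hM w := h ▸ mem_mEdge hM hv
    have h2 : w ∈ mEdge hM w := mem_mEdge hM hw
    obtain ⟨x, hx⟩ := Sym2.mem_iff_exists.1 h2
    have hadj : M.Adj w x := Subgraph.mem_edgeSet.1 (hx ▸ mEdge_mem_edgeSet hM hw)
    rw [hx, Sym2.mem_iff] at h1
    rcases h1 with rfl | rfl
    · exact absurd rfl hvw
    · exact hadj.symm

private lemma inf_ne_sup [LinearOrder V] {e : Sym2 V} (he : e ∈ M.edgeSet) :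
    e.inf ≠ e.sup := by
  intro h
  have hmem : e = s(e.inf, e.sup) := (sym2_mk_inf_sup e).symm
  rw [hmem] at he
  exact (M.adj_sub (Subgraph.mem_edgeSet.1 he)).ne h

end Matching

private theorem stmt11_body (N : ℕ) (G : SimpleGraph (Fin N))
    (htri : ∀ a b c : Fin N, G.Adj a b → G.Adj a c → G.Adj b c → False)
    (M : G.Subgraph) (hM : M.IsMatching)
    (hmaxv : ∀ u v : Fin N, G.Adj u v → u ∈ M.verts ∨ v ∈ M.verts)
    (m : ℕ) (hm : M.edgeSet.ncard = m) :
    G.edgeSet.ncard ≤ m * (N - m) := by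
  classical
  set Mf : Finset (Sym2 (Fin N)) := M.edgeSet.toFinset with hMf_def
  have hMfcard : Mf.card = m := by rw [hMf_def, ← hm, Set.ncard_eq_toFinset_card']
  set Sf : Finset (Fin N) := M.verts.toFinset with hSf_def
  -- |Sf| = 2m
  have hSf_le : Sf.card ≤ (Mf ×ˢ (Finset.univ : Finset Bool)).card := by
    apply Finset.card_le_card_of_injOn
      (fun v => (mEdge hM v, decide (v = (mEdge hM v).sup)))
    · intro v hv
      have hv' : v ∈ M.verts := by
        simpa only [hSf_def, Finset.mem_coe, Set.mem_toFinset] using hv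
      rw [Finset.mem_coe, Finset.mem_product]
      refine ⟨?_, Finset.mem_univ _⟩
      rw [hMf_def, Set.mem_toFinset]
      exact mEdge_mem_edgeSet hM hv'
    · intro v hv w hw h
      have hv' : v ∈ M.verts := by
        simpa only [hSf_def, Finset.mem_coe, Set.mem_toFinset] using hv
      have hw' : w ∈ M.verts := by
        simpa only [hSf_def, Finset.mem_coe, Set.mem_toFinset] using hw
      have h1 : mEdge hM v = mEdge hM w := congrArg Prod.fst h
      have h2' := congrArg Prod.snd h
      simp only [decide_eq_decide] at h2'
      rw [h1] at h2'
      have hvmem : v ∈ mEdge hM w := h1 ▸ mem_mEdge hM hv'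
      have hwmem : w ∈ mEdge hM w := mem_mEdge hM hw'
      rcases mem_inf_or_sup hvmem with hvi | hvs
      · rcases mem_inf_or_sup hwmem with hwi | hws
        · exact hvi.trans hwi.symm
        · exact (h2'.2 hws).trans hws.symm
      · rcases mem_inf_or_sup hwmem with hwi | hws
        · exact hvs.trans (h2'.1 hvs).symm
        · exact hvs.trans hws.symm
  have hSf_ge : (Mf ×ˢ (Finset.univ : Finset Bool)).card ≤ Sf.card := by
    apply Finset.card_le_card_of_injOn
      (fun p : Sym2 (Fin N) × Bool => cond p.2 p.1.sup p.1.inf)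
    · intro p hp
      have he : p.1 ∈ M.edgeSet := by
        have := (Finset.mem_product.1 hp).1
        rwa [hMf_def, Set.mem_toFinset] at this
      rw [hSf_def, Finset.mem_coe, Set.mem_toFinset]
      cases hb : p.2
      · simp only [hb, Bool.cond_false]
        exact mem_verts_of_mem_edge he (sym2_inf_mem p.1)
      · simp only [hb, Bool.cond_true]
        exact mem_verts_of_mem_edge he (sym2_sup_mem p.1)
    · rintro ⟨e₁, b₁⟩ hp ⟨e₂, b₂⟩ hq h
      have he₁ : e₁ ∈ M.edgeSet := by
        have := (Finset.mem_product.1 hp).1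
        rwa [hMf_def, Set.mem_toFinset] at this
      have he₂ : e₂ ∈ M.edgeSet := by
        have := (Finset.mem_product.1 hq).1
        rwa [hMf_def, Set.mem_toFinset] at this
      cases b₁ <;> cases b₂ <;> simp only [Bool.cond_false, Bool.cond_true] at h
      · have : e₁ = e₂ :=
          edge_unique hM he₁ he₂ (sym2_inf_mem e₁) (by rw [h]; exact sym2_inf_mem e₂)
        rw [this]
      · have heq : e₁ = e₂ :=
          edge_unique hM he₁ he₂ (sym2_inf_mem e₁) (by rw [h]; exact sym2_sup_mem e₂)
        rw [heq] at h
        exact absurd h (inf_ne_sup he₂)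
      · have heq : e₁ = e₂ :=
          edge_unique hM he₁ he₂ (sym2_sup_mem e₁) (by rw [h]; exact sym2_inf_mem e₂)
        rw [heq] at h
        exact absurd h.symm (inf_ne_sup he₂)
      · have : e₁ = e₂ :=
          edge_unique hM he₁ he₂ (sym2_sup_mem e₁) (by rw [h]; exact sym2_sup_mem e₂)
        rw [this]
  have hprodcard : (Mf ×ˢ (Finset.univ : Finset Bool)).card = 2 * m := by
    rw [Finset.card_product, hMfcard, Finset.card_univ, Fintype.card_bool]
    ring
  have hSfcard : Sf.card = 2 * m := by omega
  have hedgecard : Fintype.card ↥M.edgeSet = m := by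
    rw [← Set.toFinset_card]; exact hMfcard
  have hvertcard : Fintype.card ↥M.verts = 2 * m := by
    rw [← Set.toFinset_card]; exact hSfcard
  -- split edges
  set p : Sym2 (Fin N) → Prop := fun e => ∀ x ∈ e, x ∈ M.verts with hp_def
  set Ef : Finset (Sym2 (Fin N)) := G.edgeSet.toFinset with hEf_def
  set E1f : Finset (Sym2 (Fin N)) := Ef.filter p with hE1f_def
  set E2f : Finset (Sym2 (Fin N)) := Ef.filter (fun e => ¬ p e) with hE2f_def
  have hsplit : E1f.card + E2f.card = Ef.card := by
    rw [hE1f_def, hE2f_def]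
    exact Finset.card_filter_add_card_filter_not (s := Ef) p
  -- the graph induced on the matched vertices
  set G1 : SimpleGraph (Fin N) :=
    { Adj := fun u v => G.Adj u v ∧ u ∈ M.verts ∧ v ∈ M.verts
      symm := ⟨by rintro u v ⟨h, h1, h2⟩; exact ⟨h.symm, h2, h1⟩⟩
      loopless := ⟨by rintro v ⟨h, -⟩; exact G.loopless.irrefl v h⟩ } with hG1_def
  have hG1adj : ∀ u v, G1.Adj u v ↔ G.Adj u v ∧ u ∈ M.verts ∧ v ∈ M.verts := by
    intro u v; rw [hG1_def]
  have hE1eq : E1f = G1.edgeFinset := by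
    ext e
    induction e using Sym2.ind with
    | _ u v =>
      rw [hE1f_def, Finset.mem_filter, hEf_def, Set.mem_toFinset, mem_edgeSet,
        mem_edgeFinset, mem_edgeSet, hG1adj, hp_def]
      constructor
      · rintro ⟨ha, hall⟩
        exact ⟨ha, hall u (Sym2.mem_mk_left u v), hall v (Sym2.mem_mk_right u v)⟩
      · rintro ⟨ha, h1, h2⟩
        refine ⟨ha, fun x hx => ?_⟩
        rcases Sym2.mem_iff.1 hx with rfl | rfl
        · exact h1
        · exact h2
  have hdart : Fintype.card G1.Dart ≤ 2 * (m * m) := by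
    have hinj : Function.Injective (fun d : G1.Dart =>
        ((⟨mEdge hM d.toProd.1, mEdge_mem_edgeSet hM d.adj.2.1⟩ : ↥M.edgeSet),
         (⟨d.toProd.2, d.adj.2.2⟩ : ↥M.verts))) := by
      intro d₁ d₂ h
      have h1 : mEdge hM d₁.toProd.1 = mEdge hM d₂.toProd.1 := by
        have := congrArg (fun x : ↥M.edgeSet × ↥M.verts => (x.1 : Sym2 (Fin N))) h
        simpa using this
      have h2 : d₁.toProd.2 = d₂.toProd.2 := by
        have := congrArg (fun x : ↥M.edgeSet × ↥M.verts => (x.2 : Fin N)) h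
        simpa using this
      rcases mEdge_eq_cases hM d₁.adj.2.1 d₂.adj.2.1 h1 with he | hadj
      · exact Dart.ext _ _ (Prod.ext he h2)
      · exact ((htri _ _ _ (M.adj_sub hadj) d₁.adj.1 (h2 ▸ d₂.adj.1))).elim
    calc Fintype.card G1.Dart ≤ Fintype.card (↥M.edgeSet × ↥M.verts) :=
          Fintype.card_le_of_injective _ hinj
      _ = 2 * (m * m) := by rw [Fintype.card_prod, hedgecard, hvertcard]; ring
  have hE1 : E1f.card ≤ m * m := by
    rw [hE1eq]
    have h2 := G1.dart_card_eq_twice_card_edges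
    rw [h2] at hdart
    exact Nat.le_of_mul_le_mul_left hdart (by norm_num)
  -- E2 bound
  set P : Sym2 (Fin N) → Prop := fun e => ∃ q : Fin N × Fin N,
      e = s(q.1, q.2) ∧ G.Adj q.1 q.2 ∧ q.1 ∉ M.verts ∧ q.2 ∈ M.verts with hP_def
  set ψ : Sym2 (Fin N) → Fin N × Sym2 (Fin N) := fun e =>
      if h : P e then (h.choose.1, mEdge hM h.choose.2) else (e.inf, e) with hψ_def
  have hPE2 : ∀ e ∈ E2f, P e := by
    have key : ∀ u v : Fin N, s(u, v) ∈ E2f → P s(u, v) := by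
      intro u v he
      rw [hE2f_def, Finset.mem_filter, hEf_def, Set.mem_toFinset, mem_edgeSet] at he
      obtain ⟨ha, hnp⟩ := he
      have hne : ¬(u ∈ M.verts ∧ v ∈ M.verts) := by
        rintro ⟨h1, h2⟩
        refine hnp ?_
        rw [hp_def]
        intro x hx
        rcases Sym2.mem_iff.1 hx with rfl | rfl
        · exact h1
        · exact h2
      rcases hmaxv u v ha with hu | hv
      · have hvn : v ∉ M.verts := fun h => hne ⟨hu, h⟩
        exact ⟨(v, u), Sym2.eq_swap.symm, ha.symm, hvn, hu⟩
      · have hun : u ∉ M.verts := fun h => hne ⟨h, hv⟩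
        exact ⟨(u, v), rfl, ha, hun, hv⟩
    intro e
    induction e using Sym2.ind with
    | _ u v => exact key u v
  have hE2 : E2f.card ≤ (N - 2 * m) * m := by
    have hle : E2f.card ≤ (Sfᶜ ×ˢ Mf).card := by
      apply Finset.card_le_card_of_injOn ψ
      · intro e he
        have hP := hPE2 e he
        rw [hψ_def]
        simp only [dif_pos hP]
        obtain ⟨heq1, ha, hn, hv⟩ := hP.choose_spec
        rw [Finset.mem_coe, Finset.mem_product]
        constructor
        · rw [Finset.mem_compl, hSf_def, Set.mem_toFinset]
          exact hn
        · rw [hMf_def, Set.mem_toFinset]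
          exact mEdge_mem_edgeSet hM hv
      · intro e₁ h₁ e₂ h₂ h
        have hP1 := hPE2 e₁ h₁
        have hP2 := hPE2 e₂ h₂
        rw [hψ_def] at h
        simp only [dif_pos hP1, dif_pos hP2, Prod.mk.injEq] at h
        obtain ⟨hfst, hsnd⟩ := h
        obtain ⟨heq1, ha1, hn1, hv1⟩ := hP1.choose_spec
        obtain ⟨heq2, ha2, hn2, hv2⟩ := hP2.choose_spec
        rcases mEdge_eq_cases hM hv1 hv2 hsnd with he | hadj
        · rw [heq1, heq2, hfst, he]
        · exact ((htri _ _ _ (M.adj_sub hadj) ha1.symm (hfst ▸ ha2.symm))).elim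
    have hcompl : (Sfᶜ ×ˢ Mf).card = (N - 2 * m) * m := by
      rw [Finset.card_product, Finset.card_compl, hMfcard, hSfcard, Fintype.card_fin]
    omega
  -- finish
  have hEcount : G.edgeSet.ncard = Ef.card := by
    rw [hEf_def, Set.ncard_eq_toFinset_card']
  have h2mN : 2 * m ≤ N := by
    have h1 : Sf.card ≤ N := by
      have := Finset.card_le_univ Sf
      rwa [Fintype.card_fin] at this
    omega
  rw [hEcount, ← hsplit]
  calc E1f.card + E2f.card ≤ m * m + (N - 2 * m) * m := Nat.add_le_add hE1 hE2
    _ = (m + (N - 2 * m)) * m := by ring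
    _ = (N - m) * m := by
        congr 1
        omega
    _ = m * (N - m) := Nat.mul_comm _ _

private lemma triangle_free_of_copyCount (N : ℕ) (G : SimpleGraph (Fin N))
    (htf : _root_.copyCount G (⊤ : SimpleGraph (Fin 3)) = 0) :
    ∀ a b c : Fin N, G.Adj a b → G.Adj a c → G.Adj b c → False := by
  classical
  intro a b c hab hac hbc
  set H : G.Subgraph := G.subgraphOfAdj hab ⊔ G.subgraphOfAdj hac ⊔ G.subgraphOfAdj hbc with hH
  have hverts : H.verts = {a, b, c} := by
    rw [hH]
    simp only [Subgraph.verts_sup, subgraphOfAdj_verts]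
    ext x
    simp only [Set.mem_union, Set.mem_insert_iff, Set.mem_singleton_iff]
    tauto
  have hAdj : ∀ u v : Fin N,
      H.Adj u v ↔ s(u, v) = s(a, b) ∨ s(u, v) = s(a, c) ∨ s(u, v) = s(b, c) := by
    intro u v
    rw [hH]
    simp only [Subgraph.sup_adj, subgraphOfAdj_adj]
    tauto
  have hAdjIff : ∀ u v : ↥H.verts, H.coe.Adj u v ↔ u ≠ v := by
    intro u v
    constructor
    · intro h hne
      rw [hne] at h
      exact H.coe.irrefl h
    · intro hne
      have hu : (u : Fin N) ∈ ({a, b, c} : Set (Fin N)) := hverts ▸ u.2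
      have hv : (v : Fin N) ∈ ({a, b, c} : Set (Fin N)) := hverts ▸ v.2
      have hne' : (u : Fin N) ≠ (v : Fin N) := fun h => hne (Subtype.ext h)
      rw [Subgraph.coe_adj, hAdj]
      simp only [Set.mem_insert_iff, Set.mem_singleton_iff] at hu hv
      rcases hu with hu | hu | hu <;> rcases hv with hv | hv | hv <;>
        rw [hu, hv] <;> rw [hu, hv] at hne' <;>
        simp [Sym2.eq_iff] <;> tauto
  have hcard : Fintype.card ↥H.verts = 3 := by
    rw [← Nat.card_eq_fintype_card, Nat.card_coe_set_eq, hverts]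
    rw [Set.ncard_insert_of_notMem (by simp [hab.ne, hac.ne]),
        Set.ncard_insert_of_notMem (by simp [hbc.ne]), Set.ncard_singleton]
  have e := Fintype.equivFinOfCardEq hcard
  have hiso : Nonempty (H.coe ≃g (⊤ : SimpleGraph (Fin 3))) := by
    refine ⟨⟨e, ?_⟩⟩
    intro u v
    simp only [top_adj, ne_eq, EmbeddingLike.apply_eq_iff_eq]
    exact (hAdjIff u v).symm
  have hfin : Finite G.Subgraph :=
    Finite.of_injective (fun K : G.Subgraph => (K.verts, K.Adj))
      (fun K1 K2 h => Subgraph.ext (congrArg Prod.fst h) (congrArg Prod.snd h))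
  have hmem : H ∈ {H : G.Subgraph | Nonempty (H.coe ≃g (⊤ : SimpleGraph (Fin 3)))} := hiso
  rw [_root_.copyCount, Set.ncard_eq_zero (Set.toFinite _)] at htf
  rw [htf] at hmem
  exact hmem


/-- if `G` is a triangle-free graph on `N` vertices and `M` is a maximal
matching of `G` (every edge of `G` shares an endpoint with an edge of `M`) consisting of
`m` edges, then `G` has at most `m·(N − m)` edges. -/
theorem stmt11 (N : ℕ) (G : SimpleGraph (Fin N))
    (htf : _root_.copyCount G (⊤ : SimpleGraph (Fin 3)) = 0)
    (M : G.Subgraph) (hM : M.IsMatching)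
    (hmax : ∀ u v : Fin N, G.Adj u v → u ∈ M.support ∨ v ∈ M.support)
    (m : ℕ) (hm : M.edgeSet.ncard = m) :
    edgeCount G ≤ m * (N - m) := by
  have htri := triangle_free_of_copyCount N G htf
  have hmaxv : ∀ u v : Fin N, G.Adj u v → u ∈ M.verts ∨ v ∈ M.verts := by
    intro u v h
    rw [← hM.support_eq_verts]
    exact hmax u v h
  exact stmt11_body N G htri M hM hmaxv m hm
end
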